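/- arXiv:math/0507277 — 9 statements merged into one kernel-verified Lean document; each statement's English description precedes it below -/
import Mathlib

section
/- For a building set B on S and any C ∈ B with C ≠ S, the contraction C\B = {I ⊆ S − C : I ∈ B or C ∪ I ∈ B} is a building set on S − C. -/
open Finset

variable {V : Type*} [Fintype V] [DecidableEq V]

/-- A building set on the ground set `S`. -/
def IsBuilding (S : Finset V) (B : Finset (Finset V)) : Prop :=
  (∀ I ∈ B, I.Nonempty ∧ I ⊆ S) ∧
  (∀ I ∈ B, ∀ J ∈ B, (I ∩ J).Nonempty → I ∪ J ∈ B) ∧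
  (∀ i ∈ S, ({i} : Finset V) ∈ B)

/-- The maximal (by inclusion) elements of a family of sets. -/
def buildingMax (B : Finset (Finset V)) : Finset (Finset V) :=
  B.filter (fun I => ∀ J ∈ B, I ⊆ J → I = J)

/-- `N` is a nested set for the building `B`. -/
def IsNested (B N : Finset (Finset V)) : Prop :=
  N ⊆ B \ buildingMax B ∧
  ∀ F ⊆ N, 2 ≤ F.card → (∀ I ∈ F, ∀ J ∈ F, I ≠ J → ¬ I ⊆ J) → F.sup id ∉ B

/-- `N` is a maximal nested set for the building `B`. -/
def IsMaxNested (B N : Finset (Finset V)) : Prop :=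
  IsNested B N ∧ ∀ M, IsNested B M → N ⊆ M → N = M

/-- The restriction of `B` to `C`. -/
def restrictB (B : Finset (Finset V)) (C : Finset V) : Finset (Finset V) :=
  B.filter (· ⊆ C)

/-- The contraction of `C` from `B` (on ground set `S`). -/
def contractB (S : Finset V) (B : Finset (Finset V)) (C : Finset V) : Finset (Finset V) :=
  (S \ C).powerset.filter (fun I => I.Nonempty ∧ (I ∈ B ∨ C ∪ I ∈ B))

theorem contraction_isBuilding (S : Finset V) (B : Finset (Finset V)) (C : Finset V)
    (hB : IsBuilding S B) (hC : C ∈ B) (hCS : C ≠ S) :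
    IsBuilding (S \ C) (contractB S B C) := by
  obtain ⟨h1, h2, h3⟩ := hB
  have hCne : C.Nonempty := (h1 C hC).1
  refine ⟨?_, ?_, ?_⟩
  · intro I hI
    simp only [contractB, mem_filter, mem_powerset] at hI
    exact ⟨hI.2.1, hI.1⟩
  · intro I hI J hJ hIJ
    simp only [contractB, mem_filter, mem_powerset] at hI hJ ⊢
    refine ⟨union_subset hI.1 hJ.1, hIJ.mono (inter_subset_left.trans subset_union_left), ?_⟩
    rcases hI.2.2 with hI' | hI' <;> rcases hJ.2.2 with hJ' | hJ'
    · exact Or.inl (h2 I hI' J hJ' hIJ)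
    · right
      have := h2 I hI' (C ∪ J) hJ' (hIJ.mono (by
        intro x hx; simp only [mem_inter, mem_union] at *; exact ⟨hx.1, Or.inr hx.2⟩))
      have e : I ∪ (C ∪ J) = C ∪ (I ∪ J) := by
        ext x; simp [or_comm, or_left_comm]
      rwa [e] at this
    · right
      have := h2 (C ∪ I) hI' J hJ' (hIJ.mono (by
        intro x hx; simp only [mem_inter, mem_union] at *; exact ⟨Or.inr hx.1, hx.2⟩))
      have e : (C ∪ I) ∪ J = C ∪ (I ∪ J) := union_assoc _ _ _
      rwa [e] at this
    · right
      have := h2 (C ∪ I) hI' (C ∪ J) hJ' (hCne.mono (by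
        intro x hx; simp only [mem_inter, mem_union]; exact ⟨Or.inl hx, Or.inl hx⟩))
      have e : (C ∪ I) ∪ (C ∪ J) = C ∪ (I ∪ J) := by
        ext x; simp; tauto
      rwa [e] at this
  · intro i hi
    simp only [mem_sdiff] at hi
    simp only [contractB, mem_filter, mem_powerset]
    exact ⟨by simp [hi.1, hi.2], singleton_nonempty i, Or.inl (h3 i hi.1)⟩
end

section
/- For C ∈ B − B_max, the number of maximal elements of the building B|_C × C\B equals |B_max| + 1, hence rk(B|_C × C\B) = rk(B) − 1. -/
open Finset

variable {V : Type*} [Fintype V] [DecidableEq V]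

lemma myExistsMax {B : Finset (Finset V)} {I : Finset V} (hI : I ∈ B) :
    ∃ M ∈ buildingMax B, I ⊆ M := by
  obtain ⟨M, hM, hmax⟩ := (B.filter (I ⊆ ·)).exists_max_image Finset.card
    ⟨I, mem_filter.mpr ⟨hI, subset_rfl⟩⟩
  obtain ⟨hMB, hIM⟩ := mem_filter.mp hM
  refine ⟨M, mem_filter.mpr ⟨hMB, fun J hJ hMJ => ?_⟩, hIM⟩
  exact Finset.eq_of_subset_of_card_le hMJ
    (hmax J (mem_filter.mpr ⟨hJ, hIM.trans hMJ⟩))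


theorem components_of_link_building (S : Finset V) (B : Finset (Finset V)) (C : Finset V)
    (hS : S.Nonempty) (hB : IsBuilding S B) (hC : C ∈ B \ buildingMax B) :
    (buildingMax (restrictB B C ∪ contractB S B C)).card = (buildingMax B).card + 1 ∧
    S.card - (buildingMax (restrictB B C ∪ contractB S B C)).card =
      (S.card - (buildingMax B).card) - 1 := by
  obtain ⟨h1, h2, _⟩ := hB
  rw [mem_sdiff] at hC
  obtain ⟨hCB, hCnm⟩ := hC
  obtain ⟨M, hM, hCM⟩ := myExistsMax hCB
  have hMB := (mem_filter.mp hM).1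
  have hMmax := (mem_filter.mp hM).2
  have hCne : C.Nonempty := (h1 C hCB).1
  have hCneM : C ≠ M := fun h => hCnm (h ▸ hM)
  have hMCne : (M \ C).Nonempty := by
    rw [sdiff_nonempty]; intro h; exact hCneM (subset_antisymm hCM h)
  have hMS : M ⊆ S := (h1 M hMB).2
  have hCMeq : C ∪ (M \ C) = M := union_sdiff_of_subset hCM
  -- characterize membership in B'
  have memB' : ∀ I, I ∈ restrictB B C ∪ contractB S B C ↔
      (I ∈ B ∧ I ⊆ C) ∨ (I ⊆ S \ C ∧ I.Nonempty ∧ (I ∈ B ∨ C ∪ I ∈ B)) := by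
    intro I
    simp [restrictB, contractB, mem_union, mem_filter, mem_powerset, and_assoc]
  -- maximal elements of B are pairwise disjoint
  have hdisj : ∀ M' ∈ buildingMax B, M' ≠ M → Disjoint M' M := by
    intro M' hM' hne
    rw [disjoint_iff_inter_eq_empty]
    by_contra h
    have hu := h2 M' (mem_filter.mp hM').1 M hMB (nonempty_iff_ne_empty.mpr h)
    have e1 := (mem_filter.mp hM').2 _ hu subset_union_left
    have e2 := hMmax _ hu subset_union_right
    exact hne (e1.trans e2.symm)
  -- candidate memberships in B'
  have hCmem : C ∈ restrictB B C ∪ contractB S B C :=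
    (memB' C).mpr (Or.inl ⟨hCB, subset_rfl⟩)
  have hMCmem : M \ C ∈ restrictB B C ∪ contractB S B C := by
    refine (memB' _).mpr (Or.inr ⟨sdiff_subset_sdiff hMS subset_rfl, hMCne, Or.inr ?_⟩)
    rw [hCMeq]; exact hMB
  have hM'mem : ∀ M' ∈ (buildingMax B).erase M,
      M' ∈ restrictB B C ∪ contractB S B C := by
    intro M' hM'
    obtain ⟨hne, hM'⟩ := mem_erase.mp hM'
    have hM'B := (mem_filter.mp hM').1
    refine (memB' _).mpr (Or.inr ⟨subset_sdiff.mpr ⟨(h1 M' hM'B).2, ?_⟩,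
      (h1 M' hM'B).1, Or.inl hM'B⟩)
    exact Finset.disjoint_of_subset_right hCM (hdisj M' hM' hne)
  have key : buildingMax (restrictB B C ∪ contractB S B C)
      = insert C (insert (M \ C) ((buildingMax B).erase M)) := by
    ext I
    constructor
    · intro hI
      obtain ⟨hIB', hImax⟩ := mem_filter.mp hI
      rcases (memB' I).mp hIB' with ⟨hIB, hIC⟩ | ⟨hIS, hIne, hIB⟩
      · exact mem_insert.mpr (Or.inl (hImax C hCmem hIC))
      · have hIdisC : Disjoint I C := (subset_sdiff.mp hIS).2
        rcases hIB with hIB | hICB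
        · obtain ⟨M', hM', hIM'⟩ := myExistsMax hIB
          by_cases hMM : M' = M
          · rw [hMM] at hIM'
            refine mem_insert.mpr (Or.inr (mem_insert.mpr (Or.inl
              (hImax (M \ C) hMCmem (subset_sdiff.mpr ⟨hIM', hIdisC⟩)))))
          · have hMe : M' ∈ (buildingMax B).erase M := mem_erase.mpr ⟨hMM, hM'⟩
            have := hImax M' (hM'mem M' hMe) hIM'
            exact mem_insert.mpr (Or.inr (mem_insert.mpr (Or.inr (this ▸ hMe))))
        · obtain ⟨M'', hM'', hsub⟩ := myExistsMax hICB
          have hMeq : M'' = M := by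
            by_contra hne
            have hd := hdisj M'' hM'' hne
            obtain ⟨x, hx⟩ := hCne
            exact (Finset.disjoint_left.mp hd (hsub (mem_union_left _ hx))) (hCM hx)
          rw [hMeq] at hsub
          refine mem_insert.mpr (Or.inr (mem_insert.mpr (Or.inl
            (hImax (M \ C) hMCmem (subset_sdiff.mpr
              ⟨(subset_union_right).trans hsub, hIdisC⟩)))))
    · intro hI
      rcases mem_insert.mp hI with rfl | hI
      · refine mem_filter.mpr ⟨hCmem, fun J hJ hCJ => ?_⟩
        rcases (memB' J).mp hJ with ⟨_, hJC⟩ | ⟨hJS, _, _⟩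
        · exact subset_antisymm hCJ hJC
        · obtain ⟨x, hx⟩ := hCne
          exact absurd (hCJ hx) (fun h => (Finset.disjoint_left.mp
            (subset_sdiff.mp hJS).2 h) hx)
      rcases mem_insert.mp hI with rfl | hI
      · refine mem_filter.mpr ⟨hMCmem, fun J hJ hMCJ => ?_⟩
        rcases (memB' J).mp hJ with ⟨_, hJC⟩ | ⟨hJS, _, hJB⟩
        · obtain ⟨x, hx⟩ := hMCne
          exact absurd (hJC (hMCJ hx)) (mem_sdiff.mp hx).2
        · have hJdisC : Disjoint J C := (subset_sdiff.mp hJS).2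
          have hJM : J ⊆ M := by
            rcases hJB with hJB | hCJB
            · have hu := h2 J hJB M hMB ⟨hMCne.choose,
                mem_inter.mpr ⟨hMCJ hMCne.choose_spec, (mem_sdiff.mp hMCne.choose_spec).1⟩⟩
              have := hMmax _ hu subset_union_right
              rw [this]; exact subset_union_left
            · have hMCJ' : M ⊆ C ∪ J := by
                rw [← hCMeq]; exact union_subset_union subset_rfl hMCJ
              have := hMmax _ hCJB hMCJ'
              rw [this]; exact subset_union_right
          exact subset_antisymm hMCJ (subset_sdiff.mpr ⟨hJM, hJdisC⟩)
      · obtain ⟨hne, hM'⟩ := mem_erase.mp hI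
        have hM'B := (mem_filter.mp hM').1
        have hM'max := (mem_filter.mp hM').2
        have hM'disC : Disjoint I C :=
          Finset.disjoint_of_subset_right hCM (hdisj I hM' hne)
        have hM'ne : I.Nonempty := (h1 I hM'B).1
        refine mem_filter.mpr ⟨hM'mem I hI, fun J hJ hIJ => ?_⟩
        rcases (memB' J).mp hJ with ⟨_, hJC⟩ | ⟨hJS, _, hJB⟩
        · obtain ⟨x, hx⟩ := hM'ne
          exact absurd (hJC (hIJ hx)) (fun h => (Finset.disjoint_left.mp hM'disC hx) h)
        · rcases hJB with hJB | hCJB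
          · exact hM'max J hJB hIJ
          · have := hM'max _ hCJB (hIJ.trans subset_union_right)
            obtain ⟨x, hx⟩ := hCne
            exact absurd (this ▸ (mem_union_left J hx) : x ∈ I)
              (fun h => (Finset.disjoint_left.mp hM'disC h) hx)
  -- counting
  have hCnotin : C ∉ insert (M \ C) ((buildingMax B).erase M) := by
    intro h
    rcases mem_insert.mp h with h | h
    · obtain ⟨x, hx⟩ := hCne
      exact (mem_sdiff.mp (h ▸ hx)).2 hx
    · exact hCnm (mem_erase.mp h).2
  have hMCnotin : M \ C ∉ (buildingMax B).erase M := by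
    intro h
    obtain ⟨hne, h⟩ := mem_erase.mp h
    have := hdisj _ h hne
    obtain ⟨x, hx⟩ := hMCne
    exact (Finset.disjoint_left.mp this hx) (mem_sdiff.mp hx).1
  have hMpos : 1 ≤ (buildingMax B).card := Finset.card_pos.mpr ⟨M, hM⟩
  have hc1 : (buildingMax (restrictB B C ∪ contractB S B C)).card
      = (buildingMax B).card + 1 := by
    rw [key, card_insert_of_notMem hCnotin, card_insert_of_notMem hMCnotin,
      card_erase_of_mem hM]
    omega
  exact ⟨hc1, by omega⟩
end

section
/- (Purity) The nested complex N(B) is pure of dimension rk(B) − 1: every maximal nested set has cardinality rk(B) = |S| − |B_max|. -/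
open Finset

variable {V : Type*} [Fintype V] [DecidableEq V]

theorem nested_complex_pure (S : Finset V) (B : Finset (Finset V))
    (hB : IsBuilding S B) (N : Finset (Finset V)) (hN : IsMaxNested B N) :
    N.card = S.card - (buildingMax B).card := by
  classical
  obtain ⟨hB1, hB2, hB3⟩ := hB
  obtain ⟨⟨hNsub, hNanti⟩, hNmax⟩ := hN
  set M := buildingMax B with hMdef
  set N' : Finset (Finset V) := N ∪ M with hN'def
  have hMB : M ⊆ B := filter_subset _ _
  have hMmax : ∀ I ∈ M, ∀ J ∈ B, I ⊆ J → I = J := fun I hI => (mem_filter.mp hI).2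
  have hNB : ∀ I ∈ N, I ∈ B := fun I hI => (mem_sdiff.mp (hNsub hI)).1
  have hN'B : ∀ I ∈ N', I ∈ B := by
    intro I hI
    rcases mem_union.mp hI with h | h
    · exact hNB I h
    · exact hMB h
  -- every element of B is contained in a maximal element
  have hmaxext : ∀ I ∈ B, ∃ J ∈ M, I ⊆ J := by
    intro I hI
    obtain ⟨J, hJ, hJmax⟩ :=
      (B.filter (fun K => I ⊆ K)).exists_maximal ⟨I, mem_filter.mpr ⟨hI, subset_rfl⟩⟩
    obtain ⟨hJB, hIJ⟩ := mem_filter.mp hJ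
    refine ⟨J, mem_filter.mpr ⟨hJB, ?_⟩, hIJ⟩
    intro K hK hJK
    by_contra hne
    exact hne (Finset.Subset.antisymm hJK (hJmax (mem_filter.mpr ⟨hK, hIJ.trans hJK⟩) hJK))
  -- pair lemma
  have hpair : ∀ J ∈ N, ∀ K ∈ N, ¬ J ⊆ K → ¬ K ⊆ J → J ∪ K ∉ B := by
    intro J hJ K hK hJK hKJ hU
    have hne : J ≠ K := fun h => hJK (h ▸ subset_rfl)
    have hsub : ({J, K} : Finset (Finset V)) ⊆ N := by
      intro X hX
      rcases mem_insert.mp hX with h | h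
      · exact h ▸ hJ
      · exact (mem_singleton.mp h) ▸ hK
    have h2 : 2 ≤ ({J, K} : Finset (Finset V)).card := by
      rw [card_pair hne]
    have hanti : ∀ X ∈ ({J, K} : Finset (Finset V)), ∀ Y ∈ ({J, K} : Finset (Finset V)),
        X ≠ Y → ¬ X ⊆ Y := by
      intro X hX Y hY hXY
      simp only [mem_insert, mem_singleton] at hX hY
      rcases hX with rfl | rfl <;> rcases hY with rfl | rfl
      · exact absurd rfl hXY
      · exact hJK
      · exact hKJ
      · exact absurd rfl hXY
    have := hNanti _ hsub h2 hanti
    apply this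
    rwa [sup_insert, sup_singleton, id, id, sup_eq_union]
  -- laminarity of N'
  have hlam : ∀ J ∈ N', ∀ K ∈ N', J ⊆ K ∨ K ⊆ J ∨ J ∩ K = ∅ := by
    intro J hJ K hK
    by_cases hint : (J ∩ K).Nonempty
    · have hU : J ∪ K ∈ B := hB2 J (hN'B J hJ) K (hN'B K hK) hint
      rcases mem_union.mp hJ with hJN | hJM
      · rcases mem_union.mp hK with hKN | hKM
        · by_contra hc
          push_neg at hc
          exact hpair J hJN K hKN hc.1 hc.2.1 hU
        · left
          have h := hMmax K hKM (J ∪ K) hU subset_union_right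
          rw [h]
          exact subset_union_left
      · right; left
        have h := hMmax J hJM (J ∪ K) hU subset_union_left
        rw [h]
        exact subset_union_right
    · right; right; exact not_nonempty_iff_eq_empty.mp hint
  -- the "new element" function
  set d : Finset V → Finset V :=
    fun I => I.filter (fun i => ∀ J ∈ N', J ⊂ I → i ∉ J) with hd
  -- d I has at most one element
  have hdle : ∀ I ∈ N', ∀ x ∈ d I, ∀ y ∈ d I, x = y := by
    intro I hI x hx y hy
    by_contra hxy
    obtain ⟨hxI, hxd⟩ := mem_filter.mp hx
    obtain ⟨hyI, hyd⟩ := mem_filter.mp hy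
    have hIB : I ∈ B := hN'B I hI
    have hIS : I ⊆ S := (hB1 I hIB).2
    have hxQ : ({x} : Finset V) ∈ B.filter (fun A => x ∈ A ∧ A ⊆ I ∧ y ∉ A) := by
      refine mem_filter.mpr ⟨hB3 x (hIS hxI), mem_singleton_self x,
        singleton_subset_iff.mpr hxI, ?_⟩
      rw [mem_singleton]
      exact fun h => hxy h.symm
    obtain ⟨A, hA, hAmax⟩ : ∃ m ∈ B.filter (fun A => x ∈ A ∧ A ⊆ I ∧ y ∉ A), ∀ z ∈ B.filter (fun A => x ∈ A ∧ A ⊆ I ∧ y ∉ A), ¬ m < z := by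
      obtain ⟨m, hm⟩ := Finset.exists_maximal ⟨{x}, hxQ⟩
      exact ⟨m, hm.1, fun z hz hlt => lt_irrefl _ (hlt.trans_le (hm.2 hz hlt.le))⟩
    obtain ⟨hAB, hxA, hAI, hyA⟩ := mem_filter.mp hA
    have hAmax' : ∀ A' ∈ B, x ∈ A' → A' ⊆ I → y ∉ A' → A ⊆ A' → A = A' := by
      intro A' h1 h2 h3 h4 h5
      by_contra hne
      exact hAmax A' (mem_filter.mpr ⟨h1, h2, h3, h4⟩) (lt_of_le_of_ne h5 hne)
    have hAneI : A ≠ I := fun h => hyA (h ▸ hyI)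
    have hAssI : A ⊂ I := ssubset_of_subset_of_ne hAI hAneI
    have hnested : IsNested B (insert A N) := by
      by_cases hAN : A ∈ N
      · rw [insert_eq_self.mpr hAN]
        exact ⟨hNsub, hNanti⟩
      constructor
      · intro X hX
        rcases mem_insert.mp hX with h | h
        · rw [h]
          exact mem_sdiff.mpr ⟨hAB, fun hAM => hAneI (hMmax A hAM I hIB hAI)⟩
        · exact hNsub h
      · intro F hF h2 hanti hUB
        by_cases hAF : A ∈ F
        swap
        · refine hNanti F ?_ h2 hanti hUB
          intro X hX
          rcases mem_insert.mp (hF hX) with h | h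
          · exact absurd (h ▸ hX) hAF
          · exact h
        set F₀ := F.erase A with hF₀def
        have hF₀N : F₀ ⊆ N := by
          intro X hX
          rcases mem_insert.mp (hF (mem_of_mem_erase hX)) with h | h
          · exact absurd h (ne_of_mem_erase hX)
          · exact h
        have hF₀ne : F₀.Nonempty := by
          obtain ⟨a, ha, b, hb, hab⟩ := one_lt_card.mp h2
          by_cases haA : a = A
          · exact ⟨b, mem_erase.mpr ⟨fun h => hab (haA.trans h.symm), hb⟩⟩
          · exact ⟨a, mem_erase.mpr ⟨haA, ha⟩⟩
        have hFins : F = insert A F₀ := (insert_erase hAF).symm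
        have hdisjA : ∀ J ∈ F₀, J ∩ A = ∅ := by
          intro J hJ
          have hJF : J ∈ F := mem_of_mem_erase hJ
          have hJA : J ≠ A := ne_of_mem_erase hJ
          have hnJA : ¬ J ⊆ A := hanti J hJF A hAF hJA
          have hnAJ : ¬ A ⊆ J := hanti A hAF J hJF hJA.symm
          have hJN' : J ∈ N' := mem_union_left _ (hF₀N hJ)
          rcases hlam J hJN' I hI with hJI | hIJ | hJIdisj
          · have hJneI : J ≠ I := fun h => hnAJ (h ▸ hAI)
            have hyJ : y ∉ J := hyd J hJN' (ssubset_of_subset_of_ne hJI hJneI)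
            by_contra hc
            have hJAint : (J ∩ A).Nonempty := nonempty_iff_ne_empty.mpr hc
            have hJAB : J ∪ A ∈ B := hB2 J (hNB J (hF₀N hJ)) A hAB hJAint
            have heq : A = J ∪ A := hAmax' (J ∪ A) hJAB (mem_union_right _ hxA)
              (union_subset hJI hAI)
              (fun h => (mem_union.mp h).elim hyJ hyA) subset_union_right
            apply hnJA
            rw [heq]
            exact subset_union_left
          · exact absurd (hAI.trans hIJ) hnAJ
          · apply eq_empty_of_forall_notMem
            intro z hz
            have hz' : z ∈ J ∩ I :=
              mem_inter.mpr ⟨(mem_inter.mp hz).1, hAI (mem_inter.mp hz).2⟩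
            rw [hJIdisj] at hz'
            exact notMem_empty z hz'
        have hxU : x ∈ F.sup id := mem_sup.mpr ⟨A, hAF, hxA⟩
        set F₂ := F₀.filter (fun J => ¬ J ⊆ I) with hF₂def
        by_cases hF₂e : F₂ = ∅
        · -- everything inside I : contradict maximality of A
          have hallI : ∀ J ∈ F₀, J ⊆ I := by
            intro J hJ
            by_contra hc
            exact (eq_empty_iff_forall_notMem.mp hF₂e J) (mem_filter.mpr ⟨hJ, hc⟩)
          have hUI : F.sup id ⊆ I := by
            intro z hz
            obtain ⟨J, hJ, hzJ⟩ := mem_sup.mp hz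
            rw [hFins] at hJ
            rcases mem_insert.mp hJ with h | h
            · exact hAI (h ▸ hzJ)
            · exact hallI J h hzJ
          have hyU : y ∉ F.sup id := by
            intro hy'
            obtain ⟨J, hJF, hyJ⟩ := mem_sup.mp hy'
            rw [hFins] at hJF
            rcases mem_insert.mp hJF with h | hJ0
            · exact hyA (h ▸ hyJ)
            · have hJN' : J ∈ N' := mem_union_left _ (hF₀N hJ0)
              have hnAJ : ¬ A ⊆ J :=
                hanti A hAF J (mem_of_mem_erase hJ0) (ne_of_mem_erase hJ0).symm
              have hJneI : J ≠ I := fun h => hnAJ (h ▸ hAI)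
              exact hyd J hJN' (ssubset_of_subset_of_ne (hallI J hJ0) hJneI) hyJ
          have hAeq : A = F.sup id := hAmax' _ hUB hxU hUI hyU (fun z hz => mem_sup.mpr ⟨A, hAF, hz⟩)
          obtain ⟨J, hJ0⟩ := hF₀ne
          obtain ⟨z, hz⟩ := (hB1 J (hNB J (hF₀N hJ0))).1
          have hzU : z ∈ F.sup id := mem_sup.mpr ⟨J, mem_of_mem_erase hJ0, hz⟩
          rw [← hAeq] at hzU
          have hzJA : z ∈ J ∩ A := mem_inter.mpr ⟨hz, hzU⟩
          rw [hdisjA J hJ0] at hzJA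
          exact notMem_empty z hzJA
        · -- some member outside I
          obtain ⟨K, hK2⟩ := nonempty_iff_ne_empty.mpr hF₂e
          have hW : F.sup id ∪ I ∈ B :=
            hB2 _ hUB I hIB ⟨x, mem_inter.mpr ⟨hxU, hxI⟩⟩
          rcases mem_union.mp hI with hIN | hIM
          · -- I ∈ N : F' = insert I F₂ contradicts nestedness of N
            have hF₂disj : ∀ J ∈ F₂, J ∩ I = ∅ := by
              intro J hJ
              obtain ⟨hJ0, hnJI⟩ := mem_filter.mp hJ
              have hJN' : J ∈ N' := mem_union_left _ (hF₀N hJ0)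
              rcases hlam J hJN' I hI with h | h | h
              · exact absurd h hnJI
              · exact absurd (hAI.trans h)
                  (hanti A hAF J (mem_of_mem_erase hJ0) (ne_of_mem_erase hJ0).symm)
              · exact h
            have hInotF₂ : I ∉ F₂ := fun h => (mem_filter.mp h).2 subset_rfl
            have hF'N : insert I F₂ ⊆ N := by
              intro X hX
              rcases mem_insert.mp hX with h | h
              · exact h ▸ hIN
              · exact hF₀N (mem_filter.mp h).1
            have hcard' : 2 ≤ (insert I F₂).card := by
              rw [card_insert_of_notMem hInotF₂]
              have h1 : 1 ≤ F₂.card := card_pos.mpr ⟨K, hK2⟩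
              omega
            have hanti' : ∀ X ∈ insert I F₂, ∀ Y ∈ insert I F₂, X ≠ Y → ¬ X ⊆ Y := by
              intro X hX Y hY hXY hsub
              rcases mem_insert.mp hX with hXI | hX'
              · rcases mem_insert.mp hY with hYI | hY'
                · exact hXY (hXI.trans hYI.symm)
                · obtain ⟨z, hz⟩ := (hB1 I hIB).1
                  have hzY : z ∈ Y ∩ I := mem_inter.mpr ⟨hsub (hXI.symm ▸ hz), hz⟩
                  rw [hF₂disj Y hY'] at hzY
                  exact notMem_empty z hzY
              · rcases mem_insert.mp hY with hYI | hY'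
                · exact (mem_filter.mp hX').2 (hYI ▸ hsub)
                · exact hanti X (mem_of_mem_erase (mem_filter.mp hX').1)
                    Y (mem_of_mem_erase (mem_filter.mp hY').1) hXY hsub
            have hsupW : (insert I F₂).sup id = F.sup id ∪ I := by
              ext z
              simp only [mem_sup, mem_union, mem_insert, id_eq]
              constructor
              · rintro ⟨J, hJ | hJ, hz⟩
                · subst hJ; right; exact hz
                · left
                  exact ⟨J, mem_of_mem_erase (mem_filter.mp hJ).1, hz⟩
              · rintro (hz | hz)
                · obtain ⟨J, hJ, hzJ⟩ := hz
                  rw [hFins] at hJ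
                  rcases mem_insert.mp hJ with h | hJ0
                  · exact ⟨I, Or.inl rfl, hAI (h ▸ hzJ)⟩
                  · by_cases hJI : J ⊆ I
                    · exact ⟨I, Or.inl rfl, hJI hzJ⟩
                    · exact ⟨J, Or.inr (mem_filter.mpr ⟨hJ0, hJI⟩), hzJ⟩
                · exact ⟨I, Or.inl rfl, hz⟩
            exact hNanti _ hF'N hcard' hanti' (by rw [hsupW]; exact hW)
          · -- I ∈ M : contradicts maximality of I
            have hIW : I = F.sup id ∪ I := hMmax I hIM _ hW subset_union_right
            obtain ⟨hK0, hnKI⟩ := mem_filter.mp hK2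
            apply hnKI
            intro z hz
            have hzU : z ∈ F.sup id ∪ I :=
              mem_union_left _ (mem_sup.mpr ⟨K, mem_of_mem_erase hK0, hz⟩)
            rwa [← hIW] at hzU
    have hNeq := hNmax _ hnested (subset_insert _ _)
    have hAN : A ∈ N := by rw [hNeq]; exact mem_insert_self A N
    exact hxd A (mem_union_left _ hAN) hAssI hxA
  -- d I is nonempty
  have hdne : ∀ I ∈ N', (d I).Nonempty := by
    intro I hI
    by_contra hempty
    rw [not_nonempty_iff_eq_empty] at hempty
    have hIB := hN'B I hI
    have hcov : ∀ i ∈ I, ∃ J ∈ N', J ⊂ I ∧ i ∈ J := by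
      intro i hi
      by_contra hc
      push_neg at hc
      have hmem : i ∈ d I := mem_filter.mpr ⟨hi, hc⟩
      rw [hempty] at hmem
      exact notMem_empty i hmem
    set P := N'.filter (fun J => J ⊂ I) with hP
    set Fc := P.filter (fun K => ∀ K' ∈ P, K ⊆ K' → K = K') with hFc
    have hFcmem : ∀ i ∈ I, ∃ K ∈ Fc, i ∈ K := by
      intro i hi
      obtain ⟨J, hJ, hJI, hiJ⟩ := hcov i hi
      obtain ⟨K, hK, hKmax⟩ := (P.filter (fun K => J ⊆ K)).exists_maximal
        ⟨J, mem_filter.mpr ⟨mem_filter.mpr ⟨hJ, hJI⟩, subset_rfl⟩⟩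
      obtain ⟨hKP, hJK⟩ := mem_filter.mp hK
      refine ⟨K, mem_filter.mpr ⟨hKP, ?_⟩, hJK hiJ⟩
      intro K' hK' hKK'
      by_contra hne
      exact hne (Finset.Subset.antisymm hKK' (hKmax (mem_filter.mpr ⟨hK', hJK.trans hKK'⟩) hKK'))
    have hFcN : Fc ⊆ N := by
      intro K hK
      obtain ⟨hKP, _⟩ := mem_filter.mp hK
      obtain ⟨hKN', hKI⟩ := mem_filter.mp hKP
      rcases mem_union.mp hKN' with h | h
      · exact h
      · exact absurd (hMmax K h I hIB hKI.subset) hKI.ne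
    have hsup : Fc.sup id = I := by
      apply Finset.Subset.antisymm
      · intro z hz
        obtain ⟨K, hK, hzK⟩ := mem_sup.mp hz
        exact (mem_filter.mp (mem_filter.mp hK).1).2.subset hzK
      · intro i hi
        obtain ⟨K, hK, hiK⟩ := hFcmem i hi
        exact mem_sup.mpr ⟨K, hK, hiK⟩
    have hantiF : ∀ X ∈ Fc, ∀ Y ∈ Fc, X ≠ Y → ¬ X ⊆ Y := by
      intro X hX Y hY hXY hsub
      exact hXY ((mem_filter.mp hX).2 Y (mem_filter.mp hY).1 hsub)
    have hcard : 2 ≤ Fc.card := by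
      obtain ⟨i, hi⟩ := (hB1 I hIB).1
      obtain ⟨K, hK, hiK⟩ := hFcmem i hi
      rcases eq_or_lt_of_le (show 1 ≤ Fc.card from card_pos.mpr ⟨K, hK⟩) with h | h
      · exfalso
        obtain ⟨K', hK'⟩ := card_eq_one.mp h.symm
        have hsup' : Fc.sup id = K' := by rw [hK']; simp
        rw [hsup] at hsup'
        have hKP := (mem_filter.mp hK).1
        have hKss := (mem_filter.mp hKP).2
        rw [hK', mem_singleton] at hK
        rw [hK, hsup'] at hKss
        exact hKss.ne rfl
      · exact h
    exact hNanti Fc hFcN hcard hantiF (by rw [hsup]; exact hIB)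
  have hdcard : ∀ I ∈ N', (d I).card = 1 := by
    intro I hI
    obtain ⟨i, hi⟩ := hdne I hI
    rw [card_eq_one]
    exact ⟨i, eq_singleton_iff_unique_mem.mpr ⟨hi, fun j hj => hdle I hI j hj i hi⟩⟩
  have hcover : S = N'.biUnion d := by
    apply Finset.Subset.antisymm
    · intro i hi
      have hsi : ({i} : Finset V) ∈ B := hB3 i hi
      obtain ⟨J, hJM, hiJ⟩ := hmaxext _ hsi
      have hT : (N'.filter (fun K => i ∈ K)).Nonempty :=
        ⟨J, mem_filter.mpr ⟨mem_union_right _ hJM, hiJ (mem_singleton_self i)⟩⟩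
      obtain ⟨I, hI, hImin⟩ : ∃ m ∈ N'.filter (fun K => i ∈ K), ∀ z ∈ N'.filter (fun K => i ∈ K), ¬ z < m := by
        obtain ⟨m, hm⟩ := Finset.exists_minimal hT
        exact ⟨m, hm.1, fun z hz hlt => lt_irrefl _ (hlt.trans_le (hm.2 hz hlt.le))⟩
      obtain ⟨hIN', hiI⟩ := mem_filter.mp hI
      refine mem_biUnion.mpr ⟨I, hIN', mem_filter.mpr ⟨hiI, ?_⟩⟩
      intro J' hJ' hJ'I hiJ'
      exact hImin J' (mem_filter.mpr ⟨hJ', hiJ'⟩) hJ'I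
    · intro i hi
      obtain ⟨I, hI, hiI⟩ := mem_biUnion.mp hi
      exact (hB1 I (hN'B I hI)).2 (filter_subset _ _ hiI)
  have hpairwise : ∀ I ∈ N', ∀ J ∈ N', I ≠ J → Disjoint (d I) (d J) := by
    intro I hI J hJ hIJ
    rw [disjoint_left]
    intro a haI haJ
    obtain ⟨haI1, haI2⟩ := mem_filter.mp haI
    obtain ⟨haJ1, haJ2⟩ := mem_filter.mp haJ
    rcases hlam I hI J hJ with h | h | h
    · exact haJ2 I hI (ssubset_of_subset_of_ne h hIJ) haI1
    · exact haI2 J hJ (ssubset_of_subset_of_ne h hIJ.symm) haJ1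
    · have ha : a ∈ I ∩ J := mem_inter.mpr ⟨haI1, haJ1⟩
      rw [h] at ha
      exact notMem_empty a ha
  have hcount : S.card = N'.card := by
    rw [hcover, card_biUnion hpairwise, Finset.sum_congr rfl hdcard]
    simp
  have hdisjNM : Disjoint N M := by
    rw [disjoint_left]
    intro I hI hIM
    exact (mem_sdiff.mp (hNsub hI)).2 hIM
  have hsum : N'.card = N.card + M.card := card_union_of_disjoint hdisjNM
  omega
end

section
/- (Exchange property) For every maximal nested set N of a building set B and every I ∈ N, there exists exactly one maximal nested set N' with N ∩ N' = N − {I}. -/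
open Finset

variable {V : Type*} [Fintype V] [DecidableEq V]

namespace NX

def nodes (B N : Finset (Finset V)) : Finset (Finset V) := N ∪ buildingMax B

def priv (B N : Finset (Finset V)) (J : Finset V) : Finset V :=
  J.filter (fun x => ∀ K ∈ nodes B N, K ⊂ J → x ∉ K)

variable {S : Finset V} {B N : Finset (Finset V)}

lemma mem_bmax {M : Finset V} : M ∈ buildingMax B ↔ M ∈ B ∧ ∀ J ∈ B, M ⊆ J → M = J := by
  simp [buildingMax]

lemma bmax_subset : buildingMax B ⊆ B := filter_subset _ _

lemma nested_subset_B (hN : IsNested B N) : N ⊆ B := fun K hK => (mem_sdiff.1 (hN.1 hK)).1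

lemma nested_not_bmax (hN : IsNested B N) {K : Finset V} (hK : K ∈ N) : K ∉ buildingMax B :=
  (mem_sdiff.1 (hN.1 hK)).2

lemma nodes_subset_B (hN : IsNested B N) : nodes B N ⊆ B := by
  intro K hK
  rcases mem_union.1 hK with h | h
  · exact nested_subset_B hN h
  · exact bmax_subset h

lemma B_nonempty (hB : IsBuilding S B) {K : Finset V} (hK : K ∈ B) : K.Nonempty :=
  (hB.1 K hK).1

lemma B_union (hB : IsBuilding S B) {K L : Finset V} (hK : K ∈ B) (hL : L ∈ B)
    {x : V} (hxK : x ∈ K) (hxL : x ∈ L) : K ∪ L ∈ B :=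
  hB.2.1 K hK L hL ⟨x, mem_inter.2 ⟨hxK, hxL⟩⟩

/-- existence of a maximal element of `B` above `X` inside `C`. -/
lemma exists_max_above (hX : X ∈ B) (hXC : X ⊆ C) :
    ∃ Y, Y ∈ B ∧ X ⊆ Y ∧ Y ⊆ C ∧ ∀ Z ∈ B, Y ⊆ Z → Z ⊆ C → Z = Y := by
  obtain ⟨Y, hY, hmax⟩ : ∃ Y ∈ B.filter (fun Y => X ⊆ Y ∧ Y ⊆ C), ∀ x ∈ B.filter (fun Y => X ⊆ Y ∧ Y ⊆ C), ¬ Y < x :=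
    (by obtain ⟨Y, hY⟩ := Finset.exists_maximal (s := B.filter (fun Y => X ⊆ Y ∧ Y ⊆ C)) ⟨X, mem_filter.2 ⟨hX, subset_rfl, hXC⟩⟩; exact ⟨Y, hY.1, fun x hx hlt => lt_irrefl _ (hlt.trans_le (hY.2 hx hlt.le))⟩)
  rw [mem_filter] at hY
  refine ⟨Y, hY.1, hY.2.1, hY.2.2, fun Z hZ hYZ hZC => ?_⟩
  have := hmax Z (mem_filter.2 ⟨hZ, hY.2.1.trans hYZ, hZC⟩)
  rcases eq_or_lt_of_le (le_iff_subset.2 hYZ) with h | h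
  · exact h.symm
  · exact absurd h this

lemma exists_bmax_above (hB : IsBuilding S B) {X : Finset V} (hX : X ∈ B) :
    ∃ M ∈ buildingMax B, X ⊆ M := by
  obtain ⟨Y, hY, hXY, _, hmax⟩ := exists_max_above (C := S) hX (hB.1 X hX).2
  exact ⟨Y, mem_bmax.2 ⟨hY, fun J hJ hYJ => (hmax J hJ hYJ (hB.1 J hJ).2).symm⟩, hXY⟩

lemma bmax_eq (hB : IsBuilding S B) {M₁ M₂ : Finset V} (h1 : M₁ ∈ buildingMax B)
    (h2 : M₂ ∈ buildingMax B) {x : V} (hx1 : x ∈ M₁) (hx2 : x ∈ M₂) : M₁ = M₂ := by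
  have hu := B_union hB (bmax_subset h1) (bmax_subset h2) hx1 hx2
  have e1 := (mem_bmax.1 h1).2 _ hu subset_union_left
  have e2 := (mem_bmax.1 h2).2 _ hu subset_union_right
  exact e1.trans e2.symm

lemma IsNested.mono (hN : IsNested B N) {M : Finset (Finset V)} (hMN : M ⊆ N) :
    IsNested B M :=
  ⟨hMN.trans hN.1, fun F hF => hN.2 F (hF.trans hMN)⟩

/-- nested families are laminar -/
lemma nested_laminar (hB : IsBuilding S B) (hN : IsNested B N) {K L : Finset V}
    (hK : K ∈ N) (hL : L ∈ N) {x : V} (hxK : x ∈ K) (hxL : x ∈ L) : K ⊆ L ∨ L ⊆ K := by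
  by_contra h
  push_neg at h
  have hne : K ≠ L := fun e => h.1 (e ▸ subset_rfl)
  have hcard : 2 ≤ ({K, L} : Finset (Finset V)).card := by
    rw [card_insert_of_notMem (by simpa using hne), card_singleton]
  have hanti : ∀ I ∈ ({K, L} : Finset (Finset V)), ∀ J ∈ ({K, L} : Finset (Finset V)),
      I ≠ J → ¬ I ⊆ J := by
    intro I hI J hJ hIJ
    simp only [mem_insert, mem_singleton] at hI hJ
    rcases hI with rfl | rfl <;> rcases hJ with rfl | rfl <;> simp_all
  have := hN.2 {K, L} (by intro x hx; simp only [mem_insert, mem_singleton] at hx; rcases hx with rfl | rfl <;> assumption) hcard hanti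
  apply this
  have : ({K, L} : Finset (Finset V)).sup id = K ∪ L := by
    rw [sup_insert, sup_singleton]; rfl
  rw [this]
  exact B_union hB (nested_subset_B hN hK) (nested_subset_B hN hL) hxK hxL

lemma nodes_laminar (hB : IsBuilding S B) (hN : IsNested B N) {K L : Finset V}
    (hK : K ∈ nodes B N) (hL : L ∈ nodes B N) {x : V} (hxK : x ∈ K) (hxL : x ∈ L) :
    K ⊆ L ∨ L ⊆ K := by
  rcases mem_union.1 hK with h1 | h1 <;> rcases mem_union.1 hL with h2 | h2
  · exact nested_laminar hB hN h1 h2 hxK hxL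
  · left
    have hu := B_union hB (nested_subset_B hN h1) (bmax_subset h2) hxK hxL
    have := (mem_bmax.1 h2).2 _ hu subset_union_right
    exact this ▸ subset_union_left
  · right
    have hu := B_union hB (bmax_subset h1) (nested_subset_B hN h2) hxK hxL
    have := (mem_bmax.1 h1).2 _ hu subset_union_left
    exact this ▸ subset_union_right
  · exact Or.inl (le_of_eq (bmax_eq hB h1 h2 hxK hxL))

lemma mem_priv {J : Finset V} {x : V} :
    x ∈ priv B N J ↔ x ∈ J ∧ ∀ K ∈ nodes B N, K ⊂ J → x ∉ K := by
  simp [priv]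

end NX

namespace NX

variable {S : Finset V} {B N : Finset (Finset V)}

lemma priv_nonempty (hB : IsBuilding S B) (hN : IsNested B N) {J : Finset V}
    (hJ : J ∈ nodes B N) : (priv B N J).Nonempty := by
  by_contra hemp
  rw [not_nonempty_iff_eq_empty] at hemp
  set T := (nodes B N).filter (· ⊂ J) with hT
  -- every point of J lies in some strict subnode
  have hcov : ∀ x ∈ J, ∃ K ∈ T, x ∈ K := by
    intro x hx
    by_contra hc
    push_neg at hc
    have : x ∈ priv B N J := mem_priv.2 ⟨hx, fun K hK hKJ => hc K (mem_filter.2 ⟨hK, hKJ⟩)⟩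
    simp [hemp] at this
  -- maximal elements of T
  set F := T.filter (fun K => ∀ L ∈ T, K ⊆ L → K = L) with hF
  have hFsup : ∀ x ∈ J, ∃ K ∈ F, x ∈ K := by
    intro x hx
    obtain ⟨K, hK, hxK⟩ := hcov x hx
    obtain ⟨Y, hY, hmaxY⟩ : ∃ Y ∈ T.filter (K ⊆ ·), ∀ x ∈ T.filter (K ⊆ ·), ¬ Y < x :=
      (by obtain ⟨Y, hY⟩ := Finset.exists_maximal (s := T.filter (K ⊆ ·)) ⟨K, mem_filter.2 ⟨hK, subset_rfl⟩⟩; exact ⟨Y, hY.1, fun x hx hlt => lt_irrefl _ (hlt.trans_le (hY.2 hx hlt.le))⟩)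
    rw [mem_filter] at hY
    refine ⟨Y, mem_filter.2 ⟨hY.1, fun L hL hYL => ?_⟩, hY.2 hxK⟩
    by_contra hne
    exact hmaxY L (mem_filter.2 ⟨hL, hY.2.trans hYL⟩) (lt_of_le_of_ne (le_iff_subset.2 hYL) hne)
  have hFN : F ⊆ N := by
    intro K hK
    have hK' := mem_filter.1 (mem_filter.1 hK).1
    rcases mem_union.1 hK'.1 with h | h
    · exact h
    · exact absurd ((mem_bmax.1 h).2 J (nodes_subset_B hN hJ) hK'.2.subset)
        (ne_of_lt hK'.2)
  have hanti : ∀ K ∈ F, ∀ L ∈ F, K ≠ L → ¬ K ⊆ L := by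
    intro K hK L hL hne hsub
    exact hne ((mem_filter.1 hK).2 L (mem_filter.1 hL).1 hsub)
  have hJne : J.Nonempty := B_nonempty hB (nodes_subset_B hN hJ)
  have hsupJ : F.sup id = J := by
    apply Subset.antisymm
    · intro x hx
      obtain ⟨K, hK, hxK⟩ := mem_sup.1 hx
      exact (mem_filter.1 (mem_filter.1 hK).1).2.subset hxK
    · intro x hx
      obtain ⟨K, hK, hxK⟩ := hFsup x hx
      exact mem_sup.2 ⟨K, hK, hxK⟩
  have hc2 : 2 ≤ F.card := by
    by_contra hc
    push_neg at hc
    interval_cases hF2 : F.card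
    · rw [card_eq_zero] at hF2
      obtain ⟨x, hx⟩ := hJne
      obtain ⟨K, hK, _⟩ := hFsup x hx
      simp [hF2] at hK
    · rw [card_eq_one] at hF2
      obtain ⟨a, ha⟩ := hF2
      have : a ⊂ J := (mem_filter.1 (mem_filter.1 ((by rw [ha]; exact mem_singleton_self a : a ∈ F))).1).2
      rw [ha, sup_singleton] at hsupJ
      exact absurd hsupJ (ne_of_lt this)
  exact hN.2 F hFN hc2 hanti (hsupJ ▸ nodes_subset_B hN hJ)

lemma priv_subset {J : Finset V} : priv B N J ⊆ J := filter_subset _ _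

/-- every point of a node belongs to the private set of some node -/
lemma exists_priv_mem (hB : IsBuilding S B) (hN : IsNested B N) {x : V} (hx : x ∈ S) :
    ∃ J ∈ nodes B N, x ∈ priv B N J := by
  have hxB : ({x} : Finset V) ∈ B := hB.2.2 x hx
  obtain ⟨M, hM, hxM⟩ := exists_bmax_above hB hxB
  have hMn : M ∈ nodes B N := mem_union.2 (Or.inr hM)
  have hne : ((nodes B N).filter (x ∈ ·)).Nonempty :=
    ⟨M, mem_filter.2 ⟨hMn, hxM (mem_singleton_self x)⟩⟩
  obtain ⟨J, hJ, hmin⟩ : ∃ J ∈ (nodes B N).filter (x ∈ ·), ∀ y ∈ (nodes B N).filter (x ∈ ·), ¬ y < J :=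
    (by obtain ⟨Y, hY⟩ := Finset.exists_minimal hne; exact ⟨Y, hY.1, fun x hx hlt => lt_irrefl _ (hlt.trans_le (hY.2 hx hlt.le))⟩)
  rw [mem_filter] at hJ
  refine ⟨J, hJ.1, mem_priv.2 ⟨hJ.2, fun K hK hKJ hxK => ?_⟩⟩
  exact hmin K (mem_filter.2 ⟨hK, hxK⟩) hKJ

lemma priv_disjoint (hB : IsBuilding S B) (hN : IsNested B N) {J₁ J₂ : Finset V}
    (h1 : J₁ ∈ nodes B N) (h2 : J₂ ∈ nodes B N) (hne : J₁ ≠ J₂) {x : V}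
    (hx1 : x ∈ priv B N J₁) (hx2 : x ∈ priv B N J₂) : False := by
  rcases nodes_laminar hB hN h1 h2 (priv_subset hx1) (priv_subset hx2) with h | h
  · exact (mem_priv.1 hx2).2 J₁ h1 (lt_of_le_of_ne h hne) (priv_subset hx1)
  · exact (mem_priv.1 hx1).2 J₂ h2 (lt_of_le_of_ne h hne.symm) (priv_subset hx2)

end NX

namespace NX

variable {S : Finset V} {B N : Finset (Finset V)}

lemma ext_nested (hB : IsBuilding S B) (hN : IsNested B N) {J X : Finset V} {p : V}
    (hJ : J ∈ nodes B N) (hp : p ∈ priv B N J)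
    (hX : X ∈ B) (hXJ : X ⊆ J.erase p)
    (hmax : ∀ Y ∈ B, X ⊆ Y → Y ⊆ J.erase p → Y = X)
    (hXN : X ∉ N) : IsNested B (insert X N) := by
  have hpJ : p ∈ J := priv_subset hp
  have hpX : p ∉ X := fun h => (mem_erase.1 (hXJ h)).1 rfl
  have hXJ' : X ⊆ J := hXJ.trans (erase_subset p J)
  have hXltJ : X ⊂ J := lt_of_le_of_ne hXJ' (fun h => hpX (h ▸ hpJ))
  have hJB : J ∈ B := nodes_subset_B hN hJ
  have hJne : J.Nonempty := B_nonempty hB hJB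
  have hXne : X.Nonempty := B_nonempty hB hX
  constructor
  · intro K hK
    rcases mem_insert.1 hK with rfl | hK'
    · refine mem_sdiff.2 ⟨hX, fun hmem => ?_⟩
      exact (ne_of_lt hXltJ) ((mem_bmax.1 hmem).2 J hJB hXJ')
    · exact hN.1 hK'
  · intro F hF hc hanti hUB
    by_cases hXF : X ∈ F
    swap
    · exact hN.2 F (fun K hK => (mem_insert.1 (hF hK)).resolve_left
        (fun h => hXF (h ▸ hK))) hc hanti hUB
    set U := F.sup id with hU
    have hXU : X ⊆ U := le_sup (f := id) hXF
    set R := F.erase X with hR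
    have hRN : R ⊆ N := by
      intro K hK
      have h1 := mem_erase.1 hK
      exact (mem_insert.1 (hF h1.2)).resolve_left h1.1
    have hRne : R.Nonempty := by
      rw [← card_pos, card_erase_of_mem hXF]
      omega
    have hdich : ∀ K ∈ R, K ⊂ J ∨ Disjoint K J := by
      intro K hK
      have hKF := (mem_erase.1 hK).2
      have hKne := (mem_erase.1 hK).1
      have hnXK : ¬ X ⊆ K := hanti X hXF K hKF (Ne.symm hKne)
      have hnJK : ¬ J ⊆ K := fun h => hnXK (hXJ'.trans h)
      by_cases hd : Disjoint K J
      · exact Or.inr hd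
      · left
        obtain ⟨x, hxK, hxJ⟩ := Finset.not_disjoint_iff.1 hd
        rcases nodes_laminar hB hN (mem_union.2 (Or.inl (hRN hK))) hJ hxK hxJ with h | h
        · exact lt_of_le_of_ne h (fun e => hnJK (e ▸ subset_rfl))
        · exact absurd h hnJK
    by_cases hall : ∀ K ∈ R, K ⊂ J
    · -- everything inside J, contradict maximality of X
      have hUJ : U ⊆ J.erase p := by
        intro x hx
        obtain ⟨K, hK, hxK⟩ := mem_sup.1 hx
        by_cases hKX : K = X
        · exact hXJ (hKX ▸ hxK)
        · have hKR : K ∈ R := mem_erase.2 ⟨hKX, hK⟩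
          have hKJ := hall K hKR
          refine mem_erase.2 ⟨fun e => ?_, hKJ.subset hxK⟩
          exact (mem_priv.1 hp).2 K (mem_union.2 (Or.inl (hRN hKR))) hKJ (e ▸ hxK)
      have hUX : U = X := hmax U hUB hXU hUJ
      obtain ⟨K, hK⟩ := hRne
      have : K ⊆ X := hUX ▸ (le_sup (f := id) (mem_erase.1 hK).2)
      exact hanti K (mem_erase.1 hK).2 X hXF (mem_erase.1 hK).1 this
    · push_neg at hall
      obtain ⟨K0, hK0R, hK0nlt⟩ := hall
      have hK0d : Disjoint K0 J := (hdich K0 hK0R).resolve_left hK0nlt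
      have hK0ne : K0.Nonempty := B_nonempty hB (nested_subset_B hN (hRN hK0R))
      obtain ⟨x0, hx0⟩ := hXne
      have hUJne : U ∪ J ∈ B := B_union hB hUB hJB (hXU hx0) (hXJ' hx0)
      rcases mem_union.1 hJ with hJN | hJmax
      swap
      · have : J = U ∪ J := (mem_bmax.1 hJmax).2 _ hUJne subset_union_right
        have hUJ2 : U ⊆ J := by rw [this]; exact subset_union_left
        have hsub : K0 ⊆ J := (le_sup (f := id) (mem_erase.1 hK0R).2).trans hUJ2
        obtain ⟨y, hy⟩ := hK0ne
        exact Finset.disjoint_left.1 hK0d hy (hsub hy)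
      · set G := insert J (R.filter (fun K => Disjoint K J)) with hG
        have hGN : G ⊆ N := by
          intro K hK
          rcases mem_insert.1 hK with rfl | hK'
          · exact hJN
          · exact hRN (mem_filter.1 hK').1
        have hK0G : K0 ∈ R.filter (fun K => Disjoint K J) := mem_filter.2 ⟨hK0R, hK0d⟩
        have hJnotin : J ∉ R.filter (fun K => Disjoint K J) := by
          intro h
          exact hJne.ne_empty (disjoint_self.1 (mem_filter.1 h).2)
        have hGc : 2 ≤ G.card := by
          rw [hG, card_insert_of_notMem hJnotin]
          have : 0 < (R.filter (fun K => Disjoint K J)).card := card_pos.2 ⟨K0, hK0G⟩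
          omega
        have hGanti : ∀ a ∈ G, ∀ b ∈ G, a ≠ b → ¬ a ⊆ b := by
          intro a ha b hb hab hsub
          rcases mem_insert.1 ha with rfl | ha' <;> rcases mem_insert.1 hb with rfl | hb'
          · exact hab rfl
          · have hd := (mem_filter.1 hb').2
            obtain ⟨y, hy⟩ := hJne
            exact Finset.disjoint_left.1 hd (hsub hy) hy
          · have hd := (mem_filter.1 ha').2
            have hane : a.Nonempty := B_nonempty hB (nested_subset_B hN (hRN (mem_filter.1 ha').1))
            obtain ⟨y, hy⟩ := hane
            exact Finset.disjoint_left.1 hd hy (hsub hy)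
          · exact hanti a (mem_erase.1 (mem_filter.1 ha').1).2 b
              (mem_erase.1 (mem_filter.1 hb').1).2 hab hsub
        have hGsup : G.sup id = U ∪ J := by
          apply Subset.antisymm
          · intro x hx
            obtain ⟨K, hK, hxK⟩ := mem_sup.1 hx
            rcases mem_insert.1 hK with rfl | hK'
            · exact mem_union.2 (Or.inr hxK)
            · exact mem_union.2 (Or.inl (le_sup (f := id) (mem_erase.1 (mem_filter.1 hK').1).2 hxK))
          · intro x hx
            rcases mem_union.1 hx with hxU | hxJ
            · obtain ⟨K, hK, hxK⟩ := mem_sup.1 hxU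
              by_cases hKX : K = X
              · exact mem_sup.2 ⟨J, mem_insert_self _ _, hXJ' (hKX ▸ hxK)⟩
              · have hKR : K ∈ R := mem_erase.2 ⟨hKX, hK⟩
                rcases hdich K hKR with h | h
                · exact mem_sup.2 ⟨J, mem_insert_self _ _, h.subset hxK⟩
                · exact mem_sup.2 ⟨K, mem_insert_of_mem (mem_filter.2 ⟨hKR, h⟩), hxK⟩
            · exact mem_sup.2 ⟨J, mem_insert_self _ _, hxJ⟩
        exact hN.2 G hGN hGc hGanti (hGsup ▸ hUJne)

end NX

namespace NX

variable {S : Finset V} {B N M : Finset (Finset V)}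

lemma nodes_mono (h : N ⊆ M) : nodes B N ⊆ nodes B M :=
  union_subset_union_left h

lemma nodes_insert {X : Finset V} : nodes B (insert X N) = insert X (nodes B N) :=
  insert_union X N (buildingMax B)

lemma not_mem_nodes (hN : IsNested B N) {X : Finset V} (hXB : X ∈ B \ buildingMax B)
    (hXN : X ∉ N) : X ∉ nodes B N := by
  intro h
  rcases mem_union.1 h with h | h
  · exact hXN h
  · exact (mem_sdiff.1 hXB).2 h

lemma priv_anti (h : N ⊆ M) {J : Finset V} : priv B M J ⊆ priv B N J := by
  intro x hx
  exact mem_priv.2 ⟨(mem_priv.1 hx).1, fun K hK hKJ => (mem_priv.1 hx).2 K (nodes_mono h hK) hKJ⟩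

lemma priv_singleton (hB : IsBuilding S B) (hN : IsMaxNested B N) {J : Finset V}
    (hJ : J ∈ nodes B N) : ∃ p, priv B N J = {p} := by
  obtain ⟨a, ha⟩ := priv_nonempty hB hN.1 hJ
  refine ⟨a, Finset.eq_singleton_iff_unique_mem.2 ⟨ha, fun b hb => ?_⟩⟩
  by_contra hba
  have haJ : a ∈ J := priv_subset ha
  have hbJ : b ∈ J := priv_subset hb
  have hJB : J ∈ B := nodes_subset_B hN.1 hJ
  have haS : a ∈ S := (hB.1 J hJB).2 haJ
  obtain ⟨X, hXB, haX, hXJb, hXmax⟩ := exists_max_above (hB.2.2 a haS)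
    (singleton_subset_iff.2 (mem_erase.2 ⟨Ne.symm hba, haJ⟩))
  have haX' : a ∈ X := haX (mem_singleton_self a)
  have hXN : X ∉ N := by
    intro hXN
    have hXltJ : X ⊂ J := lt_of_le_of_ne (hXJb.trans (erase_subset b J))
      (fun e => (mem_erase.1 (hXJb (e ▸ hbJ : b ∈ X))).1 rfl)
    exact (mem_priv.1 ha).2 X (mem_union.2 (Or.inl hXN)) hXltJ haX'
  have hnest := ext_nested hB hN.1 hJ hb hXB hXJb hXmax hXN
  have := hN.2 _ hnest (subset_insert _ _)
  exact hXN (this ▸ mem_insert_self X N)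

/-- core counting lemma: adding `X` requires ≥ 2 private elements at the minimal node above it -/
lemma insert_priv_two (hB : IsBuilding S B) (hM : IsNested B M) {X P : Finset V}
    (hins : IsNested B (insert X M)) (hXM : X ∉ nodes B M)
    (hP : P ∈ nodes B M) (hXP : X ⊂ P)
    (hPmin : ∀ K ∈ nodes B M, X ⊂ K → ¬ K ⊂ P) :
    (priv B M P ∩ X).Nonempty ∧ (priv B M P \ X).Nonempty := by
  have hXnode : X ∈ nodes B (insert X M) := mem_union.2 (Or.inl (mem_insert_self X M))
  have hPnode : P ∈ nodes B (insert X M) := nodes_mono (subset_insert _ _) hP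
  constructor
  · obtain ⟨x, hx⟩ := priv_nonempty hB hins hXnode
    have hxX : x ∈ X := priv_subset hx
    refine ⟨x, mem_inter.2 ⟨mem_priv.2 ⟨hXP.subset hxX, fun K hK hKP hxK => ?_⟩, hxX⟩⟩
    rcases nodes_laminar hB hins (nodes_mono (subset_insert _ _) hK) hXnode hxK hxX with h | h
    · have : K ⊂ X := lt_of_le_of_ne h (fun e => hXM (e ▸ hK))
      exact (mem_priv.1 hx).2 K (nodes_mono (subset_insert _ _) hK) this hxK
    · have : X ⊂ K := lt_of_le_of_ne h (fun e => hXM (e ▸ hK))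
      exact hPmin K hK this hKP
  · obtain ⟨x, hx⟩ := priv_nonempty hB hins hPnode
    refine ⟨x, mem_sdiff.2 ⟨priv_anti (subset_insert _ _) hx, fun hxX => ?_⟩⟩
    exact (mem_priv.1 hx).2 X hXnode hXP hxX

lemma exists_parent (hB : IsBuilding S B) (hN : IsNested B N) {X : Finset V} (hXB : X ∈ B)
    (hXM : X ∉ buildingMax B) :
    ∃ P ∈ nodes B N, X ⊂ P ∧ ∀ K ∈ nodes B N, X ⊂ K → ¬ K ⊂ P := by
  obtain ⟨Mx, hMx, hXMx⟩ := exists_bmax_above hB hXB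
  have hne : ((nodes B N).filter (X ⊂ ·)).Nonempty :=
    ⟨Mx, mem_filter.2 ⟨mem_union.2 (Or.inr hMx),
      lt_of_le_of_ne hXMx (fun e => hXM (e ▸ hMx))⟩⟩
  obtain ⟨P, hP, hmin⟩ : ∃ P ∈ (nodes B N).filter (X ⊂ ·), ∀ y ∈ (nodes B N).filter (X ⊂ ·), ¬ y < P :=
    (by obtain ⟨Y, hY⟩ := Finset.exists_minimal hne; exact ⟨Y, hY.1, fun x hx hlt => lt_irrefl _ (hlt.trans_le (hY.2 hx hlt.le))⟩)
  rw [mem_filter] at hP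
  exact ⟨P, hP.1, hP.2, fun K hK hXK hKP => hmin K (mem_filter.2 ⟨hK, hXK⟩) hKP⟩

lemma max_of_priv (hB : IsBuilding S B) (hN : IsNested B N)
    (h1 : ∀ J ∈ nodes B N, ∃ p, priv B N J = {p}) : IsMaxNested B N := by
  refine ⟨hN, fun M hM hNM => ?_⟩
  by_contra hne
  obtain ⟨X, hXM, hXN⟩ := exists_of_ssubset (lt_of_le_of_ne (le_iff_subset.2 hNM) hne)
  have hins : IsNested B (insert X N) := IsNested.mono hM (insert_subset hXM hNM)
  have hXB' : X ∈ B \ buildingMax B := hM.1 hXM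
  have hXnodes : X ∉ nodes B N := not_mem_nodes hN hXB' hXN
  obtain ⟨P, hP, hXP, hPmin⟩ := exists_parent hB hN (mem_sdiff.1 hXB').1 (mem_sdiff.1 hXB').2
  obtain ⟨⟨x, hx⟩, ⟨y, hy⟩⟩ := insert_priv_two hB hN hins hXnodes hP hXP hPmin
  obtain ⟨p, hp⟩ := h1 P hP
  rw [mem_inter, hp, mem_singleton] at hx
  rw [mem_sdiff, hp, mem_singleton] at hy
  rw [hx.1, ← hy.1] at hx; exact hy.2 hx.2

lemma card_nodes (hB : IsBuilding S B) (hN : IsNested B N)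
    (h1 : ∀ J ∈ nodes B N, ∃ p, priv B N J = {p}) :
    N.card + (buildingMax B).card = S.card := by
  have hSeq : S = (nodes B N).biUnion (priv B N) := by
    apply Subset.antisymm
    · intro x hx
      obtain ⟨J, hJ, hxJ⟩ := exists_priv_mem hB hN hx
      exact mem_biUnion.2 ⟨J, hJ, hxJ⟩
    · intro x hx
      obtain ⟨J, hJ, hxJ⟩ := mem_biUnion.1 hx
      exact (hB.1 J (nodes_subset_B hN hJ)).2 (priv_subset hxJ)
  have hdisj : ∀ J₁ ∈ nodes B N, ∀ J₂ ∈ nodes B N, J₁ ≠ J₂ →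
      Disjoint (priv B N J₁) (priv B N J₂) := by
    intro J₁ h1' J₂ h2' hne
    rw [Finset.disjoint_left]
    intro x hx1 hx2
    exact priv_disjoint hB hN h1' h2' hne hx1 hx2
  have hcard : S.card = ∑ J ∈ nodes B N, (priv B N J).card := by
    rw [hSeq]
    exact card_biUnion hdisj
  have : ∑ J ∈ nodes B N, (priv B N J).card = (nodes B N).card := by
    rw [Finset.card_eq_sum_ones (nodes B N)]
    apply Finset.sum_congr rfl
    intro J hJ
    obtain ⟨p, hp⟩ := h1 J hJ
    rw [hp, card_singleton]
  have hdisj2 : Disjoint N (buildingMax B) := by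
    rw [Finset.disjoint_left]
    exact fun K hK hK' => nested_not_bmax hN hK hK'
  rw [hcard, this, nodes, card_union_of_disjoint hdisj2]

end NX

namespace NX

variable {S : Finset V} {B N : Finset (Finset V)}

lemma child_max (hB : IsBuilding S B) (hN : IsMaxNested B N) {K J : Finset V} {p : V}
    (hK : K ∈ N) (hJ : J ∈ nodes B N) (hKJ : K ⊂ J)
    (hpar : ∀ L ∈ nodes B N, K ⊂ L → ¬ L ⊂ J) (hp : p ∈ priv B N J) :
    ∀ Y ∈ B, K ⊆ Y → Y ⊆ J.erase p → Y = K := by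
  intro Y hYB hKY hYJ
  obtain ⟨Ym, hYmB, hYYm, hYmJ, hYmmax⟩ := exists_max_above hYB hYJ
  by_cases hYmK : Ym = K
  · exact Subset.antisymm (hYmK ▸ hYYm) hKY
  · exfalso
    have hpJ : p ∈ J := priv_subset hp
    have hYmltJ : Ym ⊂ J := lt_of_le_of_ne (hYmJ.trans (erase_subset p J))
      (fun e => (mem_erase.1 (hYmJ (e ▸ hpJ : p ∈ Ym))).1 rfl)
    have hYmN : Ym ∉ N := by
      intro hmem
      exact hpar Ym (mem_union.2 (Or.inl hmem))
        (lt_of_le_of_ne (hKY.trans hYYm) (Ne.symm hYmK)) hYmltJ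
    have hnest := ext_nested hB hN.1 hJ hp hYmB hYmJ hYmmax hYmN
    have := hN.2 _ hnest (subset_insert _ _)
    exact hYmN (this ▸ mem_insert_self Ym N)

end NX

open NX in
theorem nested_exchange (S : Finset V) (B : Finset (Finset V))
    (hB : IsBuilding S B) (N : Finset (Finset V)) (hN : IsMaxNested B N)
    (I : Finset V) (hI : I ∈ N) :
    ∃! N' : Finset (Finset V), IsMaxNested B N' ∧ N ∩ N' = N.erase I := by
  classical
  set M := N.erase I with hMdef
  have hIB : I ∈ B := nested_subset_B hN.1 hI
  have hInb : I ∉ buildingMax B := nested_not_bmax hN.1 hI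
  have hInode : I ∈ nodes B N := mem_union.2 (Or.inl hI)
  obtain ⟨J, hJ, hIJ, hpar⟩ := exists_parent hB hN.1 hIB hInb
  obtain ⟨pJ, hpJ⟩ := priv_singleton hB hN hJ
  obtain ⟨pI, hpI⟩ := priv_singleton hB hN hInode
  have hpJmem : pJ ∈ priv B N J := hpJ ▸ mem_singleton_self pJ
  have hpImem : pI ∈ priv B N I := hpI ▸ mem_singleton_self pI
  have hpJJ : pJ ∈ J := priv_subset hpJmem
  have hpII : pI ∈ I := priv_subset hpImem
  have hIJ' : I ⊆ J := hIJ.subset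
  have hJB : J ∈ B := nodes_subset_B hN.1 hJ
  have hpJI : pJ ∉ I := (mem_priv.1 hpJmem).2 I hInode hIJ
  have hpIJ : pI ∈ J := hIJ' hpII
  have hMN : M ⊆ N := erase_subset I N
  have hMnest : IsNested B M := IsNested.mono hN.1 hMN
  have hnodesM : nodes B M = (nodes B N).erase I := by
    ext K
    simp only [nodes, mem_union, mem_erase, hMdef]
    constructor
    · rintro (⟨hne, hK⟩ | hK)
      · exact ⟨hne, Or.inl hK⟩
      · exact ⟨fun e => hInb (e ▸ hK), Or.inr hK⟩
    · rintro ⟨hne, (hK | hK)⟩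
      · exact Or.inl ⟨hne, hK⟩
      · exact Or.inr hK
  have hJneI : J ≠ I := fun e => (ne_of_lt hIJ) e.symm
  have hJM : J ∈ nodes B M := by rw [hnodesM]; exact mem_erase.2 ⟨hJneI, hJ⟩
  have hnodesMsub : nodes B M ⊆ nodes B N := nodes_mono hMN
  -- private set of J with respect to M
  have hpImemM : pI ∈ priv B M J := by
    refine mem_priv.2 ⟨hpIJ, fun K hK hKJ hpIK => ?_⟩
    have hKN : K ∈ nodes B N := hnodesMsub hK
    have hKneI : K ≠ I := by rw [hnodesM] at hK; exact (mem_erase.1 hK).1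
    rcases nodes_laminar hB hN.1 hKN hInode hpIK hpII with h | h
    · exact (mem_priv.1 hpImem).2 K hKN (lt_of_le_of_ne h hKneI) hpIK
    · exact hpar K hKN (lt_of_le_of_ne h (Ne.symm hKneI)) hKJ
  have hpJmemM : pJ ∈ priv B M J := priv_anti hMN hpJmem
  have hprivMJsub : priv B M J ⊆ {pI, pJ} := by
    intro x hx
    have hxJ : x ∈ J := priv_subset hx
    by_cases hxI : x ∈ I
    · have : x ∈ priv B N I := by
        refine mem_priv.2 ⟨hxI, fun K hK hKI hxK => ?_⟩
        have hKneI : K ≠ I := ne_of_lt hKI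
        have hKM : K ∈ nodes B M := by rw [hnodesM]; exact mem_erase.2 ⟨hKneI, hK⟩
        exact (mem_priv.1 hx).2 K hKM (hKI.trans hIJ) hxK
      rw [hpI, mem_singleton] at this
      exact mem_insert.2 (Or.inl this)
    · have : x ∈ priv B N J := by
        refine mem_priv.2 ⟨hxJ, fun K hK hKJ hxK => ?_⟩
        by_cases hKI : K = I
        · exact hxI (hKI ▸ hxK)
        · have hKM : K ∈ nodes B M := by rw [hnodesM]; exact mem_erase.2 ⟨hKI, hK⟩
          exact (mem_priv.1 hx).2 K hKM hKJ hxK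
      rw [hpJ, mem_singleton] at this
      exact mem_insert.2 (Or.inr (mem_singleton.2 this))
  -- private sets of other nodes are unchanged
  have hMQ : ∀ Q ∈ nodes B M, Q ≠ J → priv B M Q = priv B N Q := by
    intro Q hQ hQJ
    have hQN : Q ∈ nodes B N := hnodesMsub hQ
    refine Subset.antisymm ?_ (priv_anti hMN)
    intro x hx
    refine mem_priv.2 ⟨priv_subset hx, fun K hK hKQ hxK => ?_⟩
    by_cases hKI : K = I
    · subst hKI
      have hnQJ : ¬ Q ⊂ J := hpar Q hQN hKQ
      have hJQ : J ⊂ Q := by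
        rcases nodes_laminar hB hN.1 hJ hQN (hIJ' hpII) (hKQ.subset hpII) with h | h
        · exact lt_of_le_of_ne h (fun e => hQJ e.symm)
        · exact absurd (lt_of_le_of_ne h hQJ) hnQJ
      exact (mem_priv.1 hx).2 J hJM hJQ (hIJ' hxK)
    · have hKM : K ∈ nodes B M := by rw [hnodesM]; exact mem_erase.2 ⟨hKI, hK⟩
      exact (mem_priv.1 hx).2 K hKM hKQ hxK
  -- the flipped element I'
  have hpJS : pJ ∈ S := (hB.1 J hJB).2 hpJJ
  have hpJeJ : pJ ∈ J.erase pI := mem_erase.2 ⟨fun e => hpJI (e ▸ hpII), hpJJ⟩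
  obtain ⟨I', hI'B, hpJI'sub, hI'J, hI'max⟩ := exists_max_above (hB.2.2 pJ hpJS)
    (singleton_subset_iff.2 hpJeJ)
  have hpJmemI' : pJ ∈ I' := hpJI'sub (mem_singleton_self pJ)
  have hpInI' : pI ∉ I' := fun h => (mem_erase.1 (hI'J h)).1 rfl
  have hI'subJ : I' ⊆ J := hI'J.trans (erase_subset pI J)
  have hI'ltJ : I' ⊂ J := lt_of_le_of_ne hI'subJ (fun e => hpInI' (e ▸ hpIJ))
  have hI'N : I' ∉ N := fun h =>
    (mem_priv.1 hpJmem).2 I' (mem_union.2 (Or.inl h)) hI'ltJ hpJmemI'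
  have hI'M : I' ∉ M := fun h => hI'N (hMN h)
  have hI'nb : I' ∉ buildingMax B := fun h =>
    (ne_of_lt hI'ltJ) ((mem_bmax.1 h).2 J hJB hI'subJ)
  have hI'nodesM : I' ∉ nodes B M :=
    not_mem_nodes hMnest (mem_sdiff.2 ⟨hI'B, hI'nb⟩) hI'M
  have hI'neI : I' ≠ I := fun e => hpJI (e ▸ hpJmemI')
  set N' := insert I' M with hN'def
  have hN'nest : IsNested B N' := ext_nested hB hMnest hJM hpImemM hI'B hI'J hI'max hI'M
  have hnodesN' : nodes B N' = insert I' (nodes B M) := nodes_insert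
  have hMsubN' : nodes B M ⊆ nodes B N' := nodes_mono (subset_insert _ _)
  -- all private sets of N' are singletons
  have hN'priv : ∀ Q ∈ nodes B N', ∃ q, priv B N' Q = {q} := by
    intro Q hQ
    rw [hnodesN', mem_insert] at hQ
    rcases hQ with rfl | hQM
    · -- Q = I'
      refine ⟨pJ, Subset.antisymm ?_ ?_⟩
      · intro x hx
        have hxI' : x ∈ Q := priv_subset hx
        have hxMJ : x ∈ priv B M J := by
          refine mem_priv.2 ⟨hI'subJ hxI', fun K hK hKJ hxK => ?_⟩
          have hKB : K ∈ B := nodes_subset_B hMnest hK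
          have hu : K ∪ Q ∈ B := B_union hB hKB hI'B hxK hxI'
          have hpIK : pI ∉ K := (mem_priv.1 hpImemM).2 K hK hKJ
          have husub : K ∪ Q ⊆ J.erase pI := union_subset
            ((subset_erase).2 ⟨hKJ.subset, hpIK⟩) hI'J
          have hKsub : K ⊆ Q := by
            have := hI'max (K ∪ Q) hu subset_union_right husub
            rw [← this]; exact subset_union_left
          have hKlt : K ⊂ Q := lt_of_le_of_ne hKsub (fun e => hI'nodesM (e ▸ hK))
          exact (mem_priv.1 hx).2 K (hMsubN' hK) hKlt hxK
        have := hprivMJsub hxMJ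
        rw [mem_insert, mem_singleton] at this
        rcases this with rfl | rfl
        · exact absurd hxI' hpInI'
        · exact mem_singleton_self _
      · intro x hx
        rw [mem_singleton] at hx
        subst hx
        refine mem_priv.2 ⟨hpJmemI', fun K hK hKI' hxK => ?_⟩
        rw [hnodesN', mem_insert] at hK
        rcases hK with rfl | hKM
        · exact (lt_irrefl _ hKI')
        · exact (mem_priv.1 hpJmemM).2 K hKM (hKI'.trans hI'ltJ) hxK
    · by_cases hQJ : Q = J
      · subst hQJ
        refine ⟨pI, Subset.antisymm ?_ ?_⟩
        · intro x hx
          have hxMJ : x ∈ priv B M Q := priv_anti (subset_insert _ _) hx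
          have := hprivMJsub hxMJ
          rw [mem_insert, mem_singleton] at this
          rcases this with rfl | rfl
          · exact mem_singleton_self _
          · exact absurd hpJmemI'
              ((mem_priv.1 hx).2 I' (by rw [hnodesN']; exact mem_insert_self _ _) hI'ltJ)
        · intro x hx
          rw [mem_singleton] at hx
          subst hx
          refine mem_priv.2 ⟨hpIJ, fun K hK hKJ hxK => ?_⟩
          rw [hnodesN', mem_insert] at hK
          rcases hK with rfl | hKM
          · exact hpInI' hxK
          · exact (mem_priv.1 hpImemM).2 K hKM hKJ hxK
      · have hQN : Q ∈ nodes B N := hnodesMsub hQM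
        obtain ⟨q, hq⟩ := priv_singleton hB hN hQN
        have hqmem : q ∈ priv B N Q := hq ▸ mem_singleton_self q
        refine ⟨q, Subset.antisymm ?_ ?_⟩
        · intro x hx
          have : x ∈ priv B M Q := priv_anti (subset_insert _ _) hx
          rw [hMQ Q hQM hQJ, hq] at this
          exact this
        · intro x hx
          rw [mem_singleton] at hx
          refine mem_priv.2 ⟨hx ▸ priv_subset hqmem, fun K hK hKQ hxK => ?_⟩
          rw [hx] at hxK
          rw [hnodesN', mem_insert] at hK
          rcases hK with rfl | hKM
          · -- K = I'
            have hqJ : q ∈ J := hI'subJ hxK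
            rcases nodes_laminar hB hN.1 hJ hQN hqJ (priv_subset hqmem) with h | h
            · exact (mem_priv.1 hqmem).2 J hJ (lt_of_le_of_ne h (fun e => hQJ e.symm)) hqJ
            · have hQltJ : Q ⊂ J := lt_of_le_of_ne h hQJ
              exact (mem_priv.1 hpJmem).2 Q hQN hQltJ (hKQ.subset hpJmemI')
          · exact (mem_priv.1 hqmem).2 K (hnodesMsub hKM) hKQ hxK
  have hN'max : IsMaxNested B N' := max_of_priv hB hN'nest hN'priv
  have hNN' : N ∩ N' = N.erase I := by
    ext K
    simp only [hN'def, mem_inter, mem_insert, hMdef, mem_erase]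
    constructor
    · rintro ⟨hKN, (rfl | hKM)⟩
      · exact absurd hKN hI'N
      · exact hKM
    · intro hKM
      exact ⟨hKM.2, Or.inr hKM⟩
  refine ⟨N', ⟨hN'max, hNN'⟩, ?_⟩
  -- uniqueness
  intro N'' h''
  obtain ⟨hN''max, hN''cap⟩ := h''
  have hMsub : M ⊆ N'' := by
    intro K hK
    rw [← hN''cap] at hK
    exact (mem_inter.1 hK).2
  have hcN : N.card + (buildingMax B).card = S.card :=
    card_nodes hB hN.1 (fun Q hQn => priv_singleton hB hN hQn)
  have hcN'' : N''.card + (buildingMax B).card = S.card :=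
    card_nodes hB hN''max.1 (fun Q hQn => priv_singleton hB hN''max hQn)
  have hcardM : M.card + 1 = N.card := card_erase_add_one hI
  have hdiff : (N'' \ M).card = 1 := by
    rw [card_sdiff_of_subset hMsub]; omega
  obtain ⟨X, hX⟩ := card_eq_one.1 hdiff
  have hXmemdiff : X ∈ N'' \ M := by rw [hX]; exact mem_singleton_self X
  have hXN'' : X ∈ N'' := (mem_sdiff.1 hXmemdiff).1
  have hXM : X ∉ M := (mem_sdiff.1 hXmemdiff).2
  have hN''eq : N'' = insert X M := by
    rw [← union_sdiff_of_subset hMsub, hX, union_comm, ← insert_eq]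
  have hXN : X ∉ N := by
    intro h
    apply hXM
    rw [← hN''cap]
    exact mem_inter.2 ⟨h, hXN''⟩
  have hXBm : X ∈ B \ buildingMax B := hN''max.1.1 hXN''
  have hXB : X ∈ B := (mem_sdiff.1 hXBm).1
  have hXnodesM : X ∉ nodes B M := not_mem_nodes hMnest hXBm hXM
  have hinsnest : IsNested B (insert X M) := hN''eq ▸ hN''max.1
  obtain ⟨P, hP, hXP, hPmin⟩ := exists_parent hB hMnest hXB (mem_sdiff.1 hXBm).2
  obtain ⟨⟨x, hx⟩, ⟨y, hy⟩⟩ := insert_priv_two hB hMnest hinsnest hXnodesM hP hXP hPmin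
  have hPJ : P = J := by
    by_contra hne
    obtain ⟨p, hp⟩ := priv_singleton hB hN (hnodesMsub hP)
    rw [hMQ P hP hne, hp] at hx hy
    rw [mem_inter, mem_singleton] at hx
    rw [mem_sdiff, mem_singleton] at hy
    exact hy.2 (by rw [hy.1, ← hx.1]; exact hx.2)
  rw [hPJ] at hXP hx hy
  have hPminJ : ∀ K ∈ nodes B M, X ⊂ K → ¬ K ⊂ J := by rw [← hPJ]; exact hPmin
  have hxX : x ∈ X := (mem_inter.1 hx).2
  have hx2 := hprivMJsub (mem_inter.1 hx).1
  rw [mem_insert, mem_singleton] at hx2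
  have hXltJ : X ⊂ J := hXP
  have hXparN'' : ∀ L ∈ nodes B N'', X ⊂ L → ¬ L ⊂ J := by
    intro L hL hXL hLJ
    rw [hN''eq, nodes_insert, mem_insert] at hL
    rcases hL with rfl | hLM
    · exact lt_irrefl _ hXL
    · exact hPminJ L hLM hXL hLJ
  have hJnodesN'' : J ∈ nodes B N'' := by
    rw [hN''eq, nodes_insert]; exact mem_insert_of_mem hJM
  have hXnodeN'' : X ∈ nodes B N'' := by
    rw [hN''eq, nodes_insert]; exact mem_insert_self _ _
  have hprivN''J : priv B N'' J ⊆ priv B M J \ X := by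
    intro z hz
    exact mem_sdiff.2 ⟨priv_anti hMsub hz,
      fun hzX => (mem_priv.1 hz).2 X hXnodeN'' hXltJ hzX⟩
  obtain ⟨z, hz⟩ := priv_nonempty hB hN''max.1 hJnodesN''
  have hzmem := hprivN''J hz
  have hz2 := hprivMJsub (mem_sdiff.1 hzmem).1
  have hznX : z ∉ X := (mem_sdiff.1 hzmem).2
  rw [mem_insert, mem_singleton] at hz2
  by_cases hcase : pJ ∈ X
  · -- flip case: X = I'
    have hpInX : pI ∉ X := by
      rcases hz2 with rfl | rfl
      · exact hznX
      · exact absurd hcase hznX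
    have hzpI : z = pI := by
      rcases hz2 with rfl | rfl
      · rfl
      · exact absurd hcase hznX
    rw [hzpI] at hz
    have hXmax := child_max hB hN''max hXN'' hJnodesN'' hXltJ hXparN'' hz
    have hu : X ∪ I' ∈ B := B_union hB hXB hI'B hcase hpJmemI'
    have husub : X ∪ I' ⊆ J.erase pI :=
      union_subset ((subset_erase).2 ⟨hXltJ.subset, hpInX⟩) hI'J
    have e1 : X ∪ I' = X := hXmax _ hu subset_union_left husub
    have e2 : X ∪ I' = I' := hI'max _ hu subset_union_right husub
    rw [hN''eq, e1.symm.trans e2]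
  · -- impossible case: X = I
    exfalso
    have hpIX : pI ∈ X := by
      rcases hx2 with rfl | rfl
      · exact hxX
      · exact absurd hxX hcase
    have hzpJ : z = pJ := by
      rcases hz2 with rfl | rfl
      · exact absurd hpIX hznX
      · rfl
    rw [hzpJ] at hz
    have hXmax := child_max hB hN''max hXN'' hJnodesN'' hXltJ hXparN'' hz
    have hImax := child_max hB hN hI hJ hIJ hpar hpJmem
    have hu : X ∪ I ∈ B := B_union hB hXB hIB hpIX hpII
    have husub : X ∪ I ⊆ J.erase pJ :=
      union_subset ((subset_erase).2 ⟨hXltJ.subset, hcase⟩)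
        ((subset_erase).2 ⟨hIJ', hpJI⟩)
    have e1 : X ∪ I = X := hXmax _ hu subset_union_left husub
    have e2 : X ∪ I = I := hImax _ hu subset_union_right husub
    exact hXN ((e1.symm.trans e2) ▸ hI)
end

section
/- The dual graph of the nested complex N(B), whose vertices are maximal nested sets with N, N' adjacent when |N ∩ N'| = |N| − 1, is regular of degree rk(B). -/
open Finset

variable {V : Type*} [Fintype V] [DecidableEq V]

namespace NestedAux

variable {V : Type*} [Fintype V] [DecidableEq V]

/-- `N ∪ buildingMax B`. -/
def NpA (B N : Finset (Finset V)) : Finset (Finset V) := N ∪ buildingMax B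

/-- `λ(A)` : elements of `A` in no strict subset of `A` belonging to `NpA B N`. -/
def lamA (B N : Finset (Finset V)) (A : Finset V) : Finset V :=
  A \ ((NpA B N).filter (· ⊂ A)).sup id

/-- maximum element of `{J ∈ B | a ∈ J ⊆ p \ {b}}`. -/
def supT (B : Finset (Finset V)) (p : Finset V) (a b : V) : Finset V :=
  (B.filter (fun J => a ∈ J ∧ J ⊆ p \ {b})).sup id

/-- every element of a finite family lies below a maximal one -/
theorem exists_max_above (s : Finset (Finset V)) {I : Finset V} (hI : I ∈ s) :
    ∃ m ∈ s, I ⊆ m ∧ ∀ J ∈ s, m ⊆ J → m = J := by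
  classical
  obtain ⟨m, hm, hmax⟩ := (s.filter (fun J => I ⊆ J)).exists_maximal ⟨I, by simp [hI]⟩
  rw [mem_filter] at hm
  refine ⟨m, hm.1, hm.2, fun J hJ hmJ => ?_⟩
  by_contra hne
  exact hne (le_antisymm hmJ (hmax (y := J) (by simp [hJ, hm.2.trans hmJ]) hmJ))

theorem union_sup_mem (S : Finset V) {B : Finset (Finset V)} (hB : IsBuilding S B)
    {J : Finset V} (hJ : J ∈ B) (T : Finset (Finset V)) (hT : T ⊆ B)
    (hmeet : ∀ C ∈ T, (C ∩ J).Nonempty) : J ∪ T.sup id ∈ B := by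
  classical
  induction T using Finset.induction_on with
  | empty => simpa using hJ
  | @insert C T hC ih =>
      have h1 : J ∪ T.sup id ∈ B := ih (fun x hx => hT (by simp [hx]))
        (fun C hCt => hmeet C (by simp [hCt]))
      have h2 : C ∈ B := hT (by simp)
      have h3 : ((J ∪ T.sup id) ∩ C).Nonempty := by
        obtain ⟨x, hx⟩ := hmeet C (by simp)
        rw [mem_inter] at hx
        exact ⟨x, by rw [mem_inter]; exact ⟨by simp [hx.2], hx.1⟩⟩
      have := hB.2.1 _ h1 _ h2 h3
      rw [sup_insert]
      rw [show (id C ⊔ T.sup id : Finset V) = C ∪ T.sup id from rfl,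
        union_comm C (T.sup id), ← union_assoc]
      exact hB.2.1 _ h1 _ h2 h3

theorem bmax_subset {B : Finset (Finset V)} : buildingMax B ⊆ B := filter_subset _ _

theorem exists_bmax_superset {B : Finset (Finset V)} {I : Finset V} (hI : I ∈ B) :
    ∃ M ∈ buildingMax B, I ⊆ M := by
  obtain ⟨m, hm, hIm, hmax⟩ := exists_max_above B hI
  exact ⟨m, mem_filter.mpr ⟨hm, hmax⟩, hIm⟩


theorem bmax_eq_of_meet (S : Finset V) {B : Finset (Finset V)} (hB : IsBuilding S B)
    {M₁ M₂ : Finset V} (h1 : M₁ ∈ buildingMax B) (h2 : M₂ ∈ buildingMax B)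
    (h : (M₁ ∩ M₂).Nonempty) : M₁ = M₂ := by
  rw [buildingMax, mem_filter] at h1 h2
  have hu : M₁ ∪ M₂ ∈ B := hB.2.1 _ h1.1 _ h2.1 h
  have e1 : M₁ = M₁ ∪ M₂ := h1.2 _ hu subset_union_left
  have e2 : M₂ = M₁ ∪ M₂ := h2.2 _ hu subset_union_right
  exact e1.trans e2.symm

theorem NpA_subset_B {B N : Finset (Finset V)} (hN : IsNested B N) : NpA B N ⊆ B := by
  intro A hA
  rcases mem_union.mp hA with h | h
  · exact (mem_sdiff.mp (hN.1 h)).1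
  · exact bmax_subset h

theorem NpA_nonempty (S : Finset V) {B N : Finset (Finset V)} (hB : IsBuilding S B)
    (hN : IsNested B N) {A : Finset V} (hA : A ∈ NpA B N) : A.Nonempty :=
  (hB.1 _ (NpA_subset_B hN hA)).1

theorem NpA_subset_S (S : Finset V) {B N : Finset (Finset V)} (hB : IsBuilding S B)
    (hN : IsNested B N) {A : Finset V} (hA : A ∈ NpA B N) : A ⊆ S :=
  (hB.1 _ (NpA_subset_B hN hA)).2

theorem mem_NpA_left {B N : Finset (Finset V)} {A : Finset V} (h : A ∈ N) : A ∈ NpA B N :=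
  mem_union.mpr (Or.inl h)

theorem nested_not_bmax {B N : Finset (Finset V)} (hN : IsNested B N) {A : Finset V}
    (hA : A ∈ N) : A ∉ buildingMax B := (mem_sdiff.mp (hN.1 hA)).2

/-- the key dichotomy: any two members of `NpA B N` are comparable or disjoint. -/
theorem forest (S : Finset V) {B N : Finset (Finset V)} (hB : IsBuilding S B)
    (hN : IsNested B N) {A A' : Finset V} (hA : A ∈ NpA B N) (hA' : A' ∈ NpA B N)
    (h : (A ∩ A').Nonempty) : A ⊆ A' ∨ A' ⊆ A := by
  classical
  by_cases heq : A = A'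
  · exact Or.inl (heq ▸ subset_rfl)
  have hu : A ∪ A' ∈ B := hB.2.1 _ (NpA_subset_B hN hA) _ (NpA_subset_B hN hA') h
  rcases mem_union.mp hA with h1 | h1 <;> rcases mem_union.mp hA' with h2 | h2
  · -- both in N
    by_contra hc
    push_neg at hc
    have hF : ({A, A'} : Finset (Finset V)) ⊆ N := by
      intro x hx; rcases mem_insert.mp hx with rfl | hx
      · exact h1
      · rw [mem_singleton.mp hx]; exact h2
    have hcard : 2 ≤ ({A, A'} : Finset (Finset V)).card := by
      rw [card_insert_of_notMem (by simpa using heq), card_singleton]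
    have hanti : ∀ I ∈ ({A, A'} : Finset (Finset V)), ∀ J ∈ ({A, A'} : Finset (Finset V)),
        I ≠ J → ¬ I ⊆ J := by
      intro I hI J hJ hIJ
      simp only [mem_insert, mem_singleton] at hI hJ
      rcases hI with rfl | rfl <;> rcases hJ with rfl | rfl <;> simp_all
    have := hN.2 _ hF hcard hanti
    rw [sup_insert, sup_singleton] at this
    exact this hu
  · -- A ∈ N, A' ∈ bmax
    left
    rw [buildingMax, mem_filter] at h2
    have := h2.2 _ hu subset_union_right
    rw [this]
    exact subset_union_left
  · -- A ∈ bmax, A' ∈ N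
    right
    rw [buildingMax, mem_filter] at h1
    have := h1.2 _ hu subset_union_left
    rw [this]
    exact subset_union_right
  · exact absurd (bmax_eq_of_meet S hB h1 h2 h) heq

theorem strict_sub_not_bmax {B : Finset (Finset V)} {C A : Finset V} (hA : A ∈ B)
    (hCA : C ⊂ A) : C ∉ buildingMax B := by
  rw [buildingMax, mem_filter]
  rintro ⟨-, h⟩
  exact hCA.ne (h _ hA hCA.subset)

theorem lam_subset {B N : Finset (Finset V)} {A : Finset V} : lamA B N A ⊆ A := sdiff_subset

theorem mem_lam_iff {B N : Finset (Finset V)} {A : Finset V} {x : V} :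
    x ∈ lamA B N A ↔ x ∈ A ∧ ∀ C ∈ NpA B N, C ⊂ A → x ∉ C := by
  classical
  simp only [lamA, mem_sdiff, Finset.mem_sup, mem_filter, id]
  constructor
  · rintro ⟨hx, h⟩
    exact ⟨hx, fun C hC hCA hxC => h ⟨C, ⟨hC, hCA⟩, hxC⟩⟩
  · rintro ⟨hx, h⟩
    exact ⟨hx, fun ⟨C, ⟨hC, hCA⟩, hxC⟩ => h C hC hCA hxC⟩

theorem lam_nonempty (S : Finset V) {B N : Finset (Finset V)} (hB : IsBuilding S B)
    (hN : IsNested B N) {A : Finset V} (hA : A ∈ NpA B N) : (lamA B N A).Nonempty := by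
  classical
  by_contra hc
  rw [not_nonempty_iff_eq_empty, lamA, sdiff_eq_empty_iff_subset] at hc
  set D := (NpA B N).filter (· ⊂ A) with hD
  set F := D.filter (fun C => ∀ C' ∈ D, C ⊆ C' → C = C') with hF
  -- every element of D is below some element of F
  have hbelow : ∀ C ∈ D, ∃ m ∈ F, C ⊆ m := by
    intro C hC
    obtain ⟨m, hm, hCm, hmax⟩ := exists_max_above D hC
    exact ⟨m, mem_filter.mpr ⟨hm, hmax⟩, hCm⟩
  have hsupF : A ⊆ F.sup id := by
    intro x hx
    obtain ⟨C, hC, hxC⟩ := Finset.mem_sup.mp (hc hx)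
    obtain ⟨m, hm, hCm⟩ := hbelow C hC
    exact Finset.mem_sup.mpr ⟨m, hm, hCm hxC⟩
  have hsupF' : F.sup id ⊆ A := by
    intro x hx
    obtain ⟨C, hC, hxC⟩ := Finset.mem_sup.mp hx
    exact ((mem_filter.mp ((filter_subset _ _) hC)).2).subset hxC
  have hsupeq : F.sup id = A := subset_antisymm hsupF' hsupF
  have hFN : F ⊆ N := by
    intro C hC
    have hCD : C ∈ D := (filter_subset _ _) hC
    rw [hD, mem_filter] at hCD
    rcases mem_union.mp hCD.1 with h | h
    · exact h
    · exact absurd h (strict_sub_not_bmax (NpA_subset_B hN hA) hCD.2)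
  have hAne : A.Nonempty := NpA_nonempty S hB hN hA
  have hFne : F.Nonempty := by
    obtain ⟨x, hx⟩ := hAne
    obtain ⟨C, hC, hxC⟩ := Finset.mem_sup.mp (hsupeq ▸ hx)
    exact ⟨C, hC⟩
  have hcard : 2 ≤ F.card := by
    rw [show (2:ℕ) = 1 + 1 from rfl, Nat.add_comm, Nat.succ_le_iff]
    rw [Finset.one_lt_card]
    obtain ⟨C, hC⟩ := hFne
    have hCA : C ⊂ A := (mem_filter.mp ((filter_subset _ _) hC)).2
    obtain ⟨x, hxA, hxC⟩ := exists_of_ssubset hCA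
    obtain ⟨C', hC', hxC'⟩ := Finset.mem_sup.mp (hsupeq ▸ hxA)
    exact ⟨C, hC, C', hC', fun h => hxC (h ▸ hxC')⟩
  have hanti : ∀ I ∈ F, ∀ J ∈ F, I ≠ J → ¬ I ⊆ J := by
    intro I hI J hJ hIJ hsub
    rw [hF, mem_filter] at hI
    exact hIJ (hI.2 _ ((filter_subset _ _) hJ) hsub)
  have := hN.2 _ hFN hcard hanti
  rw [hsupeq] at this
  exact this (NpA_subset_B hN hA)


theorem lam_disjoint (S : Finset V) {B N : Finset (Finset V)} (hB : IsBuilding S B)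
    (hN : IsNested B N) {A A' : Finset V} (hA : A ∈ NpA B N) (hA' : A' ∈ NpA B N)
    (hne : A ≠ A') : Disjoint (lamA B N A) (lamA B N A') := by
  classical
  rw [Finset.disjoint_left]
  intro x hx hx'
  rw [mem_lam_iff] at hx hx'
  have hmeet : (A ∩ A').Nonempty := ⟨x, mem_inter.mpr ⟨hx.1, hx'.1⟩⟩
  rcases forest S hB hN hA hA' hmeet with hs | hs
  · exact hx'.2 A hA (ssubset_of_subset_of_ne hs hne) hx.1
  · exact hx.2 A' hA' (ssubset_of_subset_of_ne hs (Ne.symm hne)) hx'.1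

theorem lam_cover (S : Finset V) {B N : Finset (Finset V)} (hB : IsBuilding S B)
    (hN : IsNested B N) {x : V} (hx : x ∈ S) : ∃ A ∈ NpA B N, x ∈ lamA B N A := by
  classical
  obtain ⟨M, hM, hxM⟩ := exists_bmax_superset (hB.2.2 x hx)
  have hMp : M ∈ NpA B N := mem_union.mpr (Or.inr hM)
  have hne : ((NpA B N).filter (x ∈ ·)).Nonempty :=
    ⟨M, mem_filter.mpr ⟨hMp, hxM (mem_singleton_self x)⟩⟩
  obtain ⟨A, hA, hmin⟩ := Finset.exists_minimal hne
  rw [mem_filter] at hA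
  refine ⟨A, hA.1, mem_lam_iff.mpr ⟨hA.2, fun C hC hCA hxC => ?_⟩⟩
  exact (ssubset_irrefl C) (hCA.trans_subset (hmin (mem_filter.mpr ⟨hC, hxC⟩) hCA.subset))

theorem sum_lam_card (S : Finset V) {B N : Finset (Finset V)} (hB : IsBuilding S B)
    (hN : IsNested B N) : ∑ A ∈ NpA B N, (lamA B N A).card = S.card := by
  classical
  have hbU : (NpA B N).biUnion (lamA B N) = S := by
    apply subset_antisymm
    · intro x hx
      obtain ⟨A, hA, hxA⟩ := mem_biUnion.mp hx
      exact (NpA_subset_S S hB hN hA) (lam_subset hxA)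
    · intro x hx
      obtain ⟨A, hA, hxA⟩ := lam_cover S hB hN hx
      exact mem_biUnion.mpr ⟨A, hA, hxA⟩
  rw [← hbU, Finset.card_biUnion (fun A hA A' hA' hne => lam_disjoint S hB hN hA hA' hne)]

theorem card_NpA {B N : Finset (Finset V)} (hN : IsNested B N) :
    (NpA B N).card = N.card + (buildingMax B).card := by
  apply Finset.card_union_of_disjoint
  rw [Finset.disjoint_left]
  intro A hA hA'
  exact nested_not_bmax hN hA hA'

theorem nested_card_le (S : Finset V) {B N : Finset (Finset V)} (hB : IsBuilding S B)
    (hN : IsNested B N) : N.card + (buildingMax B).card ≤ S.card := by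
  classical
  rw [← card_NpA hN, ← sum_lam_card S hB hN]
  calc (NpA B N).card = ∑ _A ∈ NpA B N, 1 := by rw [Finset.sum_const, smul_eq_mul, mul_one]
    _ ≤ ∑ A ∈ NpA B N, (lamA B N A).card := by
        apply Finset.sum_le_sum
        intro A hA
        exact Nat.one_le_iff_ne_zero.mpr (Finset.card_ne_zero_of_mem
          (lam_nonempty S hB hN hA).choose_spec)

theorem max_of_card (S : Finset V) {B M : Finset (Finset V)} (hB : IsBuilding S B)
    (hM : IsNested B M) (hcard : S.card = M.card + (buildingMax B).card) :
    IsMaxNested B M := by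
  refine ⟨hM, fun M' hM' hsub => ?_⟩
  have := nested_card_le S hB hM'
  exact Finset.eq_of_subset_of_card_le hsub (by omega)

theorem nested_of_subset {B N M : Finset (Finset V)} (hN : IsNested B N) (h : M ⊆ N) :
    IsNested B M :=
  ⟨h.trans hN.1, fun F hF => hN.2 F (hF.trans h)⟩


theorem supT_spec (S : Finset V) {B : Finset (Finset V)} (hB : IsBuilding S B)
    {p : Finset V} (hp : p ∈ B) {a b : V} (ha : a ∈ p) (hab : a ≠ b) :
    supT B p a b ∈ B ∧ a ∈ supT B p a b ∧ supT B p a b ⊆ p \ {b} ∧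
      ∀ J ∈ B, a ∈ J → J ⊆ p \ {b} → J ⊆ supT B p a b := by
  classical
  set T := B.filter (fun J => a ∈ J ∧ J ⊆ p \ {b}) with hT
  have hsT : ∀ J ∈ T, J ⊆ supT B p a b := by
    intro J hJ x hx
    exact Finset.mem_sup.mpr ⟨J, hJ, hx⟩
  have haS : a ∈ S := (hB.1 _ hp).2 ha
  have hsingle : ({a} : Finset V) ∈ T := by
    rw [hT, mem_filter]
    refine ⟨hB.2.2 a haS, mem_singleton_self a, ?_⟩
    intro x hx
    rw [mem_singleton.mp hx]
    exact mem_sdiff.mpr ⟨ha, by simpa using hab⟩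
  have hmemB : supT B p a b ∈ B := by
    have : ({a} : Finset V) ∪ (T.erase {a}).sup id ∈ B := by
      apply union_sup_mem S hB (hB.2.2 a haS)
      · exact (Finset.erase_subset _ _).trans (filter_subset _ _)
      · intro C hC
        have := (mem_filter.mp (Finset.mem_of_mem_erase hC)).2.1
        exact ⟨a, mem_inter.mpr ⟨this, mem_singleton_self a⟩⟩
    have heq : supT B p a b = ({a} : Finset V) ∪ (T.erase {a}).sup id := by
      show T.sup id = _
      conv_lhs => rw [← Finset.insert_erase hsingle]
      rw [sup_insert, sup_eq_union, id]
    rwa [← heq] at this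
  have hamem : a ∈ supT B p a b := hsT _ hsingle (mem_singleton_self a)
  have hsub : supT B p a b ⊆ p \ {b} := by
    intro x hx
    obtain ⟨J, hJ, hxJ⟩ := Finset.mem_sup.mp hx
    exact (mem_filter.mp hJ).2.2 hxJ
  exact ⟨hmemB, hamem, hsub, fun J hJ haJ hJsub => hsT J (mem_filter.mpr ⟨hJ, haJ, hJsub⟩)⟩

/-- the extension lemma: if `lamA` at `A` has two distinct elements `a, b`, then inserting
`supT B A a b` keeps the set nested. -/
theorem ext_lemma (S : Finset V) {B N : Finset (Finset V)} (hB : IsBuilding S B)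
    (hN : IsNested B N) {A : Finset V} (hA : A ∈ NpA B N) {a b : V}
    (ha : a ∈ lamA B N A) (hb : b ∈ lamA B N A) (hab : a ≠ b) :
    supT B A a b ∉ NpA B N ∧ IsNested B (insert (supT B A a b) N) := by
  classical
  set G := supT B A a b with hGdef
  obtain ⟨hGB, haG, hGsub, hGmax⟩ :=
    supT_spec S hB (NpA_subset_B hN hA) (lam_subset ha) hab
  rw [mem_lam_iff] at ha hb
  have hbA : b ∈ A := hb.1
  have hGA : G ⊂ A := by
    refine ssubset_of_subset_of_ne (hGsub.trans sdiff_subset) ?_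
    intro h
    have : b ∈ G := h ▸ hbA
    exact (mem_sdiff.mp (hGsub this)).2 (mem_singleton_self b)
  -- G is not in NpA
  have hGnp : G ∉ NpA B N := fun h => ha.2 G h hGA haG
  refine ⟨hGnp, ?_, ?_⟩
  · -- insert G N ⊆ B \ bmax
    intro C hC
    rcases mem_insert.mp hC with rfl | hC
    · exact mem_sdiff.mpr ⟨hGB, fun h => hGnp (mem_union.mpr (Or.inr h))⟩
    · exact hN.1 hC
  · -- the antichain condition
    intro F hF hFcard hanti hsupB
    by_cases hGF : G ∈ F
    case neg =>
      have : F ⊆ N := fun C hC => (mem_insert.mp (hF hC)).resolve_left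
        (fun h => hGF (h ▸ hC))
      exact hN.2 F this hFcard hanti hsupB
    -- G ∈ F
    set F₀ := F.erase G with hF₀
    have hF₀N : F₀ ⊆ N := by
      intro C hC
      rcases mem_insert.mp (hF (Finset.mem_of_mem_erase hC)) with h | h
      · exact absurd h (Finset.ne_of_mem_erase hC)
      · exact h
    have hF₀ne : F₀.Nonempty := by
      rw [← Finset.card_pos, Finset.card_erase_of_mem hGF]
      omega
    -- each member of F₀ is disjoint from G
    have hdisjG : ∀ C ∈ F₀, Disjoint C G := by
      intro C hC
      have hCN : C ∈ N := hF₀N hC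
      have hCne : C ≠ G := Finset.ne_of_mem_erase hC
      rw [Finset.disjoint_left]
      intro x hxC hxG
      have hmeet : (C ∩ G).Nonempty := ⟨x, mem_inter.mpr ⟨hxC, hxG⟩⟩
      -- C and A comparable
      have hmeetA : (C ∩ A).Nonempty := ⟨x, mem_inter.mpr ⟨hxC, hGA.subset hxG⟩⟩
      rcases forest S hB hN (mem_NpA_left hCN) hA hmeetA with hs | hs
      · -- C ⊆ A; then C ⊊ A or C = A
        rcases eq_or_ne C A with rfl | hCA
        · exact hanti G hGF C (Finset.mem_of_mem_erase hC) hCne.symm hGA.subset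
        · have hCssA : C ⊂ A := ssubset_of_subset_of_ne hs hCA
          have hbC : b ∉ C := hb.2 C (mem_NpA_left hCN) hCssA
          have hCG : C ∪ G ∈ B := hB.2.1 _ (NpA_subset_B hN (mem_NpA_left hCN)) _ hGB hmeet
          have : C ∪ G ⊆ G := hGmax _ hCG (mem_union_right _ haG)
            (by intro y hy
                rcases mem_union.mp hy with h | h
                · exact mem_sdiff.mpr ⟨hCssA.subset h, by
                    simp only [mem_singleton]; rintro rfl; exact hbC h⟩
                · exact hGsub h)
          exact hanti C (Finset.mem_of_mem_erase hC) G hGF hCne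
            ((subset_union_left).trans this)
      · -- A ⊆ C, so G ⊆ C
        exact hanti G hGF C (Finset.mem_of_mem_erase hC) hCne.symm (hGA.subset.trans hs)
    -- dichotomy for members of F₀ w.r.t. A
    have hdich : ∀ C ∈ F₀, C ⊂ A ∨ Disjoint C A := by
      intro C hC
      by_cases hmeetA : (C ∩ A).Nonempty
      case neg =>
        right
        rw [Finset.disjoint_left]
        intro x hxC hxA
        exact hmeetA ⟨x, mem_inter.mpr ⟨hxC, hxA⟩⟩
      rcases forest S hB hN (mem_NpA_left (hF₀N hC)) hA hmeetA with hs | hs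
      · left
        refine ssubset_of_subset_of_ne hs ?_
        rintro rfl
        exact hanti G hGF C (Finset.mem_of_mem_erase hC)
          (Finset.ne_of_mem_erase hC).symm hGA.subset
      · exact absurd (hGA.subset.trans hs)
          (hanti G hGF C (Finset.mem_of_mem_erase hC) (Finset.ne_of_mem_erase hC).symm)
    have hsupF : F.sup id = G ∪ F₀.sup id := by
      conv_lhs => rw [← Finset.insert_erase hGF]
      rw [sup_insert, sup_eq_union]
      rfl
    by_cases hout : ∃ C ∈ F₀, Disjoint C A
    case neg =>
      -- all of F₀ inside A: contradiction with maximality of G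
      push_neg at hout
      have hin : ∀ C ∈ F₀, C ⊂ A := fun C hC => (hdich C hC).resolve_right (hout C hC)
      have hsub2 : F.sup id ⊆ A \ {b} := by
        rw [hsupF]
        intro x hx
        rcases mem_union.mp hx with h | h
        · exact hGsub h
        · obtain ⟨C, hC, hxC⟩ := Finset.mem_sup.mp h
          refine mem_sdiff.mpr ⟨(hin C hC).subset hxC, ?_⟩
          simp only [mem_singleton]
          rintro rfl
          exact hb.2 C (mem_NpA_left (hF₀N hC)) (hin C hC) hxC
      have : F.sup id ⊆ G := hGmax _ hsupB (hsupF ▸ mem_union_left _ haG) hsub2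
      obtain ⟨C, hC⟩ := hF₀ne
      obtain ⟨y, hy⟩ := (hB.1 _ (mem_sdiff.mp (hN.1 (hF₀N hC))).1).1
      have hyG : y ∈ G := this (hsupF ▸ mem_union_right _ (Finset.mem_sup.mpr ⟨C, hC, hy⟩))
      exact (Finset.disjoint_left.mp (hdisjG C hC)) hy hyG
    -- some member of F₀ disjoint from A
    obtain ⟨C₀, hC₀, hC₀dis⟩ := hout
    set Fout := F₀.filter (fun C => Disjoint C A) with hFout
    have hWB : A ∪ F.sup id ∈ B := by
      apply hB.2.1 _ (NpA_subset_B hN hA) _ hsupB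
      exact ⟨a, mem_inter.mpr ⟨lam_subset (mem_lam_iff.mpr ha), hsupF ▸ mem_union_left _ haG⟩⟩
    have hWeq : A ∪ F.sup id = A ∪ Fout.sup id := by
      apply subset_antisymm
      · intro x hx
        rcases mem_union.mp hx with h | h
        · exact mem_union_left _ h
        · rw [hsupF] at h
          rcases mem_union.mp h with h | h
          · exact mem_union_left _ (hGA.subset h)
          · obtain ⟨C, hC, hxC⟩ := Finset.mem_sup.mp h
            rcases hdich C hC with hs | hs
            · exact mem_union_left _ (hs.subset hxC)
            · exact mem_union_right _ (Finset.mem_sup.mpr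
                ⟨C, mem_filter.mpr ⟨hC, hs⟩, hxC⟩)
      · intro x hx
        rcases mem_union.mp hx with h | h
        · exact mem_union_left _ h
        · obtain ⟨C, hC, hxC⟩ := Finset.mem_sup.mp h
          exact mem_union_right _ (hsupF ▸ mem_union_right _
            (Finset.mem_sup.mpr ⟨C, (filter_subset _ _) hC, hxC⟩))
    by_cases hAbmax : A ∈ buildingMax B
    case pos =>
      -- A ∈ bmax: A ∪ sup F = A, contradiction
      rw [buildingMax, mem_filter] at hAbmax
      have hAeq : A = A ∪ F.sup id := hAbmax.2 _ hWB subset_union_left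
      obtain ⟨y, hy⟩ := (hB.1 _ (mem_sdiff.mp (hN.1 (hF₀N hC₀))).1).1
      have hyA : y ∈ A := by
        rw [hAeq]
        exact mem_union_right _ (hsupF ▸ mem_union_right _ (Finset.mem_sup.mpr ⟨C₀, hC₀, hy⟩))
      exact (Finset.disjoint_left.mp hC₀dis) hy hyA
    -- A ∈ N : build the antichain insert A Fout
    have hAN : A ∈ N := (mem_union.mp hA).resolve_right hAbmax
    have hAFout : A ∉ Fout := by
      intro h
      have := (mem_filter.mp h).2
      obtain ⟨y, hy⟩ := NpA_nonempty S hB hN hA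
      exact (Finset.disjoint_left.mp this) hy hy
    have hF'sub : insert A Fout ⊆ N := by
      intro C hC
      rcases mem_insert.mp hC with rfl | hC
      · exact hAN
      · exact hF₀N ((filter_subset _ _) hC)
    have hF'card : 2 ≤ (insert A Fout).card := by
      rw [Finset.card_insert_of_notMem hAFout]
      have : 0 < Fout.card := Finset.card_pos.mpr ⟨C₀, mem_filter.mpr ⟨hC₀, hC₀dis⟩⟩
      omega
    have hF'anti : ∀ I ∈ insert A Fout, ∀ J ∈ insert A Fout, I ≠ J → ¬ I ⊆ J := by
      intro I hI J hJ hIJ hsub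
      rcases mem_insert.mp hI with rfl | hI <;> rcases mem_insert.mp hJ with rfl | hJ
      · exact hIJ rfl
      · -- I = A ⊆ J with J disjoint from A
        obtain ⟨y, hy⟩ := NpA_nonempty S hB hN hA
        exact (Finset.disjoint_left.mp (mem_filter.mp hJ).2) (hsub hy) hy
      · obtain ⟨y, hy⟩ := (hB.1 _ (mem_sdiff.mp (hN.1 (hF₀N ((filter_subset _ _) hI)))).1).1
        exact (Finset.disjoint_left.mp (mem_filter.mp hI).2) hy (hsub hy)
      · exact hanti I (Finset.mem_of_mem_erase ((filter_subset _ _) hI)) J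
          (Finset.mem_of_mem_erase ((filter_subset _ _) hJ)) hIJ hsub
    have hF'sup : (insert A Fout).sup id = A ∪ F.sup id := by
      rw [sup_insert, hWeq]
      rfl
    exact hN.2 _ hF'sub hF'card hF'anti (hF'sup ▸ hWB)


theorem maxNested_lam_card (S : Finset V) {B N : Finset (Finset V)} (hB : IsBuilding S B)
    (hN : IsMaxNested B N) {A : Finset V} (hA : A ∈ NpA B N) : (lamA B N A).card = 1 := by
  classical
  obtain ⟨x, hx⟩ := lam_nonempty S hB hN.1 hA
  rcases Finset.eq_singleton_or_nontrivial hx with h | h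
  · rw [h, card_singleton]
  obtain ⟨a, ha, b, hb, hab⟩ := h
  simp only [Finset.mem_coe] at ha hb
  obtain ⟨hGnp, hins⟩ := ext_lemma S hB hN.1 hA ha hb hab
  have hGN : supT B A a b ∉ N := fun h => hGnp (mem_NpA_left h)
  have heq := hN.2 _ hins (Finset.subset_insert _ _)
  have : supT B A a b ∈ N := by rw [heq]; exact Finset.mem_insert_self _ _
  exact absurd this hGN

theorem maxNested_card (S : Finset V) {B N : Finset (Finset V)} (hB : IsBuilding S B)
    (hN : IsMaxNested B N) : S.card = N.card + (buildingMax B).card := by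
  classical
  rw [← card_NpA hN.1, ← sum_lam_card S hB hN.1]
  rw [Finset.card_eq_sum_ones (NpA B N)]
  apply Finset.sum_congr rfl
  intro A hA
  exact maxNested_lam_card S hB hN hA

/-- existence and minimality of the parent of `F ∈ N`. -/
theorem exists_parent (S : Finset V) {B N : Finset (Finset V)} (hB : IsBuilding S B)
    (hN : IsNested B N) {F : Finset V} (hF : F ∈ N) :
    ∃ p ∈ NpA B N, F ⊂ p ∧ ∀ A ∈ NpA B N, F ⊂ A → p ⊆ A := by
  classical
  obtain ⟨M, hM, hFM⟩ := exists_bmax_superset (mem_sdiff.mp (hN.1 hF)).1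
  have hFne : F ≠ M := fun h => nested_not_bmax hN hF (h ▸ hM)
  have hne : ((NpA B N).filter (fun A => F ⊂ A)).Nonempty :=
    ⟨M, mem_filter.mpr ⟨mem_union.mpr (Or.inr hM), ssubset_of_subset_of_ne hFM hFne⟩⟩
  obtain ⟨p, hp, hmin⟩ := Finset.exists_minimal hne
  rw [mem_filter] at hp
  refine ⟨p, hp.1, hp.2, fun A hA hFA => ?_⟩
  have hFneF : F.Nonempty := (hB.1 _ (mem_sdiff.mp (hN.1 hF)).1).1
  have hmeet : (p ∩ A).Nonempty := by
    obtain ⟨y, hy⟩ := hFneF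
    exact ⟨y, mem_inter.mpr ⟨hp.2.subset hy, hFA.subset hy⟩⟩
  rcases forest S hB hN hp.1 hA hmeet with hs | hs
  · exact hs
  · rcases eq_or_ne A p with rfl | hne2
    · exact subset_rfl
    · exact absurd (ssubset_of_subset_of_ne hs hne2)
        (fun h => (ssubset_irrefl A) (h.trans_subset (hmin (mem_filter.mpr ⟨hA, hFA⟩) h.subset)))

theorem NpA_erase (B N : Finset (Finset V)) (hN : IsNested B N) {F : Finset V} (hF : F ∈ N) :
    NpA B (N.erase F) = (NpA B N).erase F := by
  classical
  ext C
  simp only [NpA, mem_union, Finset.mem_erase]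
  constructor
  · rintro (⟨hne, h⟩ | h)
    · exact ⟨hne, Or.inl h⟩
    · exact ⟨fun e => nested_not_bmax hN hF (e ▸ h), Or.inr h⟩
  · rintro ⟨hne, h | h⟩
    · exact Or.inl ⟨hne, h⟩
    · exact Or.inr h

/-- λ-transfer: with `p` the parent of `F`, both `lamA B N F` and `lamA B N p` are contained
in `lamA B (N.erase F) p`. -/
theorem lam_transfer (S : Finset V) {B N : Finset (Finset V)} (hB : IsBuilding S B)
    (hN : IsNested B N) {F p : Finset V} (hF : F ∈ N) (hp : p ∈ NpA B N) (hFp : F ⊂ p)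
    (hmin : ∀ A ∈ NpA B N, F ⊂ A → p ⊆ A) :
    lamA B N F ⊆ lamA B (N.erase F) p ∧ lamA B N p ⊆ lamA B (N.erase F) p := by
  classical
  constructor
  · intro x hx
    rw [mem_lam_iff] at hx ⊢
    refine ⟨hFp.subset hx.1, fun C hC hCp hxC => ?_⟩
    rw [NpA_erase B N hN hF, Finset.mem_erase] at hC
    have hmeet : (C ∩ F).Nonempty := ⟨x, mem_inter.mpr ⟨hxC, hx.1⟩⟩
    rcases forest S hB hN hC.2 (mem_NpA_left hF) hmeet with hs | hs
    · exact hx.2 C hC.2 (ssubset_of_subset_of_ne hs hC.1) hxC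
    · have h2 : F ⊂ C := ssubset_of_subset_of_ne hs (Ne.symm hC.1)
      have h3 : C ⊂ C := hCp.trans_subset (hmin C hC.2 h2)
      exact absurd h3 (ssubset_irrefl C)
  · intro x hx
    rw [mem_lam_iff] at hx ⊢
    refine ⟨hx.1, fun C hC hCp hxC => ?_⟩
    rw [NpA_erase B N hN hF, Finset.mem_erase] at hC
    exact hx.2 C hC.2 hCp hxC


/-- directional core of the uniqueness lemma. -/
theorem unique_core (S : Finset V) {B N' : Finset (Finset V)} (hB : IsBuilding S B)
    (hN' : IsMaxNested B N') {G : Finset V} (hG : G ∈ N') {p : Finset V}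
    (hpN' : p ∈ NpA B N') {a b : V} (hab : a ≠ b)
    (hap : a ∈ p) (hbp : b ∈ p)
    (ha2 : ∀ C ∈ NpA B N', C ≠ G → C ⊂ p → a ∉ C)
    (hb2 : ∀ C ∈ NpA B N', C ≠ G → C ⊂ p → b ∉ C)
    (haG : a ∈ G) (hbG : b ∉ G) (hGp : G ⊂ p) :
    G = supT B p a b := by
  classical
  have hN'nested := hN'.1
  have hGB : G ∈ B := (mem_sdiff.mp (hN'nested.1 hG)).1
  have hpB : p ∈ B := NpA_subset_B hN'nested hpN'
  obtain ⟨hTB, haT, hTsub, hTmax⟩ := supT_spec S hB hpB hap hab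
  have hGsubp : G ⊆ p \ {b} := fun x hx => mem_sdiff.mpr ⟨hGp.subset hx, by
    simp only [mem_singleton]; rintro rfl; exact hbG hx⟩
  have hGT : G ⊆ supT B p a b := hTmax _ hGB haG hGsubp
  -- lamA B N' p = {b}
  have hblam : b ∈ lamA B N' p := by
    rw [mem_lam_iff]
    refine ⟨hbp, fun C hC hCp hxC => ?_⟩
    rcases eq_or_ne C G with rfl | hne
    · exact hbG hxC
    · exact hb2 C hC hne hCp hxC
  have hlam_eq : lamA B N' p = {b} := by
    obtain ⟨c, hc⟩ := Finset.card_eq_one.mp (maxNested_lam_card S hB hN' hpN')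
    rw [hc] at hblam ⊢
    rw [mem_singleton.mp hblam]
  have hstep : ∀ x ∈ p, x ≠ b → ∃ C ∈ NpA B N', C ⊂ p ∧ x ∈ C := by
    intro x hx hxb
    by_contra hc
    push_neg at hc
    have : x ∈ lamA B N' p := mem_lam_iff.mpr
      ⟨hx, fun C hC hCp hxC => absurd hxC (hc C hC hCp)⟩
    rw [hlam_eq, mem_singleton] at this
    exact hxb this
  -- every J in the defining family of supT is inside G
  have hmain : ∀ J ∈ B, a ∈ J → J ⊆ p \ {b} → J ⊆ G := by
    intro J hJB haJ hJsub
    set AJ := (NpA B N').filter (fun C => C ⊂ p ∧ (C ∩ J).Nonempty) with hAJ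
    have hGAJ : G ∈ AJ := mem_filter.mpr ⟨mem_NpA_left hG, hGp,
      ⟨a, mem_inter.mpr ⟨haG, haJ⟩⟩⟩
    have hGmaxAJ : ∀ C ∈ AJ, G ⊆ C → G = C := by
      intro C hC hsub
      by_contra hne
      rw [mem_filter] at hC
      exact ha2 C hC.1 (Ne.symm hne) hC.2.1 (hsub haG)
    set F' := AJ.filter (fun C => ∀ C' ∈ AJ, C ⊆ C' → C = C') with hF'
    have hGF' : G ∈ F' := mem_filter.mpr ⟨hGAJ, hGmaxAJ⟩
    have hbelow : ∀ C ∈ AJ, ∃ m ∈ F', C ⊆ m := by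
      intro C hC
      obtain ⟨m, hm, hCm, hmax⟩ := exists_max_above AJ hC
      exact ⟨m, mem_filter.mpr ⟨hm, hmax⟩, hCm⟩
    have hJsup : J ⊆ F'.sup id := by
      intro x hxJ
      have hxpb := hJsub hxJ
      rw [mem_sdiff, mem_singleton] at hxpb
      obtain ⟨C, hC, hCp, hxC⟩ := hstep x hxpb.1 hxpb.2
      obtain ⟨m, hm, hCm⟩ := hbelow C (mem_filter.mpr ⟨hC, hCp, ⟨x, mem_inter.mpr ⟨hxC, hxJ⟩⟩⟩)
      exact Finset.mem_sup.mpr ⟨m, hm, hCm hxC⟩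
    by_cases hcase : ∀ C ∈ F', C = G
    · -- all maximal elements are G
      intro x hxJ
      obtain ⟨m, hm, hxm⟩ := Finset.mem_sup.mp (hJsup hxJ)
      exact (hcase m hm) ▸ hxm
    · push_neg at hcase
      obtain ⟨C₀, hC₀, hC₀ne⟩ := hcase
      exfalso
      have hF'N : F' ⊆ N' := by
        intro C hC
        have hCAJ : C ∈ AJ := (filter_subset _ _) hC
        rw [mem_filter] at hCAJ
        rcases mem_union.mp hCAJ.1 with h | h
        · exact h
        · exact absurd h (strict_sub_not_bmax hpB hCAJ.2.1)
      have hcard : 2 ≤ F'.card := by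
        rw [show (2:ℕ) = 1 + 1 from rfl, Nat.add_comm, Nat.succ_le_iff, Finset.one_lt_card]
        exact ⟨C₀, hC₀, G, hGF', hC₀ne⟩
      have hanti : ∀ I ∈ F', ∀ J' ∈ F', I ≠ J' → ¬ I ⊆ J' := by
        intro I hI J' hJ' hIJ hsub
        rw [hF', mem_filter] at hI
        exact hIJ (hI.2 _ ((filter_subset _ _) hJ') hsub)
      have hsupB : F'.sup id ∈ B := by
        have h1 : J ∪ F'.sup id ∈ B := by
          apply union_sup_mem S hB hJB
          · exact (filter_subset _ _).trans ((filter_subset _ _).trans (NpA_subset_B hN'nested))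
          · intro C hC
            exact (mem_filter.mp ((filter_subset _ _) hC)).2.2
        rwa [Finset.union_eq_right.mpr hJsup] at h1
      exact hN'nested.2 _ hF'N hcard hanti hsupB
  -- conclude
  apply subset_antisymm hGT
  intro x hx
  obtain ⟨J, hJ, hxJ⟩ := Finset.mem_sup.mp hx
  rw [mem_filter] at hJ
  exact hmain J hJ.1 hJ.2.1 hJ.2.2 hxJ

/-- the uniqueness lemma: the set exchanged into a maximal nested set at `p` is
one of the two canonical ones. -/
theorem unique_exchange (S : Finset V) {B N' : Finset (Finset V)} (hB : IsBuilding S B)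
    (hN' : IsMaxNested B N') {G : Finset V} (hG : G ∈ N') {p : Finset V}
    (hp : p ∈ NpA B (N'.erase G)) {a b : V} (hab : a ≠ b)
    (ha : a ∈ lamA B (N'.erase G) p) (hb : b ∈ lamA B (N'.erase G) p) :
    (a ∈ G ∧ G = supT B p a b) ∨ (b ∈ G ∧ G = supT B p b a) := by
  classical
  have hN'nested := hN'.1
  rw [NpA_erase B N' hN'nested hG, Finset.mem_erase] at hp
  rw [mem_lam_iff] at ha hb
  have ha2 : ∀ C ∈ NpA B N', C ≠ G → C ⊂ p → a ∉ C := by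
    intro C hC hne hCp
    apply ha.2 C _ hCp
    rw [NpA_erase B N' hN'nested hG, Finset.mem_erase]
    exact ⟨hne, hC⟩
  have hb2 : ∀ C ∈ NpA B N', C ≠ G → C ⊂ p → b ∉ C := by
    intro C hC hne hCp
    apply hb.2 C _ hCp
    rw [NpA_erase B N' hN'nested hG, Finset.mem_erase]
    exact ⟨hne, hC⟩
  have hcard1 := maxNested_lam_card S hB hN' hp.2
  -- not both a,b outside G
  have hor : a ∈ G ∨ b ∈ G := by
    by_contra hc
    push_neg at hc
    have hal : a ∈ lamA B N' p := mem_lam_iff.mpr ⟨ha.1, fun C hC hCp hxC => by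
      rcases eq_or_ne C G with rfl | hne
      · exact hc.1 hxC
      · exact ha2 C hC hne hCp hxC⟩
    have hbl : b ∈ lamA B N' p := mem_lam_iff.mpr ⟨hb.1, fun C hC hCp hxC => by
      rcases eq_or_ne C G with rfl | hne
      · exact hc.2 hxC
      · exact hb2 C hC hne hCp hxC⟩
    have : 1 < (lamA B N' p).card := Finset.one_lt_card.mpr ⟨a, hal, b, hbl, hab⟩
    omega
  -- G ⊂ p
  have hGp : G ⊂ p := by
    have hmeet : (G ∩ p).Nonempty := by
      rcases hor with h | h
      · exact ⟨a, mem_inter.mpr ⟨h, ha.1⟩⟩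
      · exact ⟨b, mem_inter.mpr ⟨h, hb.1⟩⟩
    rcases forest S hB hN'nested (mem_NpA_left hG) hp.2 hmeet with hs | hs
    · exact ssubset_of_subset_of_ne hs (fun h => hp.1 h.symm)
    · exfalso
      have hpG : p ⊂ G := ssubset_of_subset_of_ne hs (fun h => hp.1 h)
      have hal : a ∈ lamA B N' p := mem_lam_iff.mpr ⟨ha.1, fun C hC hCp hxC =>
        ha2 C hC (fun e => (ssubset_irrefl p) (hpG.trans (e ▸ hCp))) hCp hxC⟩
      have hbl : b ∈ lamA B N' p := mem_lam_iff.mpr ⟨hb.1, fun C hC hCp hxC =>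
        hb2 C hC (fun e => (ssubset_irrefl p) (hpG.trans (e ▸ hCp))) hCp hxC⟩
      have : 1 < (lamA B N' p).card := Finset.one_lt_card.mpr ⟨a, hal, b, hbl, hab⟩
      omega
  -- not both a,b inside G
  have hnand : ¬ (a ∈ G ∧ b ∈ G) := by
    rintro ⟨haG, hbG⟩
    have hlamG := maxNested_lam_card S hB hN' (mem_NpA_left hG)
    have hal : a ∈ lamA B N' G := mem_lam_iff.mpr ⟨haG, fun C hC hCG hxC =>
      ha2 C hC (fun e => (ssubset_irrefl G) (e ▸ hCG)) (hCG.trans hGp) hxC⟩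
    have hbl : b ∈ lamA B N' G := mem_lam_iff.mpr ⟨hbG, fun C hC hCG hxC =>
      hb2 C hC (fun e => (ssubset_irrefl G) (e ▸ hCG)) (hCG.trans hGp) hxC⟩
    have : 1 < (lamA B N' G).card := Finset.one_lt_card.mpr ⟨a, hal, b, hbl, hab⟩
    omega
  rcases hor with haG | hbG
  · have hbG : b ∉ G := fun h => hnand ⟨haG, h⟩
    exact Or.inl ⟨haG, unique_core S hB hN' hG hp.2 hab ha.1 hb.1 ha2 hb2 haG hbG hGp⟩
  · have haG : a ∉ G := fun h => hnand ⟨h, hbG⟩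
    exact Or.inr ⟨hbG, unique_core S hB hN' hG hp.2 hab.symm hb.1 ha.1 hb2 ha2 hbG haG hGp⟩


theorem not_mem_of_lam_parent (S : Finset V) {B N : Finset (Finset V)} (hB : IsBuilding S B)
    (hN : IsNested B N) {F p : Finset V} (hF : F ∈ N) (hFp : F ⊂ p) {k : V}
    (hk : k ∈ lamA B N p) : k ∉ F :=
  (mem_lam_iff.mp hk).2 F (mem_NpA_left hF) hFp

theorem neighbor_exists (S : Finset V) {B N : Finset (Finset V)} (hB : IsBuilding S B)
    (hN : IsMaxNested B N) {F : Finset V} (hF : F ∈ N) :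
    ∃ N'', IsMaxNested B N'' ∧ N \ N'' = {F} ∧ (N ∩ N'').card + 1 = N.card := by
  classical
  obtain ⟨p, hp, hFp, hmin⟩ := exists_parent S hB hN.1 hF
  obtain ⟨i, hi⟩ := lam_nonempty S hB hN.1 (mem_NpA_left hF)
  obtain ⟨k, hk⟩ := lam_nonempty S hB hN.1 hp
  have hiF : i ∈ F := lam_subset hi
  have hkF : k ∉ F := not_mem_of_lam_parent S hB hN.1 hF hFp hk
  have hik : k ≠ i := fun h => hkF (h ▸ hiF)
  have hN₀ : IsNested B (N.erase F) := nested_of_subset hN.1 (Finset.erase_subset _ _)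
  have hpN₀ : p ∈ NpA B (N.erase F) := by
    rw [NpA_erase B N hN.1 hF, Finset.mem_erase]
    exact ⟨fun h => (ssubset_irrefl F) (h ▸ hFp), hp⟩
  obtain ⟨htr1, htr2⟩ := lam_transfer S hB hN.1 hF hp hFp hmin
  have hi' : i ∈ lamA B (N.erase F) p := htr1 hi
  have hk' : k ∈ lamA B (N.erase F) p := htr2 hk
  obtain ⟨hGnp, hGnested⟩ := ext_lemma S hB hN₀ hpN₀ hk' hi' hik
  set G := supT B p k i with hGdef
  have hGsub : G ⊆ p \ {i} :=
    (supT_spec S hB (NpA_subset_B hN.1 hp) (lam_subset hk) hik).2.2.1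
  have hGF : G ≠ F := by
    intro h
    have : i ∈ G := h ▸ hiF
    exact (mem_sdiff.mp (hGsub this)).2 (mem_singleton_self i)
  have hGN : G ∉ N := by
    intro h
    apply hGnp
    rw [NpA_erase B N hN.1 hF]
    exact Finset.mem_erase.mpr ⟨hGF, mem_union_left _ h⟩
  have hGN₀ : G ∉ N.erase F := fun h => hGN (Finset.mem_of_mem_erase h)
  have hcard : (insert G (N.erase F)).card = N.card := by
    rw [Finset.card_insert_of_notMem hGN₀, Finset.card_erase_of_mem hF]
    have : 0 < N.card := Finset.card_pos.mpr ⟨F, hF⟩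
    omega
  have hmax : IsMaxNested B (insert G (N.erase F)) := by
    apply max_of_card S hB hGnested
    rw [hcard]
    exact maxNested_card S hB hN
  have hFnotin : F ∉ insert G (N.erase F) := by
    rw [mem_insert]
    rintro (h | h)
    · exact hGF h.symm
    · exact (Finset.notMem_erase F N) h
  have hdiff : N \ insert G (N.erase F) = {F} := by
    ext x
    rw [mem_sdiff, mem_singleton]
    constructor
    · rintro ⟨hxN, hxn⟩
      by_contra hne
      exact hxn (mem_insert.mpr (Or.inr (Finset.mem_erase.mpr ⟨hne, hxN⟩)))
    · rintro rfl
      exact ⟨hF, hFnotin⟩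
  have hinter : N ∩ insert G (N.erase F) = N.erase F := by
    ext x
    constructor
    · intro hx
      obtain ⟨hxN, hx2⟩ := mem_inter.mp hx
      rcases mem_insert.mp hx2 with rfl | hx3
      · exact absurd hxN hGN
      · exact hx3
    · intro hx
      exact mem_inter.mpr ⟨Finset.mem_of_mem_erase hx, mem_insert.mpr (Or.inr hx)⟩
  refine ⟨insert G (N.erase F), hmax, hdiff, ?_⟩
  rw [hinter, Finset.card_erase_of_mem hF]
  have : 0 < N.card := Finset.card_pos.mpr ⟨F, hF⟩
  omega

theorem neighbor_unique (S : Finset V) {B N : Finset (Finset V)} (hB : IsBuilding S B)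
    (hN : IsMaxNested B N) {F : Finset V} (hF : F ∈ N) {N₁ N₂ : Finset (Finset V)}
    (h₁ : IsMaxNested B N₁) (h₂ : IsMaxNested B N₂)
    (hd₁ : N \ N₁ = {F}) (hd₂ : N \ N₂ = {F}) : N₁ = N₂ := by
  classical
  obtain ⟨p, hp, hFp, hmin⟩ := exists_parent S hB hN.1 hF
  obtain ⟨i, hi⟩ := lam_nonempty S hB hN.1 (mem_NpA_left hF)
  obtain ⟨k, hk⟩ := lam_nonempty S hB hN.1 hp
  have hiF : i ∈ F := lam_subset hi
  have hkF : k ∉ F := not_mem_of_lam_parent S hB hN.1 hF hFp hk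
  have hik : i ≠ k := fun h => hkF (h ▸ hiF)
  have hpN₀ : p ∈ NpA B (N.erase F) := by
    rw [NpA_erase B N hN.1 hF, Finset.mem_erase]
    exact ⟨fun h => (ssubset_irrefl F) (h ▸ hFp), hp⟩
  obtain ⟨htr1, htr2⟩ := lam_transfer S hB hN.1 hF hp hFp hmin
  have hi' : i ∈ lamA B (N.erase F) p := htr1 hi
  have hk' : k ∈ lamA B (N.erase F) p := htr2 hk
  -- F itself is supT B p i k
  have hNF : N.erase F = N.erase F := rfl
  have hFeq : F = supT B p i k := by
    have := unique_exchange S hB hN hF hpN₀ hik hi' hk'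
    rcases this with ⟨-, h⟩ | ⟨hkG, -⟩
    · exact h
    · exact absurd hkG hkF
  -- any maximal nested M with N \ M = {F} has the canonical form
  have form : ∀ M, IsMaxNested B M → N \ M = {F} → M = insert (supT B p k i) (N.erase F) := by
    intro M hM hd
    have hFM : F ∉ M := by
      have : F ∈ N \ M := hd ▸ mem_singleton_self F
      exact (mem_sdiff.mp this).2
    have hinter : N ∩ M = N.erase F := by
      ext x
      rw [mem_inter, Finset.mem_erase]
      constructor
      · rintro ⟨hxN, hxM⟩
        refine ⟨?_, hxN⟩
        rintro rfl
        exact hFM hxM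
      · rintro ⟨hne, hxN⟩
        refine ⟨hxN, ?_⟩
        by_contra hxM
        exact hne (mem_singleton.mp (hd ▸ mem_sdiff.mpr ⟨hxN, hxM⟩))
    have hcards : S.card = N.card + (buildingMax B).card := maxNested_card S hB hN
    have hcardM : S.card = M.card + (buildingMax B).card := maxNested_card S hB hM
    have hNpos : 0 < N.card := Finset.card_pos.mpr ⟨F, hF⟩
    have hcard2 : (M ∩ N).card = N.card - 1 := by
      rw [inter_comm, hinter, Finset.card_erase_of_mem hF]
    have hcard3 : (M \ N).card = 1 := by
      have h4 := Finset.card_inter_add_card_sdiff M N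
      omega
    obtain ⟨G, hG⟩ := Finset.card_eq_one.mp hcard3
    have hGM : G ∈ M := (Finset.sdiff_subset) (hG ▸ mem_singleton_self G)
    have hGN : G ∉ N := (mem_sdiff.mp (hG ▸ mem_singleton_self G)).2
    have hMeq : M = insert G (N.erase F) := by
      ext x
      rw [mem_insert, Finset.mem_erase]
      constructor
      · intro hxM
        by_cases hxN : x ∈ N
        · refine Or.inr ⟨?_, hxN⟩
          rintro rfl
          exact hFM hxM
        · exact Or.inl (mem_singleton.mp (hG ▸ mem_sdiff.mpr ⟨hxM, hxN⟩))
      · rintro (rfl | ⟨hne, hxN⟩)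
        · exact hGM
        · have : x ∈ N ∩ M := by
            rw [hinter, Finset.mem_erase]; exact ⟨hne, hxN⟩
          exact (mem_inter.mp this).2
    have hGN₀ : G ∉ N.erase F := fun h => hGN (Finset.mem_of_mem_erase h)
    have hMer : M.erase G = N.erase F := by
      rw [hMeq, Finset.erase_insert hGN₀]
    have hpM : p ∈ NpA B (M.erase G) := hMer ▸ hpN₀
    have hiM : i ∈ lamA B (M.erase G) p := hMer ▸ hi'
    have hkM : k ∈ lamA B (M.erase G) p := hMer ▸ hk'
    have := unique_exchange S hB hM hGM hpM hik hiM hkM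
    rcases this with ⟨-, hGeq⟩ | ⟨-, hGeq⟩
    · exact absurd (hGeq ▸ hFeq ▸ hF) hGN
    · rw [hMeq, hGeq]
  rw [form N₁ h₁ hd₁, form N₂ h₂ hd₂]

end NestedAux

open scoped Classical in
theorem dual_graph_regular (S : Finset V) (B : Finset (Finset V))
    (hB : IsBuilding S B) (N : Finset (Finset V)) (hN : IsMaxNested B N) :
    ((B \ buildingMax B).powerset.filter
        (fun N' => IsMaxNested B N' ∧ (N ∩ N').card + 1 = N.card)).card =
      S.card - (buildingMax B).card := by
  classical
  have hrk : S.card = N.card + (buildingMax B).card := NestedAux.maxNested_card S hB hN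
  have hgoal : S.card - (buildingMax B).card = N.card := by omega
  rw [hgoal]
  apply Eq.symm
  apply Finset.card_bij (fun F hF => Classical.choose (NestedAux.neighbor_exists S hB hN hF))
  · -- membership
    intro F hF
    obtain ⟨hmax, hdiff, hcard⟩ := Classical.choose_spec (NestedAux.neighbor_exists S hB hN hF)
    rw [mem_filter, mem_powerset]
    exact ⟨hmax.1.1, hmax, hcard⟩
  · -- injectivity
    intro F₁ h₁ F₂ h₂ heq
    obtain ⟨hmax₁, hdiff₁, -⟩ := Classical.choose_spec (NestedAux.neighbor_exists S hB hN h₁)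
    obtain ⟨hmax₂, hdiff₂, -⟩ := Classical.choose_spec (NestedAux.neighbor_exists S hB hN h₂)
    have : ({F₁} : Finset (Finset V)) = {F₂} := by
      rw [← hdiff₁, ← hdiff₂, heq]
    exact Finset.singleton_inj.mp this
  · -- surjectivity
    intro N' hN'
    rw [mem_filter, mem_powerset] at hN'
    obtain ⟨hsub, hmax', hcard'⟩ := hN'
    have h4 := Finset.card_inter_add_card_sdiff N N'
    have hcard1 : (N \ N').card = 1 := by omega
    obtain ⟨F, hFeq⟩ := Finset.card_eq_one.mp hcard1
    have hF : F ∈ N := (Finset.sdiff_subset) (hFeq ▸ Finset.mem_singleton_self F)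
    refine ⟨F, hF, ?_⟩
    obtain ⟨hmax, hdiff, -⟩ := Classical.choose_spec (NestedAux.neighbor_exists S hB hN hF)
    exact NestedAux.neighbor_unique S hB hN hF hmax hmax' hdiff hFeq
end

section
/- If N_1, N_2 are maximal nested sets with N_1 ∩ N_2 = N_1 − {I_1} = N_2 − {I_2} and I_1 ≠ I_2, then neither of I_1, I_2 contains the other. -/
open Finset

variable {V : Type*} [Fintype V] [DecidableEq V]

lemma aux_incomp {B N₁ N₂ : Finset (Finset V)}
    (hN₁ : IsMaxNested B N₁) (hN₂ : IsNested B N₂)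
    {I₁ I₂ : Finset V} (hI₁ : I₁ ∈ N₁) (hI₂ : I₂ ∈ N₂) (hne : I₁ ≠ I₂)
    (h₁ : N₁ ∩ N₂ = N₁.erase I₁) (h₂ : N₁ ∩ N₂ = N₂.erase I₂)
    (hsub : I₁ ⊆ I₂) : False := by
  have hI₂n : I₂ ∉ N₁ := by
    intro h
    have : I₂ ∈ N₁ ∩ N₂ := Finset.mem_inter.2 ⟨h, hI₂⟩
    rw [h₂] at this
    exact (Finset.mem_erase.1 this).1 rfl
  have hM : IsNested B (insert I₂ N₁) := by
    constructor
    · exact Finset.insert_subset (hN₂.1 hI₂) hN₁.1.1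
    · intro F hF hcard hanti
      by_cases hI₂F : I₂ ∈ F
      · have hFN₂ : F ⊆ N₂ := by
          intro J hJ
          by_cases hJ₂ : J = I₂
          · exact hJ₂ ▸ hI₂
          · have hJN₁ : J ∈ N₁ := by
              rcases Finset.mem_insert.1 (hF hJ) with h | h
              · exact absurd h hJ₂
              · exact h
            by_cases hJ₁ : J = I₁
            · exact absurd hsub (hJ₁ ▸ hanti J hJ I₂ hI₂F (hJ₁ ▸ hne))
            · have : J ∈ N₁ ∩ N₂ := by
                rw [h₁]; exact Finset.mem_erase.2 ⟨hJ₁, hJN₁⟩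
              exact (Finset.mem_inter.1 this).2
        exact hN₂.2 F hFN₂ hcard hanti
      · have hFN₁ : F ⊆ N₁ := by
          intro J hJ
          rcases Finset.mem_insert.1 (hF hJ) with h | h
          · exact absurd (h ▸ hJ) hI₂F
          · exact h
        exact hN₁.1.2 F hFN₁ hcard hanti
  have := hN₁.2 _ hM (Finset.subset_insert _ _)
  exact hI₂n (this ▸ Finset.mem_insert_self I₂ N₁)

theorem adjacent_incomparable (S : Finset V) (B : Finset (Finset V))
    (hB : IsBuilding S B) (N₁ N₂ : Finset (Finset V))
    (hN₁ : IsMaxNested B N₁) (hN₂ : IsMaxNested B N₂)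
    (I₁ I₂ : Finset V) (hI₁ : I₁ ∈ N₁) (hI₂ : I₂ ∈ N₂) (hne : I₁ ≠ I₂)
    (h₁ : N₁ ∩ N₂ = N₁.erase I₁) (h₂ : N₁ ∩ N₂ = N₂.erase I₂) :
    ¬ I₁ ⊆ I₂ ∧ ¬ I₂ ⊆ I₁ := by
  constructor
  · intro hsub
    exact aux_incomp hN₁ hN₂.1 hI₁ hI₂ hne h₁ h₂ hsub
  · intro hsub
    exact aux_incomp hN₂ hN₁.1 hI₂ hI₁ hne.symm
      (by rw [Finset.inter_comm]; exact h₂) (by rw [Finset.inter_comm]; exact h₁) hsub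
end

section
/- If N_1, N_2 are adjacent maximal nested sets with N_1 − {I_1} = N_2 − {I_2} = N_1 ∩ N_2 and I_1 ∩ I_2 ≠ ∅, then every maximal element of the restricted building B|_{I_1 ∩ I_2} belongs to N_1 ∩ N_2. -/
open Finset

variable {V : Type*} [Fintype V] [DecidableEq V]

lemma mem_of_nested {B N : Finset (Finset V)} (hN : IsNested B N) {I : Finset V} (hI : I ∈ N) :
    I ∈ B := (Finset.mem_sdiff.mp (hN.1 hI)).1

lemma nonempty_of_mem {S : Finset V} {B : Finset (Finset V)} (hB : IsBuilding S B)
    {I : Finset V} (hI : I ∈ B) : I.Nonempty := (hB.1 I hI).1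

lemma nested_pair {S : Finset V} {B N : Finset (Finset V)} (hB : IsBuilding S B)
    (hN : IsNested B N) {I J : Finset V} (hI : I ∈ N) (hJ : J ∈ N)
    (hint : (I ∩ J).Nonempty) : I ⊆ J ∨ J ⊆ I := by
  by_contra h
  push_neg at h
  have hne : I ≠ J := by rintro rfl; exact h.1 Finset.Subset.rfl
  have hcard : 2 ≤ ({I, J} : Finset (Finset V)).card := by
    rw [card_insert_of_notMem (by simpa using hne), card_singleton]
  have hsub : ({I, J} : Finset (Finset V)) ⊆ N := by
    intro x hx
    simp only [mem_insert, mem_singleton] at hx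
    rcases hx with rfl | rfl
    · exact hI
    · exact hJ
  have hanti : ∀ x ∈ ({I, J} : Finset (Finset V)), ∀ y ∈ ({I, J} : Finset (Finset V)),
      x ≠ y → ¬ x ⊆ y := by
    intro x hx y hy hxy
    simp only [mem_insert, mem_singleton] at hx hy
    rcases hx with rfl | rfl <;> rcases hy with rfl | rfl
    · exact absurd rfl hxy
    · exact h.1
    · exact h.2
    · exact absurd rfl hxy
  have hsupeq : ({I, J} : Finset (Finset V)).sup id = I ∪ J := by
    simp [Finset.sup_insert, Finset.sup_singleton, Finset.sup_eq_union]
  exact hN.2 {I, J} hsub hcard hanti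
    (hsupeq ▸ hB.2.1 I (mem_of_nested hN hI) J (mem_of_nested hN hJ) hint)

/-- key absorption argument -/
lemma antichain_absorb {S : Finset V} {B : Finset (Finset V)} (hB : IsBuilding S B)
    {N : Finset (Finset V)} (hN : IsNested B N) {I : Finset V} (hI : I ∈ N)
    {F' : Finset (Finset V)} (hF'N : F' ⊆ N)
    (hanti : ∀ x ∈ F', ∀ y ∈ F', x ≠ y → ¬ x ⊆ y)
    {K₀ : Finset V} (hK₀ : K₀ ∈ F') (hK₀I : K₀ ∩ I = ∅)
    (hsup : (insert I (F'.filter fun K => K ∩ I = ∅)).sup id ∈ B) : False := by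
  set G := insert I (F'.filter fun K => K ∩ I = ∅) with hG
  have hIne : I.Nonempty := nonempty_of_mem hB (mem_of_nested hN hI)
  have hIfil : I ∉ (F'.filter fun K => K ∩ I = ∅) := by
    intro h
    have := (mem_filter.mp h).2
    rw [inter_self] at this
    exact hIne.ne_empty this
  have hK₀fil : K₀ ∈ (F'.filter fun K => K ∩ I = ∅) := mem_filter.mpr ⟨hK₀, hK₀I⟩
  have hcard : 2 ≤ G.card := by
    rw [hG, card_insert_of_notMem hIfil]
    have : 1 ≤ (F'.filter fun K => K ∩ I = ∅).card := card_pos.mpr ⟨K₀, hK₀fil⟩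
    omega
  have hGsub : G ⊆ N := by
    rw [hG]
    exact insert_subset hI ((filter_subset _ _).trans hF'N)
  have hGanti : ∀ x ∈ G, ∀ y ∈ G, x ≠ y → ¬ x ⊆ y := by
    intro x hx y hy hxy
    rw [hG] at hx hy
    rcases mem_insert.mp hx with rfl | hx <;> rcases mem_insert.mp hy with rfl | hy
    · exact absurd rfl hxy
    · intro hsub
      have hy' := (mem_filter.mp hy).2
      obtain ⟨a, ha⟩ := hIne
      have : a ∈ y ∩ x := mem_inter.mpr ⟨hsub ha, ha⟩
      rw [hy'] at this
      exact notMem_empty a this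
    · intro hsub
      have hx' := (mem_filter.mp hx).2
      obtain ⟨a, ha⟩ := nonempty_of_mem hB (mem_of_nested hN (hF'N (mem_filter.mp hx).1))
      have : a ∈ x ∩ y := mem_inter.mpr ⟨ha, hsub ha⟩
      rw [hx'] at this
      exact notMem_empty a this
    · exact hanti x (mem_filter.mp hx).1 y (mem_filter.mp hy).1 hxy
  exact hN.2 G hGsub hcard hGanti hsup

lemma not_subset_of_adjacent {S : Finset V} {B : Finset (Finset V)} (hB : IsBuilding S B)
    {N₁ N₂ : Finset (Finset V)} (hN₁ : IsMaxNested B N₁) (hN₂ : IsMaxNested B N₂)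
    {I₁ I₂ : Finset V} (hI₁ : I₁ ∈ N₁) (hI₂ : I₂ ∈ N₂)
    (h₁ : N₁ ∩ N₂ = N₁.erase I₁) (h₂ : N₁ ∩ N₂ = N₂.erase I₂) : ¬ I₂ ⊆ I₁ := by
  have hI₂N₁ : I₂ ∉ N₁ := by
    intro h
    have : I₂ ∈ N₁ ∩ N₂ := mem_inter.mpr ⟨h, hI₂⟩
    rw [h₂] at this
    exact notMem_erase I₂ N₂ this
  have hne : I₂ ≠ I₁ := by rintro rfl; exact hI₂N₁ hI₁
  intro hsub
  have hnested : IsNested B (insert I₂ N₁) := by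
    constructor
    · intro x hx
      rcases mem_insert.mp hx with rfl | hx
      · exact hN₂.1.1 hI₂
      · exact hN₁.1.1 hx
    · intro F hF hcard hanti
      by_cases hIF : I₂ ∈ F
      · have hI₁F : I₁ ∉ F := fun h => hanti I₂ hIF I₁ h hne hsub
        have hFN₂ : F ⊆ N₂ := by
          intro x hx
          rcases mem_insert.mp (hF hx) with rfl | hxN
          · exact hI₂
          · have hxne : x ≠ I₁ := fun h => hI₁F (h ▸ hx)
            have : x ∈ N₁.erase I₁ := mem_erase.mpr ⟨hxne, hxN⟩
            rw [← h₁] at this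
            exact (mem_inter.mp this).2
        exact hN₂.1.2 F hFN₂ hcard hanti
      · have hFN₁ : F ⊆ N₁ := by
          intro x hx
          rcases mem_insert.mp (hF hx) with rfl | hxN
          · exact absurd hx hIF
          · exact hxN
        exact hN₁.1.2 F hFN₁ hcard hanti
  have := hN₁.2 _ hnested (subset_insert _ _)
  exact hI₂N₁ (this ▸ mem_insert_self I₂ N₁)

lemma max_mem_left {S : Finset V} {B : Finset (Finset V)} (hB : IsBuilding S B)
    {N₁ N₂ : Finset (Finset V)} (hN₁ : IsMaxNested B N₁) (hN₂ : IsMaxNested B N₂)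
    {I₁ I₂ : Finset V} (hI₁ : I₁ ∈ N₁) (hI₂ : I₂ ∈ N₂)
    (h₁ : N₁ ∩ N₂ = N₁.erase I₁) (h₂ : N₁ ∩ N₂ = N₂.erase I₂)
    {J : Finset V} (hJ : J ∈ buildingMax (restrictB B (I₁ ∩ I₂))) : J ∈ N₁ := by
  have hJ' := mem_filter.mp hJ
  have hJB : J ∈ B := (mem_filter.mp hJ'.1).1
  have hJC : J ⊆ I₁ ∩ I₂ := by
    have := (mem_filter.mp hJ'.1).2
    exact this
  have hJmax : ∀ K ∈ restrictB B (I₁ ∩ I₂), J ⊆ K → J = K := hJ'.2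
  have hns21 : ¬ I₂ ⊆ I₁ := not_subset_of_adjacent hB hN₁ hN₂ hI₁ hI₂ h₁ h₂
  have h₁' : N₂ ∩ N₁ = N₂.erase I₂ := by rw [inter_comm]; exact h₂
  have h₂' : N₂ ∩ N₁ = N₁.erase I₁ := by rw [inter_comm]; exact h₁
  have hns12 : ¬ I₁ ⊆ I₂ := not_subset_of_adjacent hB hN₂ hN₁ hI₂ hI₁ h₁' h₂'
  have hJ1 : J ⊆ I₁ := hJC.trans inter_subset_left
  have hJ2 : J ⊆ I₂ := hJC.trans inter_subset_right
  have hJne1 : J ≠ I₁ := by rintro rfl; exact hns12 hJ2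
  by_contra hJN
  have hnested : IsNested B (insert J N₁) := by
    constructor
    · intro x hx
      rcases mem_insert.mp hx with rfl | hx
      · rw [mem_sdiff]
        refine ⟨hJB, ?_⟩
        intro hmax
        exact hJne1 ((mem_filter.mp hmax).2 I₁ (mem_of_nested hN₁.1 hI₁) hJ1)
      · exact hN₁.1.1 hx
    · intro F hF hcard hanti
      by_cases hJF : J ∈ F
      · intro hU
        set F' := F.erase J with hF'def
        have hF'F : F' ⊆ F := erase_subset _ _
        have hF'N₁ : F' ⊆ N₁ := by
          intro x hx
          obtain ⟨hxne, hxF⟩ := mem_erase.mp hx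
          rcases mem_insert.mp (hF hxF) with rfl | h
          · exact absurd rfl hxne
          · exact h
        have hI₁F' : I₁ ∉ F' := fun h => hanti J hJF I₁ (hF'F h) hJne1 hJ1
        have hF'N₂ : F' ⊆ N₂ := by
          intro x hx
          have hxne : x ≠ I₁ := fun h => hI₁F' (h ▸ hx)
          have : x ∈ N₁.erase I₁ := mem_erase.mpr ⟨hxne, hF'N₁ hx⟩
          rw [← h₁] at this
          exact (mem_inter.mp this).2
        have hF'ne : F'.Nonempty := by
          rw [← card_pos, hF'def, card_erase_of_mem hJF]
          omega
        have hF'anti : ∀ x ∈ F', ∀ y ∈ F', x ≠ y → ¬ x ⊆ y :=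
          fun x hx y hy => hanti x (hF'F hx) y (hF'F hy)
        have hJsubs : ∀ K ∈ F', ¬ J ⊆ K :=
          fun K hK => hanti J hJF K (hF'F hK) (Ne.symm (mem_erase.mp hK).1)
        have dich : ∀ (I : Finset V) (N : Finset (Finset V)), IsNested B N → I ∈ N →
            F' ⊆ N → J ⊆ I → ∀ K ∈ F', K ⊆ I ∨ K ∩ I = ∅ := by
          intro I N hN hIN hF'N hJI K hK
          by_cases hint : (K ∩ I).Nonempty
          · rcases nested_pair hB hN (hF'N hK) hIN hint with h | h
            · exact Or.inl h
            · exact absurd (hJI.trans h) (hJsubs K hK)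
          · exact Or.inr (not_nonempty_iff_eq_empty.mp hint)
        have dich₁ := dich I₁ N₁ hN₁.1 hI₁ hF'N₁ hJ1
        have dich₂ := dich I₂ N₂ hN₂.1 hI₂ hF'N₂ hJ2
        have hFins : F = insert J F' := (insert_erase hJF).symm
        have hFsup : F.sup id = J ∪ F'.sup id := by
          conv_lhs => rw [hFins]
          rw [sup_insert, sup_eq_union]
          rfl
        have hJsupF : J ⊆ F.sup id := le_sup (f := id) hJF
        -- generic contradiction from existence of K₀ disjoint from I
        have contra : ∀ (I : Finset V) (N : Finset (Finset V)), IsNested B N → I ∈ N →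
            F' ⊆ N → J ⊆ I → (∀ K ∈ F', K ⊆ I ∨ K ∩ I = ∅) →
            ∀ K₀ ∈ F', K₀ ∩ I = ∅ → False := by
          intro I N hN hIN hF'N hJI hdich K₀ hK₀ hK₀I
          apply antichain_absorb hB hN hIN hF'N hF'anti hK₀ hK₀I
          have heq : (insert I (F'.filter fun K => K ∩ I = ∅)).sup id = F.sup id ∪ I := by
            ext a
            simp only [mem_union, Finset.mem_sup, mem_insert, mem_filter, id_eq]
            constructor
            · rintro ⟨v, (rfl | ⟨hv, -⟩), hav⟩
              · exact Or.inr hav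
              · exact Or.inl ⟨v, hF'F hv, hav⟩
            · rintro (⟨v, hvF, hav⟩ | haI)
              · rcases mem_insert.mp (hFins ▸ hvF) with rfl | hv
                · exact ⟨I, Or.inl rfl, hJI hav⟩
                · rcases hdich v hv with h | h
                  · exact ⟨I, Or.inl rfl, h hav⟩
                  · exact ⟨v, Or.inr ⟨hv, h⟩, hav⟩
              · exact ⟨I, Or.inl rfl, haI⟩
          rw [heq]
          apply hB.2.1 _ hU I (mem_of_nested hN hIN)
          obtain ⟨a, ha⟩ := nonempty_of_mem hB hJB
          exact ⟨a, mem_inter.mpr ⟨hJsupF ha, hJI ha⟩⟩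
        by_cases hA : ∃ K₀ ∈ F', K₀ ∩ I₁ = ∅
        · obtain ⟨K₀, hK₀, hK₀I⟩ := hA
          exact contra I₁ N₁ hN₁.1 hI₁ hF'N₁ hJ1 dich₁ K₀ hK₀ hK₀I
        · push_neg at hA
          have hall₁ : ∀ K ∈ F', K ⊆ I₁ := by
            intro K hK
            rcases dich₁ K hK with h | h
            · exact h
            · exact absurd h (nonempty_iff_ne_empty.mp (hA K hK))
          by_cases hB1 : ∃ K₀ ∈ F', K₀ ∩ I₂ = ∅
          · obtain ⟨K₀, hK₀, hK₀I⟩ := hB1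
            exact contra I₂ N₂ hN₂.1 hI₂ hF'N₂ hJ2 dich₂ K₀ hK₀ hK₀I
          · push_neg at hB1
            have hall₂ : ∀ K ∈ F', K ⊆ I₂ := by
              intro K hK
              rcases dich₂ K hK with h | h
              · exact h
              · exact absurd h (nonempty_iff_ne_empty.mp (hB1 K hK))
            have hsupC : F.sup id ⊆ I₁ ∩ I₂ := by
              show F.sup id ≤ I₁ ∩ I₂
              apply Finset.sup_le
              intro x hx
              rcases mem_insert.mp (hFins ▸ hx) with rfl | hx'
              · exact hJC
              · exact subset_inter (hall₁ x hx') (hall₂ x hx')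
            have hmem : F.sup id ∈ restrictB B (I₁ ∩ I₂) := mem_filter.mpr ⟨hU, hsupC⟩
            have hJeq := hJmax _ hmem hJsupF
            obtain ⟨K₀, hK₀⟩ := hF'ne
            have hK₀sub : K₀ ⊆ F.sup id := le_sup (f := id) (hF'F hK₀)
            rw [← hJeq] at hK₀sub
            exact hanti K₀ (hF'F hK₀) J hJF (mem_erase.mp hK₀).1 hK₀sub
      · have hFN₁ : F ⊆ N₁ := by
          intro x hx
          rcases mem_insert.mp (hF hx) with rfl | hxN
          · exact absurd hx hJF
          · exact hxN
        exact hN₁.1.2 F hFN₁ hcard hanti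
  have := hN₁.2 _ hnested (subset_insert _ _)
  exact hJN (this ▸ mem_insert_self J N₁)

theorem adjacent_intersection_components (S : Finset V) (B : Finset (Finset V))
    (hB : IsBuilding S B) (N₁ N₂ : Finset (Finset V))
    (hN₁ : IsMaxNested B N₁) (hN₂ : IsMaxNested B N₂) (hNe : N₁ ≠ N₂)
    (I₁ I₂ : Finset V) (hI₁ : I₁ ∈ N₁) (hI₂ : I₂ ∈ N₂)
    (h₁ : N₁ ∩ N₂ = N₁.erase I₁) (h₂ : N₁ ∩ N₂ = N₂.erase I₂)
    (hmeet : (I₁ ∩ I₂).Nonempty) :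
    buildingMax (restrictB B (I₁ ∩ I₂)) ⊆ N₁ ∩ N₂ := by
  intro J hJ
  have h₁' : N₂ ∩ N₁ = N₂.erase I₂ := by rw [inter_comm]; exact h₂
  have h₂' : N₂ ∩ N₁ = N₁.erase I₁ := by rw [inter_comm]; exact h₁
  have hJ2 : J ∈ buildingMax (restrictB B (I₂ ∩ I₁)) := by
    rwa [inter_comm I₂ I₁]
  exact mem_inter.mpr ⟨max_mem_left hB hN₁ hN₂ hI₁ hI₂ h₁ h₂ hJ,
    max_mem_left hB hN₂ hN₁ hI₂ hI₁ h₁' h₂' hJ2⟩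
end

section
/- If N_1, N_2 are adjacent maximal nested sets with N_1 − {I_1} = N_2 − {I_2} = N_1 ∩ N_2, then there exist pairwise disjoint I_3, ..., I_k ∈ N_1 ∩ N_2 (possibly none) with (I_1 ∪ I_2) ∩ I_i = ∅ for 3 ≤ i ≤ k and I_1 ∪ ... ∪ I_k ∈ (N_1 ∩ N_2) ∪ B_max. -/
open Finset

variable {V : Type*} [Fintype V] [DecidableEq V]

lemma nested_mem_B {B M : Finset (Finset V)} (hM : IsNested B M) {I : Finset V} (h : I ∈ M) :
    I ∈ B := (mem_sdiff.mp (hM.1 h)).1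

lemma nested_laminar {S : Finset V} {B M : Finset (Finset V)} (hB : IsBuilding S B)
    (hM : IsNested B M) {A C : Finset V} (hA : A ∈ M) (hC : C ∈ M) (hd : ¬ Disjoint A C) :
    A ⊆ C ∨ C ⊆ A := by
  by_contra h
  push_neg at h
  have hne : A ≠ C := by rintro rfl; exact h.1 subset_rfl
  have hsub : ({A, C} : Finset (Finset V)) ⊆ M := by
    intro x hx
    rcases mem_insert.mp hx with rfl | hx
    · exact hA
    · rw [mem_singleton.mp hx]; exact hC
  have hcard : 2 ≤ ({A, C} : Finset (Finset V)).card := by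
    rw [card_insert_of_notMem (by simp [hne]), card_singleton]
  have hanti : ∀ I ∈ ({A, C} : Finset (Finset V)), ∀ J ∈ ({A, C} : Finset (Finset V)),
      I ≠ J → ¬ I ⊆ J := by
    intro I hI J hJ hIJ
    simp only [mem_insert, mem_singleton] at hI hJ
    rcases hI with rfl | rfl <;> rcases hJ with rfl | rfl
    · exact absurd rfl hIJ
    · exact h.1
    · exact h.2
    · exact absurd rfl hIJ
  apply hM.2 {A, C} hsub hcard hanti
  have hs : ({A, C} : Finset (Finset V)).sup id = A ∪ C := by
    rw [sup_insert, sup_singleton]; rfl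
  rw [hs]
  exact hB.2.1 A (nested_mem_B hM hA) C (nested_mem_B hM hC)
    (not_disjoint_iff_nonempty_inter.mp hd)

lemma nested_incomp_disjoint {S : Finset V} {B M : Finset (Finset V)} (hB : IsBuilding S B)
    (hM : IsNested B M) {A C : Finset V} (hA : A ∈ M) (hC : C ∈ M)
    (h1 : ¬ A ⊆ C) (h2 : ¬ C ⊆ A) : Disjoint A C := by
  by_contra hd
  rcases nested_laminar hB hM hA hC hd with h | h
  exacts [h1 h, h2 h]

lemma not_subset_of_disjoint {A C : Finset V} (hne : A.Nonempty) (hd : Disjoint A C) :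
    ¬ A ⊆ C := by
  intro hsub
  obtain ⟨x, hx⟩ := hne
  exact disjoint_left.mp hd hx (hsub hx)

/-- The auxiliary "good" predicate: `U` is in `B` and decomposes as `I₁ ∪ I₂` together
    with a pairwise-disjoint family from `N₁ ∩ N₂` avoiding `I₁ ∪ I₂`. -/
def GoodAux (B N₁ N₂ : Finset (Finset V)) (I₁ I₂ : Finset V) (U : Finset V) : Prop :=
  U ∈ B ∧ ∃ F : Finset (Finset V), F ⊆ N₁ ∩ N₂ ∧
    (∀ I ∈ F, ∀ J ∈ F, I ≠ J → Disjoint I J) ∧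
    (∀ I ∈ F, Disjoint (I₁ ∪ I₂) I) ∧
    U = I₁ ∪ I₂ ∪ F.sup id

theorem adjacent_union_property (S : Finset V) (B : Finset (Finset V))
    (hB : IsBuilding S B) (N₁ N₂ : Finset (Finset V))
    (hN₁ : IsMaxNested B N₁) (hN₂ : IsMaxNested B N₂) (hNe : N₁ ≠ N₂)
    (I₁ I₂ : Finset V) (hI₁ : I₁ ∈ N₁) (hI₂ : I₂ ∈ N₂)
    (h₁ : N₁ ∩ N₂ = N₁.erase I₁) (h₂ : N₁ ∩ N₂ = N₂.erase I₂) :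
    ∃ F : Finset (Finset V), F ⊆ N₁ ∩ N₂ ∧
      (∀ I ∈ F, ∀ J ∈ F, I ≠ J → Disjoint I J) ∧
      (∀ I ∈ F, Disjoint (I₁ ∪ I₂) I) ∧
      I₁ ∪ I₂ ∪ F.sup id ∈ (N₁ ∩ N₂) ∪ buildingMax B := by
  classical
  -- Basic facts
  have hI2N1 : I₂ ∉ N₁ := by
    intro h
    have hmem : I₂ ∈ N₁ ∩ N₂ := mem_inter.mpr ⟨h, hI₂⟩
    rw [h₂] at hmem
    exact (mem_erase.mp hmem).1 rfl
  have hI1N2 : I₁ ∉ N₂ := by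
    intro h
    have hmem : I₁ ∈ N₁ ∩ N₂ := mem_inter.mpr ⟨hI₁, h⟩
    rw [h₁] at hmem
    exact (mem_erase.mp hmem).1 rfl
  have hNsub1 : N₁ ∩ N₂ ⊆ N₁ := inter_subset_left
  have hNsub2 : N₁ ∩ N₂ ⊆ N₂ := inter_subset_right
  have hI1B : I₁ ∈ B := nested_mem_B hN₁.1 hI₁
  have hI2B : I₂ ∈ B := nested_mem_B hN₂.1 hI₂
  have hI1ne : I₁.Nonempty := (hB.1 I₁ hI1B).1
  have hI2ne : I₂.Nonempty := (hB.1 I₂ hI2B).1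
  have hN1eq : insert I₁ (N₁ ∩ N₂) = N₁ := by rw [h₁]; exact insert_erase hI₁
  have hN2eq : insert I₂ (N₁ ∩ N₂) = N₂ := by rw [h₂]; exact insert_erase hI₂
  -- gadget: adding any non-maximal element of B outside N₁ breaks nestedness
  have key : ∀ U : Finset V, U ∈ B → U ∉ buildingMax B → U ∉ N₁ →
      ∃ G, G ⊆ insert U N₁ ∧ U ∈ G ∧ 2 ≤ G.card ∧
        (∀ I ∈ G, ∀ J ∈ G, I ≠ J → ¬ I ⊆ J) ∧ G.sup id ∈ B := by
    intro U hUB hUmax hUN1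
    have hnot : ¬ IsNested B (insert U N₁) := by
      intro h
      have heq := hN₁.2 _ h (subset_insert _ _)
      exact hUN1 (heq ▸ mem_insert_self U N₁)
    rw [IsNested] at hnot
    push_neg at hnot
    have hc1 : insert U N₁ ⊆ B \ buildingMax B := by
      intro x hx
      rcases mem_insert.mp hx with rfl | hx
      · exact mem_sdiff.mpr ⟨hUB, hUmax⟩
      · exact hN₁.1.1 hx
    obtain ⟨G, hGsub, hGcard, hGanti, hGsup⟩ := hnot hc1
    refine ⟨G, hGsub, ?_, hGcard, hGanti, hGsup⟩
    by_contra hUG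
    have hGN1 : G ⊆ N₁ := by
      intro x hx
      rcases mem_insert.mp (hGsub hx) with rfl | h
      · exact absurd hx hUG
      · exact h
    exact hN₁.1.2 G hGN1 hGcard hGanti hGsup
  -- Step A: initial antichain containing I₁ and I₂
  obtain ⟨F₀, hF₀sub, hI₂F₀, hF₀card, hF₀anti, hF₀sup⟩ :=
    key I₂ hI2B (mem_sdiff.mp (hN₂.1.1 hI₂)).2 hI2N1
  have hI₁F₀ : I₁ ∈ F₀ := by
    by_contra h
    have hsub : F₀ ⊆ N₂ := by
      intro x hx
      rcases mem_insert.mp (hF₀sub hx) with rfl | hx2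
      · exact hI₂
      · rw [← hN1eq] at hx2
        rcases mem_insert.mp hx2 with rfl | hx3
        · exact absurd hx h
        · exact hNsub2 hx3
    exact hN₂.1.2 F₀ hsub hF₀card hF₀anti hF₀sup
  have hI1I2 : I₁ ≠ I₂ := by rintro rfl; exact hI2N1 hI₁
  have hn12 : ¬ I₁ ⊆ I₂ := hF₀anti I₁ hI₁F₀ I₂ hI₂F₀ hI1I2
  have hn21 : ¬ I₂ ⊆ I₁ := hF₀anti I₂ hI₂F₀ I₁ hI₁F₀ hI1I2.symm
  -- the initial good set
  have hF₀N1 : ∀ x ∈ F₀, x ≠ I₂ → x ∈ N₁ := by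
    intro x hx hne
    rcases mem_insert.mp (hF₀sub hx) with rfl | hx2
    · exact absurd rfl hne
    · exact hx2
  have hGoodU₀ : GoodAux B N₁ N₂ I₁ I₂ (F₀.sup id) := by
    refine ⟨hF₀sup, (F₀.erase I₁).erase I₂, ?_, ?_, ?_, ?_⟩
    · intro x hx
      have hxI2 : x ≠ I₂ := (mem_erase.mp hx).1
      have hxI1 : x ≠ I₁ := (mem_erase.mp (mem_erase.mp hx).2).1
      have hxF₀ : x ∈ F₀ := (mem_erase.mp (mem_erase.mp hx).2).2
      have hxN1 : x ∈ N₁ := hF₀N1 x hxF₀ hxI2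
      rw [h₁]
      exact mem_erase.mpr ⟨hxI1, hxN1⟩
    · intro X hX Y hY hXY
      have hXF₀ : X ∈ F₀ := mem_of_mem_erase (mem_of_mem_erase hX)
      have hYF₀ : Y ∈ F₀ := mem_of_mem_erase (mem_of_mem_erase hY)
      have hXN1 : X ∈ N₁ := hF₀N1 X hXF₀ (mem_erase.mp hX).1
      have hYN1 : Y ∈ N₁ := hF₀N1 Y hYF₀ (mem_erase.mp hY).1
      exact nested_incomp_disjoint hB hN₁.1 hXN1 hYN1
        (hF₀anti X hXF₀ Y hYF₀ hXY) (hF₀anti Y hYF₀ X hXF₀ hXY.symm)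
    · intro X hX
      have hxI2 : X ≠ I₂ := (mem_erase.mp hX).1
      have hxI1 : X ≠ I₁ := (mem_erase.mp (mem_erase.mp hX).2).1
      have hXF₀ : X ∈ F₀ := mem_of_mem_erase (mem_of_mem_erase hX)
      have hXN1 : X ∈ N₁ := hF₀N1 X hXF₀ hxI2
      have hXN : X ∈ N₁ ∩ N₂ := by
        rw [h₁]; exact mem_erase.mpr ⟨hxI1, hXN1⟩
      refine disjoint_union_left.mpr ⟨?_, ?_⟩
      · exact (nested_incomp_disjoint hB hN₁.1 hXN1 hI₁
          (hF₀anti X hXF₀ I₁ hI₁F₀ hxI1) (hF₀anti I₁ hI₁F₀ X hXF₀ hxI1.symm)).symm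
      · exact (nested_incomp_disjoint hB hN₂.1 (hNsub2 hXN) hI₂
          (hF₀anti X hXF₀ I₂ hI₂F₀ hxI2) (hF₀anti I₂ hI₂F₀ X hXF₀ hxI2.symm)).symm
    · have e1 : insert I₂ ((F₀.erase I₁).erase I₂) = F₀.erase I₁ :=
        insert_erase (mem_erase.mpr ⟨hI1I2.symm, hI₂F₀⟩)
      have e2 : insert I₁ (F₀.erase I₁) = F₀ := insert_erase hI₁F₀
      conv_lhs => rw [← e2, ← e1]
      rw [sup_insert, sup_insert]
      simp only [id_eq, sup_eq_union]
      rw [union_assoc]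
  -- choose a good set of maximal cardinality
  set P : Finset (Finset V) := S.powerset.filter (GoodAux B N₁ N₂ I₁ I₂) with hP
  have hU₀P : F₀.sup id ∈ P := by
    rw [hP, mem_filter, mem_powerset]
    exact ⟨(hB.1 _ hF₀sup).2, hGoodU₀⟩
  obtain ⟨U, hUP, hUmax⟩ := P.exists_max_image card ⟨_, hU₀P⟩
  have hUS : U ⊆ S := mem_powerset.mp (mem_filter.mp hUP).1
  obtain ⟨hUB, F, hFsub, hFpd, hFavoid, hUeq⟩ := (mem_filter.mp hUP).2
  refine ⟨F, hFsub, hFpd, hFavoid, ?_⟩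
  rw [← hUeq]
  by_contra hUnm
  have hUN : U ∉ N₁ ∩ N₂ := fun h => hUnm (mem_union_left _ h)
  have hUmaxB : U ∉ buildingMax B := fun h => hUnm (mem_union_right _ h)
  have hI1U : I₁ ⊆ U := by
    rw [hUeq]; exact subset_union_left.trans subset_union_left
  have hI2U : I₂ ⊆ U := by
    rw [hUeq]; exact subset_union_right.trans subset_union_left
  have hFsupU : F.sup id ⊆ U := by rw [hUeq]; exact subset_union_right
  have hUN1 : U ∉ N₁ := by
    intro h
    rw [← hN1eq] at h
    rcases mem_insert.mp h with rfl | h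
    · exact hn21 hI2U
    · exact hUN h
  have hUN2 : U ∉ N₂ := by
    intro h
    rw [← hN2eq] at h
    rcases mem_insert.mp h with rfl | h
    · exact hn12 hI1U
    · exact hUN h
  -- facts about elements of F not inside a given J ⊇ I₁ (or ⊇ I₂)
  have hXJ : ∀ J ∈ N₁ ∩ N₂, (I₁ ⊆ J ∨ I₂ ⊆ J) → ∀ X ∈ F, ¬ X ⊆ J →
      Disjoint X J ∧ ¬ J ⊆ X := by
    intro J hJ hIJ X hX hXnJ
    have hXN : X ∈ N₁ ∩ N₂ := hFsub hX
    have hJX : ¬ J ⊆ X := by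
      intro h
      have hav := hFavoid X hX
      rcases hIJ with h1 | h2
      · obtain ⟨i, hi⟩ := hI1ne
        exact disjoint_left.mp hav (mem_union_left _ hi) (h (h1 hi))
      · obtain ⟨i, hi⟩ := hI2ne
        exact disjoint_left.mp hav (mem_union_right _ hi) (h (h2 hi))
    exact ⟨nested_incomp_disjoint hB hN₁.1 (hNsub1 hXN) (hNsub1 hJ) hXnJ hJX, hJX⟩
  -- claimA : no J in N₁ ∩ N₂ contains I₁ ∪ I₂ without containing U
  have claimA : ∀ J ∈ N₁ ∩ N₂, I₁ ⊆ J → I₂ ⊆ J → ¬ U ⊆ J → False := by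
    intro J hJ h1J h2J hUJ
    set K := F.filter (fun X => ¬ X ⊆ J) with hK
    have hKmem : ∀ X ∈ K, X ∈ F ∧ ¬ X ⊆ J := fun X hX => mem_filter.mp hX
    have hKne : K.Nonempty := by
      by_contra h
      apply hUJ
      rw [hUeq]
      refine union_subset (union_subset h1J h2J) ?_
      intro x hx
      obtain ⟨X, hX, hxX⟩ := mem_sup.mp hx
      by_cases hsub : X ⊆ J
      · exact hsub hxX
      · exact absurd ⟨X, mem_filter.mpr ⟨hX, hsub⟩⟩ h
    have hJK : J ∉ K := fun h => (mem_filter.mp h).2 subset_rfl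
    have hGsub' : insert J K ⊆ N₁ := by
      intro x hx
      rcases mem_insert.mp hx with rfl | hx
      · exact hNsub1 hJ
      · exact hNsub1 (hFsub (mem_filter.mp hx).1)
    have hcard : 2 ≤ (insert J K).card := by
      rw [card_insert_of_notMem hJK]
      have := card_pos.mpr hKne
      omega
    have hanti : ∀ X ∈ insert J K, ∀ Y ∈ insert J K, X ≠ Y → ¬ X ⊆ Y := by
      intro X hX Y hY hXY
      rcases mem_insert.mp hX with rfl | hX <;> rcases mem_insert.mp hY with rfl | hY
      · exact absurd rfl hXY
      · exact (hXJ X hJ (Or.inl h1J) Y (hKmem Y hY).1 (hKmem Y hY).2).2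
      · exact (hKmem X hX).2
      · refine not_subset_of_disjoint ?_ (hFpd X (hKmem X hX).1 Y (hKmem Y hY).1 hXY)
        exact (hB.1 X (nested_mem_B hN₁.1 (hNsub1 (hFsub (hKmem X hX).1)))).1
    have hsupeq : (insert J K).sup id = U ∪ J := by
      rw [sup_insert]
      simp only [id_eq, sup_eq_union]
      apply Subset.antisymm
      · exact union_subset subset_union_right
          (((sup_mono (filter_subset _ _)).trans hFsupU).trans subset_union_left)
      · refine union_subset ?_ subset_union_left
        rw [hUeq]
        refine union_subset (union_subset (h1J.trans subset_union_left)
          (h2J.trans subset_union_left)) ?_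
        intro x hx
        obtain ⟨X, hXF, hxX⟩ := mem_sup.mp hx
        by_cases hsub : X ⊆ J
        · exact mem_union_left _ (hsub hxX)
        · exact mem_union_right _ (mem_sup.mpr ⟨X, mem_filter.mpr ⟨hXF, hsub⟩, hxX⟩)
    have hUJB : U ∪ J ∈ B := by
      refine hB.2.1 U hUB J (nested_mem_B hN₁.1 (hNsub1 hJ)) ?_
      obtain ⟨i, hi⟩ := hI1ne
      exact ⟨i, mem_inter.mpr ⟨hI1U hi, h1J hi⟩⟩
    exact hN₁.1.2 (insert J K) hGsub' hcard hanti (hsupeq ▸ hUJB)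
  -- generalized claim: J containing one of I₁, I₂ can't be disjoint from the other
  have claimBB : ∀ M, IsNested B M → N₁ ∩ N₂ ⊆ M →
      ∀ C, C ∈ M → C.Nonempty → C ⊆ U → (∀ X ∈ F, Disjoint C X) →
      ∀ J ∈ N₁ ∩ N₂, (I₁ ⊆ J ∨ I₂ ⊆ J) → I₁ ∪ I₂ ⊆ J ∪ C → Disjoint J C → False := by
    intro M hM hNM C hCM hCne hCU hCav J hJ hor h12 hdJC
    set K := F.filter (fun X => ¬ X ⊆ J) with hK
    have hKmem : ∀ X ∈ K, X ∈ F ∧ ¬ X ⊆ J := fun X hX => mem_filter.mp hX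
    have hJB : J ∈ B := nested_mem_B hN₁.1 (hNsub1 hJ)
    have hJne : J.Nonempty := (hB.1 J hJB).1
    have hJC : J ≠ C := by
      rintro rfl
      exact not_subset_of_disjoint hJne hdJC subset_rfl
    have hJK : J ∉ K := fun h => (mem_filter.mp h).2 subset_rfl
    have hCK : C ∉ K := by
      intro h
      exact not_subset_of_disjoint hCne (hCav C (hKmem C h).1) subset_rfl
    have hGsub' : insert J (insert C K) ⊆ M := by
      intro x hx
      rcases mem_insert.mp hx with rfl | hx
      · exact hNM hJ
      · rcases mem_insert.mp hx with rfl | hx2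
        · exact hCM
        · exact hNM (hFsub (hKmem x hx2).1)
    have hJCK : J ∉ insert C K := by
      intro h
      rcases mem_insert.mp h with h | h
      exacts [hJC h, hJK h]
    have hcard : 2 ≤ (insert J (insert C K)).card := by
      rw [card_insert_of_notMem hJCK, card_insert_of_notMem hCK]
      omega
    have hXne : ∀ X ∈ K, X.Nonempty := by
      intro X hX
      exact (hB.1 X (nested_mem_B hN₁.1 (hNsub1 (hFsub (hKmem X hX).1)))).1
    have hanti : ∀ X ∈ insert J (insert C K), ∀ Y ∈ insert J (insert C K), X ≠ Y → ¬ X ⊆ Y := by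
      intro X hX Y hY hXY
      simp only [mem_insert] at hX hY
      rcases hX with rfl | rfl | hX <;> rcases hY with rfl | rfl | hY
      · exact absurd rfl hXY
      · exact not_subset_of_disjoint hJne hdJC
      · exact (hXJ X hJ hor Y (hKmem Y hY).1 (hKmem Y hY).2).2
      · exact not_subset_of_disjoint hCne hdJC.symm
      · exact absurd rfl hXY
      · exact not_subset_of_disjoint hCne (hCav Y (hKmem Y hY).1)
      · exact (hKmem X hX).2
      · exact not_subset_of_disjoint (hXne X hX) (hCav X (hKmem X hX).1).symm
      · exact not_subset_of_disjoint (hXne X hX) (hFpd X (hKmem X hX).1 Y (hKmem Y hY).1 hXY)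
    have hsupeq : (insert J (insert C K)).sup id = U ∪ J := by
      rw [sup_insert, sup_insert]
      simp only [id_eq, sup_eq_union]
      apply Subset.antisymm
      · refine union_subset subset_union_right (union_subset (hCU.trans subset_union_left) ?_)
        exact ((sup_mono (filter_subset _ _)).trans hFsupU).trans subset_union_left
      · refine union_subset ?_ subset_union_left
        rw [hUeq]
        refine union_subset ?_ ?_
        · intro x hx
          rcases mem_union.mp (h12 hx) with h | h
          · exact mem_union_left _ h
          · exact mem_union_right _ (mem_union_left _ h)
        · intro x hx
          obtain ⟨X, hXF, hxX⟩ := mem_sup.mp hx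
          by_cases hsub : X ⊆ J
          · exact mem_union_left _ (hsub hxX)
          · exact mem_union_right _ (mem_union_right _
              (mem_sup.mpr ⟨X, mem_filter.mpr ⟨hXF, hsub⟩, hxX⟩))
    have hUJB : U ∪ J ∈ B := by
      refine hB.2.1 U hUB J hJB ?_
      rcases hor with h | h
      · obtain ⟨i, hi⟩ := hI1ne
        exact ⟨i, mem_inter.mpr ⟨hI1U hi, h hi⟩⟩
      · obtain ⟨i, hi⟩ := hI2ne
        exact ⟨i, mem_inter.mpr ⟨hI2U hi, h hi⟩⟩
    exact hM.2 (insert J (insert C K)) hGsub' hcard hanti (hsupeq ▸ hUJB)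
  -- claimB : no J in N₁ ∩ N₂ contains I₁ while being disjoint from I₂
  have claimB : ∀ J ∈ N₁ ∩ N₂, I₁ ⊆ J → Disjoint J I₂ → False := by
    intro J hJ h1J hd
    refine claimBB N₂ hN₂.1 hNsub2 I₂ hI₂ hI2ne hI2U
      (fun X hX => (disjoint_union_left.mp (hFavoid X hX)).2) J hJ (Or.inl h1J) ?_ hd
    exact union_subset (h1J.trans subset_union_left) subset_union_right
  -- claimB' : symmetric
  have claimB' : ∀ J ∈ N₁ ∩ N₂, I₂ ⊆ J → Disjoint J I₁ → False := by
    intro J hJ h2J hd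
    refine claimBB N₁ hN₁.1 hNsub1 I₁ hI₁ hI1ne hI1U
      (fun X hX => (disjoint_union_left.mp (hFavoid X hX)).1) J hJ (Or.inr h2J) ?_ hd
    exact union_subset subset_union_right (h2J.trans subset_union_left)
  -- get the antichain witnessing that N₁ ∪ {U} is not nested
  obtain ⟨G, hGsub, hUG, hGcard, hGanti, hGsup⟩ := key U hUB hUmaxB hUN1
  have hHsub : G.erase U ⊆ N₁ ∩ N₂ := by
    intro J hJ
    have hJne : J ≠ U := (mem_erase.mp hJ).1
    have hJG : J ∈ G := (mem_erase.mp hJ).2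
    rcases mem_insert.mp (hGsub hJG) with rfl | h
    · exact absurd rfl hJne
    · rw [← hN1eq] at h
      rcases mem_insert.mp h with rfl | h2
      · exact absurd hI1U (hGanti J hJG U hUG hJne)
      · exact h2
  have hHne : (G.erase U).Nonempty := by
    obtain ⟨J, hJG, hJne⟩ := exists_mem_ne (s := G) (by omega) U
    exact ⟨J, mem_erase.mpr ⟨hJne, hJG⟩⟩
  -- every member of the antichain besides U is disjoint from both I₁ and I₂
  have hHdisj : ∀ J ∈ G.erase U, Disjoint J I₁ ∧ Disjoint J I₂ := by
    intro J hJ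
    have hJN : J ∈ N₁ ∩ N₂ := hHsub hJ
    have hJne : J ≠ U := (mem_erase.mp hJ).1
    have hJG : J ∈ G := (mem_erase.mp hJ).2
    have hnJU : ¬ J ⊆ U := hGanti J hJG U hUG hJne
    have hnUJ : ¬ U ⊆ J := hGanti U hUG J hJG hJne.symm
    constructor
    · by_contra hd
      rcases nested_laminar hB hN₁.1 (hNsub1 hJN) hI₁ hd with h | h
      · exact hnJU (h.trans hI1U)
      · by_cases h2 : Disjoint J I₂
        · exact claimB J hJN h h2
        · rcases nested_laminar hB hN₂.1 (hNsub2 hJN) hI₂ h2 with h' | h'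
          · exact hnJU (h'.trans hI2U)
          · exact claimA J hJN h h' hnUJ
    · by_contra hd
      rcases nested_laminar hB hN₂.1 (hNsub2 hJN) hI₂ hd with h | h
      · exact hnJU (h.trans hI2U)
      · by_cases h2 : Disjoint J I₁
        · exact claimB' J hJN h h2
        · rcases nested_laminar hB hN₁.1 (hNsub1 hJN) hI₁ h2 with h' | h'
          · exact hnJU (h'.trans hI1U)
          · exact claimA J hJN h' h hnUJ
  -- build a strictly bigger good set, contradiction
  set K' := F.filter (fun X => ∀ J ∈ G.erase U, Disjoint X J) with hK'
  set Fs := (G.erase U) ∪ K' with hFs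
  have hFsN : Fs ⊆ N₁ ∩ N₂ :=
    union_subset hHsub (fun X hX => hFsub (mem_filter.mp hX).1)
  have hHpd : ∀ J ∈ G.erase U, ∀ J' ∈ G.erase U, J ≠ J' → Disjoint J J' := by
    intro J hJ J' hJ' hne
    exact nested_incomp_disjoint hB hN₁.1 (hNsub1 (hHsub hJ)) (hNsub1 (hHsub hJ'))
      (hGanti J (mem_of_mem_erase hJ) J' (mem_of_mem_erase hJ') hne)
      (hGanti J' (mem_of_mem_erase hJ') J (mem_of_mem_erase hJ) hne.symm)
  have hFspd : ∀ X ∈ Fs, ∀ Y ∈ Fs, X ≠ Y → Disjoint X Y := by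
    intro X hX Y hY hne
    rcases mem_union.mp hX with hX | hX <;> rcases mem_union.mp hY with hY | hY
    · exact hHpd X hX Y hY hne
    · exact ((mem_filter.mp hY).2 X hX).symm
    · exact (mem_filter.mp hX).2 Y hY
    · exact hFpd X (mem_filter.mp hX).1 Y (mem_filter.mp hY).1 hne
  have hFsavoid : ∀ X ∈ Fs, Disjoint (I₁ ∪ I₂) X := by
    intro X hX
    rcases mem_union.mp hX with hX | hX
    · exact disjoint_union_left.mpr ⟨(hHdisj X hX).1.symm, (hHdisj X hX).2.symm⟩
    · exact hFavoid X (mem_filter.mp hX).1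
  have hGeq : insert U (G.erase U) = G := insert_erase hUG
  have hW2 : U ∪ (G.erase U).sup id ⊆ I₁ ∪ I₂ ∪ Fs.sup id := by
    refine union_subset ?_ ?_
    · rw [hUeq]
      refine union_subset subset_union_left ?_
      intro x hx
      obtain ⟨X, hXF, hxX⟩ := mem_sup.mp hx
      by_cases hkeep : ∀ J ∈ G.erase U, Disjoint X J
      · exact mem_union_right _
          (mem_sup.mpr ⟨X, mem_union_right _ (mem_filter.mpr ⟨hXF, hkeep⟩), hxX⟩)
      · push_neg at hkeep
        obtain ⟨J, hJH, hJd⟩ := hkeep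
        have hXN : X ∈ N₁ ∩ N₂ := hFsub hXF
        rcases nested_laminar hB hN₁.1 (hNsub1 hXN) (hNsub1 (hHsub hJH)) hJd with h | h
        · exact mem_union_right _ (mem_sup.mpr ⟨J, mem_union_left _ hJH, h hxX⟩)
        · have hJU : J ⊆ U := (h.trans (le_sup (f := id) hXF)).trans hFsupU
          exact absurd hJU (hGanti J (mem_of_mem_erase hJH) U hUG (mem_erase.mp hJH).1)
    · have hm : (G.erase U).sup id ⊆ Fs.sup id := sup_mono subset_union_left
      exact hm.trans subset_union_right
  have hW1 : I₁ ∪ I₂ ∪ Fs.sup id ⊆ U ∪ (G.erase U).sup id := by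
    refine union_subset (union_subset (hI1U.trans subset_union_left)
      (hI2U.trans subset_union_left)) ?_
    intro x hx
    obtain ⟨X, hXFs, hxX⟩ := mem_sup.mp hx
    rcases mem_union.mp hXFs with hX | hX
    · exact mem_union_right _ (mem_sup.mpr ⟨X, hX, hxX⟩)
    · exact mem_union_left _
        (hFsupU ((le_sup (f := id) (mem_filter.mp hX).1) hxX))
  have hWeq : I₁ ∪ I₂ ∪ Fs.sup id = G.sup id := by
    rw [← hGeq, sup_insert]
    simp only [id_eq, sup_eq_union]
    exact Subset.antisymm hW1 hW2
  have hWB : I₁ ∪ I₂ ∪ Fs.sup id ∈ B := hWeq ▸ hGsup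
  have hGoodW : GoodAux B N₁ N₂ I₁ I₂ (I₁ ∪ I₂ ∪ Fs.sup id) :=
    ⟨hWB, Fs, hFsN, hFspd, hFsavoid, rfl⟩
  have hWP : (I₁ ∪ I₂ ∪ Fs.sup id) ∈ P := by
    rw [hP, mem_filter, mem_powerset]
    exact ⟨(hB.1 _ hWB).2, hGoodW⟩
  have hle := hUmax _ hWP
  obtain ⟨J, hJH⟩ := hHne
  have hnJU : ¬ J ⊆ U := hGanti J (mem_of_mem_erase hJH) U hUG (mem_erase.mp hJH).1
  obtain ⟨x, hxJ, hxU⟩ := not_subset.mp hnJU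
  have hUW : U ⊆ I₁ ∪ I₂ ∪ Fs.sup id := subset_union_left.trans hW2
  have hxW : x ∈ I₁ ∪ I₂ ∪ Fs.sup id :=
    hW2 (mem_union_right _ (mem_sup.mpr ⟨J, hJH, hxJ⟩))
  have hss : U ⊂ (I₁ ∪ I₂ ∪ Fs.sup id) :=
    Finset.ssubset_iff_subset_ne.mpr ⟨hUW, fun h => hxU (h ▸ hxW)⟩
  have := card_lt_card hss
  omega
end

section
/- For every maximal nested set N of a building B on S, the vectors e_I for I ∈ N ∪ B_max form a Z-basis of the lattice Z^S, where e_I = Σ_{i∈I} e_i. -/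
open Finset

variable {V : Type*} [Fintype V] [DecidableEq V]

namespace MaxNestedAux

variable {B N : Finset (Finset V)}

lemma mem_B (hN : IsNested B N) {I : Finset V}
    (hI : I ∈ N ∪ buildingMax B) : I ∈ B := by
  rcases mem_union.1 hI with h | h
  · exact (mem_sdiff.1 (hN.1 h)).1
  · exact (mem_filter.1 h).1

lemma exists_max {I : Finset V} (hI : I ∈ B) : ∃ J ∈ buildingMax B, I ⊆ J := by
  obtain ⟨m, hm, hmax⟩ : ∃ m ∈ B.filter (fun J => I ⊆ J), ∀ x ∈ B.filter (fun J => I ⊆ J), ¬ m < x := by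
    obtain ⟨m, hm1, hm2⟩ := Finset.exists_maximal (s := B.filter (fun J => I ⊆ J))
      ⟨I, mem_filter.2 ⟨hI, subset_rfl⟩⟩
    exact ⟨m, hm1, fun x hx hlt => lt_irrefl _ (lt_of_lt_of_le hlt (hm2 hx hlt.le))⟩
  have hmB := (mem_filter.1 hm).1
  have hIm := (mem_filter.1 hm).2
  refine ⟨m, mem_filter.2 ⟨hmB, fun J hJ hmJ => ?_⟩, hIm⟩
  by_contra hne
  exact hmax J (mem_filter.2 ⟨hJ, hIm.trans hmJ⟩) (lt_iff_ssubset.2 (Finset.ssubset_iff_subset_ne.2 ⟨hmJ, hne⟩))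

lemma forest (hB : IsBuilding Finset.univ B) (hN : IsNested B N) {I J : Finset V}
    (hI : I ∈ N ∪ buildingMax B) (hJ : J ∈ N ∪ buildingMax B)
    (hIJ : (I ∩ J).Nonempty) : I ⊆ J ∨ J ⊆ I := by
  have hIB := mem_B hN hI
  have hJB := mem_B hN hJ
  have hU : I ∪ J ∈ B := hB.2.1 I hIB J hJB hIJ
  rcases mem_union.1 hI with hIN | hImax
  · rcases mem_union.1 hJ with hJN | hJmax
    · by_contra h
      push_neg at h
      have hne : I ≠ J := fun he => h.1 (he ▸ subset_rfl)
      have hanti : ∀ K ∈ ({I, J} : Finset (Finset V)), ∀ L ∈ ({I, J} : Finset (Finset V)),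
          K ≠ L → ¬ K ⊆ L := by
        intro K hK L hL hKL
        simp only [mem_insert, mem_singleton] at hK hL
        rcases hK with rfl | rfl <;> rcases hL with rfl | rfl
        · exact absurd rfl hKL
        · exact h.1
        · exact h.2
        · exact absurd rfl hKL
      have hsub : ({I, J} : Finset (Finset V)) ⊆ N := by
        intro K hK; rcases mem_insert.1 hK with rfl | hK
        · exact hIN
        · rw [mem_singleton.1 hK]; exact hJN
      have hcard : 2 ≤ ({I, J} : Finset (Finset V)).card := (card_pair hne).ge
      have := hN.2 _ hsub hcard hanti
      rw [sup_insert, sup_singleton, id] at this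
      exact this hU
    · have := (mem_filter.1 hJmax).2 _ hU (subset_union_right)
      exact Or.inl (this ▸ subset_union_left)
  · have := (mem_filter.1 hImax).2 _ hU (subset_union_left)
    exact Or.inr (this ▸ subset_union_right)

lemma exists_phi (hB : IsBuilding Finset.univ B) (hN : IsNested B N) (i : V) :
    ∃ I ∈ N ∪ buildingMax B, i ∈ I ∧ ∀ J ∈ N ∪ buildingMax B, i ∈ J → I ⊆ J := by
  have hsing : ({i} : Finset V) ∈ B := hB.2.2 i (mem_univ i)
  obtain ⟨M, hM, hiM⟩ := exists_max hsing
  have hMν : M ∈ N ∪ buildingMax B := mem_union.2 (Or.inr hM)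
  have hne : ((N ∪ buildingMax B).filter (fun K => i ∈ K)).Nonempty :=
    ⟨M, mem_filter.2 ⟨hMν, hiM (mem_singleton_self i)⟩⟩
  obtain ⟨I, hI, hmin⟩ := Finset.exists_min_image _ Finset.card hne
  have hIν := (mem_filter.1 hI).1
  have hiI := (mem_filter.1 hI).2
  refine ⟨I, hIν, hiI, fun J hJ hiJ => ?_⟩
  have hJf : J ∈ (N ∪ buildingMax B).filter (fun K => i ∈ K) := mem_filter.2 ⟨hJ, hiJ⟩
  rcases forest hB hN hIν hJ ⟨i, mem_inter.2 ⟨hiI, hiJ⟩⟩ with h | h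
  · exact h
  · have := eq_of_subset_of_card_le h (hmin J hJf)
    exact this ▸ subset_rfl


lemma exists_free (hB : IsBuilding Finset.univ B) (hN : IsNested B N) {I : Finset V}
    (hI : I ∈ N ∪ buildingMax B) :
    ∃ i ∈ I, ∀ J ∈ N ∪ buildingMax B, i ∈ J → I ⊆ J := by
  by_contra hcon
  push_neg at hcon
  have hIB : I ∈ B := mem_B hN hI
  -- every element of I lies in a strictly smaller member
  have hcover : ∀ i ∈ I, ∃ K ∈ N ∪ buildingMax B, i ∈ K ∧ K ⊆ I ∧ K ≠ I := by
    intro i hi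
    obtain ⟨J, hJ, hiJ, hnsub⟩ := hcon i hi
    rcases forest hB hN hI hJ ⟨i, mem_inter.2 ⟨hi, hiJ⟩⟩ with h | h
    · exact absurd h hnsub
    · exact ⟨J, hJ, hiJ, h, fun he => hnsub (he ▸ subset_rfl)⟩
  set Fam := (N ∪ buildingMax B).filter (fun K => K ⊆ I ∧ K ≠ I) with hFam
  set M := Fam.filter (fun K => ∀ L ∈ Fam, K ⊆ L → K = L) with hM
  -- members of M cover I
  have hMcover : ∀ i ∈ I, ∃ K ∈ M, i ∈ K := by
    intro i hi
    obtain ⟨K0, hK0, hiK0, hK0I, hK0ne⟩ := hcover i hi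
    have hK0F : K0 ∈ Fam := mem_filter.2 ⟨hK0, hK0I, hK0ne⟩
    obtain ⟨K, hK, hmax⟩ : ∃ m ∈ Fam.filter (fun L => K0 ⊆ L), ∀ x ∈ Fam.filter (fun L => K0 ⊆ L), ¬ m < x := by
      obtain ⟨m, hm1, hm2⟩ := Finset.exists_maximal (s := Fam.filter (fun L => K0 ⊆ L))
        ⟨K0, mem_filter.2 ⟨hK0F, subset_rfl⟩⟩
      exact ⟨m, hm1, fun x hx hlt => lt_irrefl _ (lt_of_lt_of_le hlt (hm2 hx hlt.le))⟩
    have hKF := (mem_filter.1 hK).1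
    have hK0K := (mem_filter.1 hK).2
    refine ⟨K, mem_filter.2 ⟨hKF, fun L hL hKL => ?_⟩, hK0K hiK0⟩
    by_contra hne
    exact hmax L (mem_filter.2 ⟨hL, hK0K.trans hKL⟩)
      (lt_iff_ssubset.2 (Finset.ssubset_iff_subset_ne.2 ⟨hKL, hne⟩))
  have hMsubI : ∀ K ∈ M, K ⊆ I ∧ K ≠ I := fun K hK =>
    (mem_filter.1 (mem_filter.1 hK).1).2
  -- M ⊆ N
  have hMN : M ⊆ N := by
    intro K hK
    have hKν := (mem_filter.1 (mem_filter.1 hK).1).1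
    rcases mem_union.1 hKν with h | h
    · exact h
    · exact absurd ((mem_filter.1 h).2 I hIB (hMsubI K hK).1) (hMsubI K hK).2
  -- M is an antichain
  have hanti : ∀ K ∈ M, ∀ L ∈ M, K ≠ L → ¬ K ⊆ L := by
    intro K hK L hL hKL hsub
    exact hKL ((mem_filter.1 hK).2 L (mem_filter.1 hL).1 hsub)
  -- sup M = I
  have hsup : M.sup id = I := by
    apply subset_antisymm
    · exact Finset.sup_le fun K hK => (hMsubI K hK).1
    · intro i hi
      obtain ⟨K, hK, hiK⟩ := hMcover i hi
      exact (Finset.le_sup (f := id) hK : K ⊆ M.sup id) hiK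
  -- 2 ≤ M.card
  have hIne : I.Nonempty := (hB.1 I hIB).1
  obtain ⟨i0, hi0⟩ := hIne
  obtain ⟨K, hK, hi0K⟩ := hMcover i0 hi0
  have hKss : K ⊂ I := Finset.ssubset_iff_subset_ne.2 ⟨(hMsubI K hK).1, (hMsubI K hK).2⟩
  obtain ⟨x, hxI, hxK⟩ := Finset.exists_of_ssubset hKss
  obtain ⟨L, hL, hxL⟩ := hMcover x hxI
  have hKL : K ≠ L := fun he => hxK (he ▸ hxL)
  have hcard : 2 ≤ M.card := one_lt_card.2 ⟨K, hK, L, hL, hKL⟩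
  exact (hN.2 M hMN hcard hanti) (hsup ▸ hIB)


lemma free_unique (hB : IsBuilding Finset.univ B) (hNmax : IsMaxNested B N) {I : Finset V}
    (hI : I ∈ N ∪ buildingMax B) {i j : V} (hiI : i ∈ I)
    (hfree : ∀ J ∈ N ∪ buildingMax B, i ∈ J → I ⊆ J)
    (hjI : j ∈ I) (hji : j ≠ i) :
    ¬ ∀ J ∈ N ∪ buildingMax B, j ∈ J → I ⊆ J := by
  intro hjfree
  have hN : IsNested B N := hNmax.1
  have hIB : I ∈ B := mem_B hN hI
  have hIne : I.Nonempty := (hB.1 I hIB).1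
  -- the connected component of j inside I.erase i
  have hDne : (B.filter (fun K => j ∈ K ∧ K ⊆ I.erase i)).Nonempty := by
    refine ⟨{j}, mem_filter.2 ⟨hB.2.2 j (mem_univ j), mem_singleton_self j, ?_⟩⟩
    intro x hx
    rw [mem_singleton.1 hx]
    exact mem_erase.2 ⟨hji, hjI⟩
  obtain ⟨Js, hJs, hJsmax⟩ := Finset.exists_max_image _ Finset.card hDne
  have hJsB : Js ∈ B := (mem_filter.1 hJs).1
  have hjJs : j ∈ Js := (mem_filter.1 hJs).2.1
  have hJse : Js ⊆ I.erase i := (mem_filter.1 hJs).2.2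
  have hJsI : Js ⊆ I := hJse.trans (erase_subset i I)
  have hiJs : i ∉ Js := fun h => (mem_erase.1 (hJse h)).1 rfl
  -- absorption property of the component
  have absorb : ∀ K ∈ B, K ⊆ I.erase i → (K ∩ Js).Nonempty → K ⊆ Js := by
    intro K hKB hKe hKJ
    have hU : K ∪ Js ∈ B := hB.2.1 K hKB Js hJsB hKJ
    have hUD : K ∪ Js ∈ B.filter (fun L => j ∈ L ∧ L ⊆ I.erase i) :=
      mem_filter.2 ⟨hU, mem_union.2 (Or.inr hjJs), union_subset hKe hJse⟩
    have h2 := eq_of_subset_of_card_le subset_union_right (hJsmax _ hUD)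
    exact fun x hx => h2.symm ▸ mem_union_left Js hx
  -- Js is not in N (nor any member containing j other than ⊇ I)
  have hJsnotν : ∀ hJ : Js ∈ N ∪ buildingMax B, False := by
    intro hJ
    have := hjfree Js hJ hjJs
    exact hiJs (this hiI)
  have hJsN : Js ∉ N := fun h => hJsnotν (mem_union.2 (Or.inl h))
  -- Js is not maximal in B
  have hJsnm : Js ∉ buildingMax B := by
    intro h
    have := (mem_filter.1 h).2 I hIB hJsI
    exact hiJs (this ▸ hiI)
  -- N ∪ {Js} is nested
  have hN' : IsNested B (insert Js N) := by
    constructor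
    · exact insert_subset (mem_sdiff.2 ⟨hJsB, hJsnm⟩) hN.1
    · intro F hF hFcard hFanti hFB
      by_cases hJF : Js ∈ F
      case neg =>
        have hFN : F ⊆ N := fun K hK => (mem_insert.1 (hF hK)).resolve_left
          (fun he => hJF (he ▸ hK))
        exact hN.2 F hFN hFcard hFanti hFB
      -- Js ∈ F
      have hF'N : ∀ K ∈ F.erase Js, K ∈ N := by
        intro K hK
        rcases mem_insert.1 (hF (mem_of_mem_erase hK)) with he | h
        · exact absurd he (ne_of_mem_erase hK)
        · exact h
      -- each other member of F is disjoint from Js, and if it meets I it is in I.erase i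
      have key : ∀ K ∈ F.erase Js, (K ∩ I).Nonempty → K ⊆ I.erase i := by
        intro K hK hKI
        have hKN := hF'N K hK
        have hKne : K ≠ Js := ne_of_mem_erase hK
        have hnKJs : ¬ K ⊆ Js := hFanti K (mem_of_mem_erase hK) Js hJF hKne
        have hnJsK : ¬ Js ⊆ K := hFanti Js hJF K (mem_of_mem_erase hK) hKne.symm
        have hKI' : K ⊆ I := by
          rcases forest hB hN (mem_union.2 (Or.inl hKN)) hI hKI with h | h
          · exact h
          · exact absurd (hJsI.trans h) hnJsK
        have hiK : i ∉ K := by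
          intro hiK
          have := hfree K (mem_union.2 (Or.inl hKN)) hiK
          exact hnJsK (hJsI.trans this)
        exact subset_erase.2 ⟨hKI', hiK⟩
      have hdisj : ∀ K ∈ F.erase Js, ¬ (K ∩ Js).Nonempty := by
        intro K hK hKJ
        have hKI : (K ∩ I).Nonempty := hKJ.mono (inter_subset_inter subset_rfl hJsI)
        have hKe := key K hK hKI
        have := absorb K (mem_B hN (mem_union.2 (Or.inl (hF'N K hK)))) hKe hKJ
        exact hFanti K (mem_of_mem_erase hK) Js hJF (ne_of_mem_erase hK) this
      have hF'ne : (F.erase Js).Nonempty := by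
        rw [← card_pos, card_erase_of_mem hJF]; omega
      set F2 := (F.erase Js).filter (fun K => ¬ (K ∩ I).Nonempty) with hF2
      by_cases hF2e : F2 = ∅
      case pos =>
        -- every member of F.erase Js meets I, hence lies in I.erase i
        have hall : ∀ K ∈ F.erase Js, K ⊆ I.erase i := by
          intro K hK
          by_cases h : (K ∩ I).Nonempty
          · exact key K hK h
          · exact absurd (hF2e ▸ mem_filter.2 ⟨hK, h⟩ : K ∈ (∅ : Finset (Finset V)))
              (notMem_empty K)
        have hUe : F.sup id ≤ I.erase i := by
          refine Finset.sup_le fun K hK => ?_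
          by_cases h : K = Js
          · exact h ▸ hJse
          · exact hall K (mem_erase.2 ⟨h, hK⟩)
        have hUJs : (F.sup id ∩ Js).Nonempty :=
          ⟨j, mem_inter.2 ⟨(Finset.le_sup (f := id) hJF : Js ⊆ F.sup id) hjJs, hjJs⟩⟩
        have hsub := absorb (F.sup id) hFB hUe hUJs
        obtain ⟨K, hK⟩ := hF'ne
        have hKsub : K ⊆ Js := ((Finset.le_sup (f := id) (mem_of_mem_erase hK) : K ⊆ F.sup id)).trans hsub
        exact hFanti K (mem_of_mem_erase hK) Js hJF (ne_of_mem_erase hK) hKsub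
      case neg =>
        have hF2ne : F2.Nonempty := nonempty_iff_ne_empty.2 hF2e
        have hF2disjI : ∀ K ∈ F2, ¬ (K ∩ I).Nonempty := fun K hK => (mem_filter.1 hK).2
        have hF2N : ∀ K ∈ F2, K ∈ N := fun K hK => hF'N K (mem_filter.1 hK).1
        have hF2F : ∀ K ∈ F2, K ∈ F := fun K hK => mem_of_mem_erase (mem_filter.1 hK).1
        -- record : sup (insert I F2) = F.sup id ∪ I
        have hIF2 : I ∉ F2 := fun h => hF2disjI I h (by simpa using hIne)
        have hsupG : (insert I F2).sup id = F.sup id ∪ I := by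
          refine le_antisymm (Finset.sup_le fun K hK => ?_) ?_
          · rcases mem_insert.1 hK with rfl | hK
            · exact subset_union_right
            · exact (Finset.le_sup (f := id) (hF2F K hK) : K ⊆ F.sup id).trans subset_union_left
          · refine union_subset (Finset.sup_le fun K hK => ?_) ?_
            · by_cases h : K = Js
              · subst h
                exact hJsI.trans (Finset.le_sup (f := id) (mem_insert_self I F2) :
                  I ⊆ (insert I F2).sup id)
              · have hKe : K ∈ F.erase Js := mem_erase.2 ⟨h, hK⟩
                by_cases h2 : (K ∩ I).Nonempty
                · exact ((key K hKe h2).trans (erase_subset i I)).trans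
                    (Finset.le_sup (f := id) (mem_insert_self I F2) :
                      I ⊆ (insert I F2).sup id)
                · exact (Finset.le_sup (f := id)
                    (mem_insert_of_mem (mem_filter.2 ⟨hKe, h2⟩)) :
                      K ⊆ (insert I F2).sup id)
            · exact (Finset.le_sup (f := id) (mem_insert_self I F2) :
                I ⊆ (insert I F2).sup id)
        have hsupB : F.sup id ∪ I ∈ B := by
          refine hB.2.1 _ hFB _ hIB ⟨j, mem_inter.2 ⟨?_, hjI⟩⟩
          exact (Finset.le_sup (f := id) hJF : Js ⊆ F.sup id) hjJs
        rcases mem_union.1 hI with hIN | hImax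
        · -- I ∈ N : contradiction with nestedness applied to insert I F2
          have hGN : insert I F2 ⊆ N := insert_subset hIN (fun K hK => hF2N K hK)
          have hGcard : 2 ≤ (insert I F2).card := by
            rw [card_insert_of_notMem hIF2]
            have := card_pos.2 hF2ne
            omega
          have hGanti : ∀ K ∈ insert I F2, ∀ L ∈ insert I F2, K ≠ L → ¬ K ⊆ L := by
            intro K hK L hL hKL hsub
            rcases mem_insert.1 hK with rfl | hK
            · rcases mem_insert.1 hL with rfl | hL
              · exact hKL rfl
              · exact hF2disjI L hL ⟨j, mem_inter.2 ⟨hsub hjI, hjI⟩⟩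
            · rcases mem_insert.1 hL with rfl | hL
              · obtain ⟨x, hx⟩ := (hB.1 K (mem_B hN (mem_union.2 (Or.inl (hF2N K hK))))).1
                exact hF2disjI K hK ⟨x, mem_inter.2 ⟨hx, hsub hx⟩⟩
              · exact hFanti K (hF2F K hK) L (hF2F L hL) hKL hsub
          exact hN.2 _ hGN hGcard hGanti (hsupG ▸ hsupB)
        · -- I ∈ buildingMax B : contradiction with maximality of I
          have := (mem_filter.1 hImax).2 _ hsupB subset_union_right
          have hUI : F.sup id ⊆ I := by
            intro x hx
            rw [this]
            exact mem_union_left _ hx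
          obtain ⟨K, hK⟩ := hF2ne
          obtain ⟨x, hx⟩ := (hB.1 K (mem_B hN (mem_union.2 (Or.inl (hF2N K hK))))).1
          refine hF2disjI K hK ⟨x, mem_inter.2 ⟨hx, ?_⟩⟩
          exact hUI ((Finset.le_sup (f := id) (hF2F K hK) : K ⊆ F.sup id) hx)
  have := hNmax.2 _ hN' (subset_insert _ _)
  exact hJsN (this ▸ mem_insert_self Js N)

end MaxNestedAux

theorem maxNested_basis (B : Finset (Finset V))
    (hB : IsBuilding Finset.univ B) (N : Finset (Finset V)) (hN : IsMaxNested B N) :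
    ∃ b : Module.Basis ↥(N ∪ buildingMax B) ℤ (V → ℤ),
      ∀ I : ↥(N ∪ buildingMax B),
        b I = fun i => if i ∈ (I : Finset V) then (1 : ℤ) else 0 := by
  classical
  have hNn : IsNested B N := hN.1
  set v : ↥(N ∪ buildingMax B) → (V → ℤ) :=
    fun I => fun i => if i ∈ (I : Finset V) then (1 : ℤ) else 0 with hv
  -- linear independence
  have hind : LinearIndependent ℤ v := by
    rw [Fintype.linearIndependent_iff]
    intro g hg
    have Hstep : ∀ I : ↥(N ∪ buildingMax B),
        (∀ J : ↥(N ∪ buildingMax B), (I : Finset V) ⊂ (J : Finset V) → g J = 0) → g I = 0 := by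
      intro I hrec
      obtain ⟨i0, hi0, hfree⟩ := MaxNestedAux.exists_free hB hNn I.2
      have h := congrFun hg i0
      simp only [Finset.sum_apply, Pi.smul_apply, hv, smul_eq_mul, mul_ite, mul_one, mul_zero,
        Pi.zero_apply] at h
      rw [← Finset.sum_filter] at h
      have hImem : I ∈ Finset.univ.filter (fun J : ↥(N ∪ buildingMax B) =>
          i0 ∈ (J : Finset V)) := mem_filter.2 ⟨mem_univ _, hi0⟩
      rw [← Finset.add_sum_erase _ g hImem] at h
      have herase : ∀ J ∈ (Finset.univ.filter (fun J : ↥(N ∪ buildingMax B) =>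
          i0 ∈ (J : Finset V))).erase I, g J = 0 := by
        intro J hJ
        have hi0J : i0 ∈ (J : Finset V) := (mem_filter.1 (mem_of_mem_erase hJ)).2
        have hsub : (I : Finset V) ⊆ (J : Finset V) := hfree _ J.2 hi0J
        refine hrec J (Finset.ssubset_iff_subset_ne.2 ⟨hsub, fun he => ?_⟩)
        exact (ne_of_mem_erase hJ) (Subtype.ext he.symm)
      rw [Finset.sum_eq_zero herase, add_zero] at h
      exact h
    suffices H : ∀ (n : ℕ) (I : ↥(N ∪ buildingMax B)),
        Fintype.card V ≤ n + (I : Finset V).card → g I = 0 by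
      intro I
      exact H (Fintype.card V) I (Nat.le_add_right _ _)
    intro n
    induction n with
    | zero =>
      intro I hI
      refine Hstep I fun J hJ => absurd (Finset.card_lt_card hJ) ?_
      have := Finset.card_le_univ (J : Finset V)
      omega
    | succ n ih =>
      intro I hI
      refine Hstep I fun J hJ => ih J ?_
      have := Finset.card_lt_card hJ
      omega
  -- spanning
  have hspan : ∀ (n : ℕ) (I : Finset V), I ∈ N ∪ buildingMax B → I.card ≤ n → ∀ i ∈ I,
      (fun j => if i = j then (1 : ℤ) else 0) ∈ Submodule.span ℤ (Set.range v) := by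
    intro n
    induction n with
    | zero =>
      intro I hIν hc i hi
      exact absurd (card_pos.2 ⟨i, hi⟩) (by omega)
    | succ n ih =>
      intro I hIν hc i hi
      obtain ⟨i0, hi0, hfree⟩ := MaxNestedAux.exists_free hB hNn hIν
      by_cases hii : i = i0
      case neg =>
        obtain ⟨K, hK, hiK, hmin⟩ := MaxNestedAux.exists_phi hB hNn i
        have hKI : K ⊆ I := hmin I hIν hi
        have hKne : K ≠ I := by
          intro he
          subst he
          exact MaxNestedAux.free_unique hB hN hIν hi0 hfree hi hii hmin
        have hlt : K.card < I.card :=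
          card_lt_card (Finset.ssubset_iff_subset_ne.2 ⟨hKI, hKne⟩)
        exact ih K hK (by omega) i hiK
      case pos =>
        subst hii
        have hvI : v ⟨I, hIν⟩ = ∑ k ∈ I, (fun j => if k = j then (1 : ℤ) else 0) := by
          funext j
          simp only [hv, Finset.sum_apply]
          rw [Finset.sum_ite_eq' I j (fun _ => (1 : ℤ))]
        have hmem : (∑ k ∈ I, (fun j => if k = j then (1 : ℤ) else 0))
            ∈ Submodule.span ℤ (Set.range v) :=
          hvI ▸ Submodule.subset_span ⟨⟨I, hIν⟩, rfl⟩
        have hrest : ∀ k ∈ I.erase i, (fun j => if k = j then (1 : ℤ) else 0)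
            ∈ Submodule.span ℤ (Set.range v) := by
          intro k hk
          obtain ⟨K, hK, hkK, hmin⟩ := MaxNestedAux.exists_phi hB hNn k
          have hKI : K ⊆ I := hmin I hIν (mem_of_mem_erase hk)
          have hKne : K ≠ I := by
            intro he
            subst he
            exact MaxNestedAux.free_unique hB hN hIν hi0 hfree (mem_of_mem_erase hk)
              (ne_of_mem_erase hk) hmin
          have hlt : K.card < I.card :=
            card_lt_card (Finset.ssubset_iff_subset_ne.2 ⟨hKI, hKne⟩)
          exact ih K hK (by omega) k hkK
        have heq : (fun j => if i = j then (1 : ℤ) else 0) =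
            (∑ k ∈ I, (fun j => if k = j then (1 : ℤ) else 0)) -
              ∑ k ∈ I.erase i, (fun j => if k = j then (1 : ℤ) else 0) := by
          rw [eq_sub_iff_add_eq]
          exact Finset.add_sum_erase I (fun k => (fun j => if k = j then (1 : ℤ) else 0)) hi
        rw [heq]
        exact Submodule.sub_mem _ hmem (Submodule.sum_mem _ hrest)
  have hsp : ⊤ ≤ Submodule.span ℤ (Set.range v) := by
    intro x _
    rw [pi_eq_sum_univ x]
    refine Submodule.sum_mem _ fun i _ => Submodule.smul_mem _ _ ?_
    obtain ⟨K, hK, hiK, _⟩ := MaxNestedAux.exists_phi hB hNn i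
    exact hspan K.card K hK le_rfl i hiK
  exact ⟨Module.Basis.mk hind hsp, fun I => Module.Basis.mk_apply hind hsp I⟩
end
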